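/- arXiv:2301.08238 — 10 statements merged into one kernel-verified Lean document; each statement's English description precedes it below -/
import Mathlib

section
/- For every n ∈ ℕ there is a constant C > 0 with the following property. Let m_k, m_ℓ > 0 and let p_k, p_ℓ ∈ ℝ³ with |p_k − p_ℓ| ≥ 5, and define Θ : ℝ³ \ {p_ℓ} → ℝ by Θ(x) = (m_ℓ/|x − p_ℓ|) · (|x − p_k|/(m_k + 2|x − p_k|)). Then for every x with 1 ≤ |x − p_k| ≤ 2 and every j ≤ n, the j-th iterated Fréchet derivative of Θ at x has operator norm at most C·m_ℓ/|p_k − p_ℓ|. -/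
/-!
Θ is the product of `m_ℓ / |y - p_ℓ|` and `b(|y - p_k|)` with `b(s) = s / (m_k + 2s)`, so by the
Leibniz rule it suffices to bound the derivatives of both factors at `x`.

For `r = |x - p| ≥ 1` every derivative of `y ↦ |y - p|^a` at `x` is `O(r^a)`: write
`|y - p|^a = r^a · q(y)^(a/2)` with `q(y) = |y - p|² / r²`. Then `q(x) = 1`, the derivatives of `q`
at `x` are at most `2`, and the Faà di Bruno bound for `s^(a/2) ∘ q` is independent of `r`.
With `a = -1` the first factor is `O(m_ℓ / |x - p_ℓ|)`, and `|x - p_ℓ| ≥ |p_k - p_ℓ| / 2`.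
The derivatives of `b` on `s ≥ 1` are at most `i!` whatever `m_k > 0`, and with `a = 1` those of
`|y - p_k|` are bounded on the annulus, so Faà di Bruno bounds the second factor uniformly.
-/

open scoped Nat Topology
open Set

section

variable {𝕜 : Type*} [NontriviallyNormedField 𝕜]
  {E F G : Type*} [NormedAddCommGroup E] [NormedSpace 𝕜 E] [NormedAddCommGroup F]
  [NormedSpace 𝕜 F] [NormedAddCommGroup G] [NormedSpace 𝕜 G] {x : E} {n : ℕ}

theorem ContDiffAt.exists_isOpen_contDiffOn {f : E → F} (hf : ContDiffAt 𝕜 n f x) :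
    ∃ u, IsOpen u ∧ x ∈ u ∧ ContDiffOn 𝕜 n f u := by
  simpa using hf.contDiffOn' le_rfl (by simp)

theorem norm_iteratedFDeriv_const_mul (c : 𝕜) {f : E → 𝕜} (hf : ContDiffAt 𝕜 n f x) :
    ‖iteratedFDeriv 𝕜 n (fun y => c * f y) x‖ = ‖c‖ * ‖iteratedFDeriv 𝕜 n f x‖ := by
  simp_rw [← smul_eq_mul, iteratedFDeriv_const_smul_apply' hf, norm_smul, smul_eq_mul]

theorem norm_iteratedFDeriv_mul_le_of_contDiffAt {A : Type*} [NormedRing A] [NormedAlgebra 𝕜 A]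
    {f g : E → A} (hf : ContDiffAt 𝕜 n f x) (hg : ContDiffAt 𝕜 n g x) {Cf Cg : ℝ}
    (hCf : ∀ i ≤ n, ‖iteratedFDeriv 𝕜 i f x‖ ≤ Cf)
    (hCg : ∀ i ≤ n, ‖iteratedFDeriv 𝕜 i g x‖ ≤ Cg) :
    ‖iteratedFDeriv 𝕜 n (fun y => f y * g y) x‖ ≤ 2 ^ n * Cf * Cg := by
  obtain ⟨u, huo, hxu, hfu⟩ := hf.exists_isOpen_contDiffOn
  obtain ⟨v, hvo, hxv, hgv⟩ := hg.exists_isOpen_contDiffOn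
  have hs := huo.inter hvo
  have hx : x ∈ u ∩ v := ⟨hxu, hxv⟩
  have hloc (k : ℕ) (h : E → A) :
      iteratedFDerivWithin 𝕜 k h (u ∩ v) x = iteratedFDeriv 𝕜 k h x :=
    iteratedFDerivWithin_of_isOpen k hs hx
  have hLeibniz := norm_iteratedFDerivWithin_mul_le (hfu.mono inter_subset_left)
    (hgv.mono inter_subset_right) hs.uniqueDiffOn hx le_rfl
  simp only [hloc] at hLeibniz
  have hCf0 : 0 ≤ Cf := (norm_nonneg _).trans (hCf 0 n.zero_le)
  have hCg0 : 0 ≤ Cg := (norm_nonneg _).trans (hCg 0 n.zero_le)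
  calc _ ≤ _ := hLeibniz
    _ ≤ ∑ i ∈ Finset.range (n + 1), (n.choose i : ℝ) * Cf * Cg := by
        gcongr with i hi
        · exact hCf i (Nat.lt_succ_iff.mp (Finset.mem_range.mp hi))
        · exact hCg _ (Nat.sub_le n i)
    _ = 2 ^ n * Cf * Cg := by
        rw [← Finset.sum_mul, ← Finset.sum_mul, ← Nat.cast_sum, Nat.sum_range_choose]
        push_cast
        ring

theorem norm_iteratedFDeriv_comp_le_of_contDiffAt {g : F → G} {f : E → F}
    (hg : ContDiffAt 𝕜 n g (f x)) (hf : ContDiffAt 𝕜 n f x) {C D : ℝ}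
    (hC : ∀ i ≤ n, ‖iteratedFDeriv 𝕜 i g (f x)‖ ≤ C)
    (hD : ∀ i, 1 ≤ i → i ≤ n → ‖iteratedFDeriv 𝕜 i f x‖ ≤ D ^ i) :
    ‖iteratedFDeriv 𝕜 n (g ∘ f) x‖ ≤ n ! * C * D ^ n := by
  obtain ⟨t, hto, hxt, hgt⟩ := hg.exists_isOpen_contDiffOn
  obtain ⟨u, huo, hxu, hfu⟩ := hf.exists_isOpen_contDiffOn
  have hs := hfu.continuousOn.isOpen_inter_preimage huo hto
  have hx : x ∈ u ∩ f ⁻¹' t := ⟨hxu, hxt⟩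
  rw [← iteratedFDerivWithin_of_isOpen n hs hx]
  refine norm_iteratedFDerivWithin_comp_le hgt (hfu.mono inter_subset_left) le_rfl
    hto.uniqueDiffOn hs.uniqueDiffOn (fun y hy => hy.2) hx (fun i hi => ?_) (fun i hi hin => ?_)
  · rw [iteratedFDerivWithin_of_isOpen i hto hxt]
    exact hC i hi
  · rw [iteratedFDerivWithin_of_isOpen i hs hx]
    exact hD i hi hin

end

theorem norm_iteratedFDeriv_rpow_one (a : ℝ) (i : ℕ) :
    ‖iteratedFDeriv ℝ i (fun s : ℝ => s ^ a) 1‖ = |(descPochhammer ℝ i).eval a| := by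
  rw [norm_iteratedFDeriv_eq_norm_iteratedDeriv, iteratedDeriv_eq_iterate,
    Real.iter_deriv_rpow_const, Real.one_rpow, mul_one, Real.norm_eq_abs]

theorem norm_iteratedFDeriv_div_add_two_mul_le {m s : ℝ} (hm : 0 < m) (hs : 1 ≤ s) (i : ℕ) :
    ‖iteratedFDeriv ℝ i (fun t : ℝ => t / (m + 2 * t)) s‖ ≤ i ! := by
  rw [norm_iteratedFDeriv_eq_norm_iteratedDeriv]
  rcases i.eq_zero_or_pos with rfl | hi
  · rw [iteratedDeriv_zero, Real.norm_eq_abs, abs_of_nonneg (by positivity)]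
    simpa using div_le_one_of_le₀ (by linarith) (by positivity)
  have hloc : (fun t : ℝ => t / (m + 2 * t)) =ᶠ[𝓝 s]
      fun t => 1 / 2 - m / 2 * (2 * t + m)⁻¹ := by
    filter_upwards [lt_mem_nhds (show (0 : ℝ) < s by linarith)] with t ht
    field_simp
    ring
  rw [(hloc.iteratedDeriv i).eq_of_nhds, iteratedDeriv_const_sub hi, iteratedDeriv_neg,
    iteratedDeriv_const_mul_field, iteratedDeriv_eq_iterate, iter_deriv_inv_linear,
    show (-1 - i : ℤ) = -((i + 1 : ℕ) : ℤ) by push_cast; ring]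
  have hv : 0 < 2 * s + m := by linarith
  simp only [zpow_neg, zpow_natCast, norm_neg, norm_mul, norm_pow, norm_inv, norm_one, one_pow,
    one_mul, RCLike.norm_natCast, Real.norm_eq_abs, abs_two, abs_of_pos (half_pos hm),
    abs_of_pos hv]
  -- the factor `m` is absorbed by `(2s + m)⁻¹`, which makes the bound uniform in `m`
  have hpow : m / 2 * 2 ^ i ≤ (2 * s + m) ^ (i + 1) := by
    rw [pow_succ']
    gcongr <;> linarith
  calc m / 2 * (i ! * 2 ^ i * ((2 * s + m) ^ (i + 1))⁻¹)
      = i ! * (m / 2 * 2 ^ i / (2 * s + m) ^ (i + 1)) := by ring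
    _ ≤ i ! * 1 := by gcongr; exact div_le_one_of_le₀ hpow (by positivity)
    _ = i ! := mul_one _

section

variable {E : Type*} [NormedAddCommGroup E] [InnerProductSpace ℝ E]

-- `2 - i` is truncated: the bound is `2` from order 2 on (the derivatives vanish from order 3).
theorem norm_iteratedFDeriv_norm_sq_le (x : E) (i : ℕ) :
    ‖iteratedFDeriv ℝ i (fun y : E => ‖y‖ ^ 2) x‖ ≤ 2 * ‖x‖ ^ (2 - i) := by
  set L : E →L[ℝ] E →L[ℝ] ℝ := 2 • innerSL ℝ
  have hLx (v : E) : ‖L v‖ ≤ 2 * ‖v‖ := by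
    simpa [L, innerSL_apply_norm] using norm_nsmul_le (n := 2) (a := innerSL ℝ v)
  have hQ : fderiv ℝ (fun y : E => ‖y‖ ^ 2) = L := fderiv_norm_sq
  have hL : fderiv ℝ L = fun _ => L := funext fun _ => L.fderiv
  rcases i with _ | _ | i
  · simp only [norm_iteratedFDeriv_zero, norm_pow, norm_norm, Nat.sub_zero]
    nlinarith [norm_nonneg x]
  · rw [← norm_iteratedFDeriv_fderiv, hQ, norm_iteratedFDeriv_zero]
    simpa using hLx x
  rw [← norm_iteratedFDeriv_fderiv, hQ, ← norm_iteratedFDeriv_fderiv, hL]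
  rcases i with _ | i
  · simpa using L.opNorm_le_bound zero_le_two hLx
  · simp [iteratedFDeriv_succ_const]

theorem norm_iteratedFDeriv_norm_sq_div_le {x : E} (hx : 1 ≤ ‖x‖) {i : ℕ} (hi : 1 ≤ i) :
    ‖iteratedFDeriv ℝ i (fun y : E => (‖x‖ ^ 2)⁻¹ * ‖y‖ ^ 2) x‖ ≤ 2 ^ i := by
  have hx0 : 0 < ‖x‖ := one_pos.trans_le hx
  rw [norm_iteratedFDeriv_const_mul _ (contDiff_norm_sq ℝ).contDiffAt, norm_inv, norm_pow,
    norm_norm, inv_mul_le_iff₀ (by positivity)]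
  calc ‖iteratedFDeriv ℝ i (fun y : E => ‖y‖ ^ 2) x‖ ≤ 2 * ‖x‖ ^ (2 - i) :=
        norm_iteratedFDeriv_norm_sq_le x i
    _ ≤ 2 * ‖x‖ ^ 2 := by gcongr; exact Nat.sub_le 2 i
    _ ≤ ‖x‖ ^ 2 * 2 ^ i := by
        rw [mul_comm]
        gcongr
        exact le_self_pow₀ one_le_two (by omega)

theorem exists_norm_iteratedFDeriv_norm_rpow_le (a : ℝ) (n : ℕ) :
    ∃ C, ∀ x : E, 1 ≤ ‖x‖ → ∀ j ≤ n,
      ‖iteratedFDeriv ℝ j (fun y : E => ‖y‖ ^ a) x‖ ≤ C * ‖x‖ ^ a := by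
  set S := ∑ i ∈ Finset.range (n + 1), |(descPochhammer ℝ i).eval (a / 2)|
  refine ⟨n ! * S * 2 ^ n, fun x hx j hj => ?_⟩
  set r := ‖x‖
  have hr : 0 < r := one_pos.trans_le hx
  set q : E → ℝ := fun y => (r ^ 2)⁻¹ * ‖y‖ ^ 2
  have hq : q x = 1 := inv_mul_cancel₀ (by positivity)
  have hrescale :
      (fun y : E => ‖y‖ ^ a) = fun y => r ^ a * ((fun s : ℝ => s ^ (a / 2)) ∘ q) y := by
    ext y
    have hqy : q y = (‖y‖ / r) ^ 2 := by simp only [q]; field_simp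
    rw [Function.comp_apply, hqy, ← Real.rpow_natCast, ← Real.rpow_mul (by positivity),
      show ((2 : ℕ) : ℝ) * (a / 2) = a by push_cast; ring, Real.div_rpow (norm_nonneg y) hr.le]
    field_simp
  have hg : ContDiffAt ℝ j (fun s : ℝ => s ^ (a / 2)) (q x) :=
    Real.contDiffAt_rpow_const_of_ne (by simp [hq])
  have hqd : ContDiffAt ℝ j q x := (contDiff_const.mul (contDiff_norm_sq ℝ)).contDiffAt
  have hC : ∀ i ≤ j, ‖iteratedFDeriv ℝ i (fun s : ℝ => s ^ (a / 2)) (q x)‖ ≤ S := by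
    intro i hi
    rw [hq, norm_iteratedFDeriv_rpow_one]
    exact Finset.single_le_sum (f := fun i => |(descPochhammer ℝ i).eval (a / 2)|)
      (fun _ _ => abs_nonneg _) (Finset.mem_range.mpr (by omega))
  have hcomp := norm_iteratedFDeriv_comp_le_of_contDiffAt hg hqd hC
    fun i hi _ => norm_iteratedFDeriv_norm_sq_div_le hx hi
  have hS : 0 ≤ S := Finset.sum_nonneg fun _ _ => abs_nonneg _
  rw [hrescale, norm_iteratedFDeriv_const_mul _ (hg.comp x hqd), Real.norm_eq_abs,
    abs_of_pos (by positivity), mul_comm]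
  gcongr
  refine hcomp.trans ?_
  gcongr
  exact one_le_two

theorem exists_norm_iteratedFDeriv_norm_sub_rpow_le (a : ℝ) (n : ℕ) :
    ∃ C, ∀ p x : E, 1 ≤ ‖x - p‖ → ∀ j ≤ n,
      ‖iteratedFDeriv ℝ j (fun y : E => ‖y - p‖ ^ a) x‖ ≤ C * ‖x - p‖ ^ a := by
  obtain ⟨C, hC⟩ := exists_norm_iteratedFDeriv_norm_rpow_le (E := E) a n
  refine ⟨C, fun p x hx j hj => ?_⟩
  rw [iteratedFDeriv_comp_sub (f := fun z : E => ‖z‖ ^ a)]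
  exact hC (x - p) hx j hj

theorem contDiffAt_norm_sub {n : ℕ} {p x : E} (hx : x ≠ p) :
    ContDiffAt ℝ n (fun y : E => ‖y - p‖) x :=
  (contDiffAt_id.sub contDiffAt_const).norm ℝ (sub_ne_zero.mpr hx)

theorem exists_norm_iteratedFDeriv_div_norm_sub_le (n : ℕ) :
    ∃ C, ∀ (c : ℝ) (p x : E), 1 ≤ ‖x - p‖ → ∀ j ≤ n,
      ‖iteratedFDeriv ℝ j (fun y => c / ‖y - p‖) x‖ ≤ C * |c| / ‖x - p‖ := by
  obtain ⟨C, hC⟩ := exists_norm_iteratedFDeriv_norm_sub_rpow_le (E := E) (-1) n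
  refine ⟨C, fun c p x hx j hj => ?_⟩
  have hxp : x ≠ p := norm_sub_pos_iff.mp (by linarith)
  have hCj := hC p x hx j hj
  simp_rw [div_eq_mul_inv c, ← Real.rpow_neg_one]
  rw [norm_iteratedFDeriv_const_mul _ ((contDiffAt_norm_sub hxp).rpow_const_of_ne
    (norm_sub_pos_iff.mpr hxp).ne'), Real.norm_eq_abs]
  calc |c| * ‖iteratedFDeriv ℝ j (fun y => ‖y - p‖ ^ (-1 : ℝ)) x‖
      ≤ |c| * (C * ‖x - p‖ ^ (-1 : ℝ)) := by gcongr
    _ = C * |c| / ‖x - p‖ := by rw [Real.rpow_neg_one]; ring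

theorem exists_norm_iteratedFDeriv_norm_sub_div_le (n : ℕ) :
    ∃ K, ∀ m : ℝ, 0 < m → ∀ p x : E, 1 ≤ ‖x - p‖ → ‖x - p‖ ≤ 2 → ∀ j ≤ n,
      ‖iteratedFDeriv ℝ j (fun y => ‖y - p‖ / (m + 2 * ‖y - p‖)) x‖ ≤ K := by
  obtain ⟨C, hC⟩ := exists_norm_iteratedFDeriv_norm_sub_rpow_le (E := E) 1 n
  set D := max (2 * C) 1
  refine ⟨n ! * n ! * D ^ n, fun m hm p x hx1 hx2 j hj => ?_⟩
  have hxp : x ≠ p := norm_sub_pos_iff.mp (by linarith)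
  have hb : ContDiffAt ℝ j (fun t : ℝ => t / (m + 2 * t)) ‖x - p‖ :=
    contDiffAt_id.div (contDiffAt_const.add (contDiffAt_const.mul contDiffAt_id))
      (by positivity)
  have hbC : ∀ i ≤ j, ‖iteratedFDeriv ℝ i (fun t : ℝ => t / (m + 2 * t)) ‖x - p‖‖ ≤ n ! :=
    fun i hi => (norm_iteratedFDeriv_div_add_two_mul_le hm hx1 i).trans
      (Nat.cast_le.mpr (Nat.factorial_le (hi.trans hj)))
  have hD : ∀ i, 1 ≤ i → i ≤ j → ‖iteratedFDeriv ℝ i (fun y => ‖y - p‖) x‖ ≤ D ^ i := by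
    intro i hi hij
    have hCi := hC p x hx1 i (hij.trans hj)
    simp only [Real.rpow_one] at hCi
    calc _ ≤ C * ‖x - p‖ := hCi
      _ ≤ D := by
          rcases le_or_gt 0 C with hC0 | hC0
          · nlinarith [le_max_left (2 * C) 1]
          · nlinarith [le_max_right (2 * C) 1]
      _ ≤ D ^ i := le_self_pow₀ (le_max_right _ _) (by omega)
  have hcomp := norm_iteratedFDeriv_comp_le_of_contDiffAt (f := fun y => ‖y - p‖) hb
    (contDiffAt_norm_sub hxp) hbC hD
  rw [Function.comp_def] at hcomp
  refine hcomp.trans ?_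
  gcongr
  exact le_max_right _ _

end

/-- Derivative bounds for
`Θ(x) = (m_ℓ/‖x − p_ℓ‖) · (‖x − p_k‖/(m_k + 2‖x − p_k‖))` on the annulus
`1 ≤ ‖x − p_k‖ ≤ 2`: for every `j ≤ n`,
`‖iteratedFDeriv ℝ j Θ x‖ ≤ C · m_ℓ / ‖p_k − p_ℓ‖`. -/
theorem theta_interaction_derivative_bounds (n : ℕ) :
    ∃ C > (0 : ℝ), ∀ (mk ml : ℝ), 0 < mk → 0 < ml →
      ∀ pk pl : EuclideanSpace ℝ (Fin 3), (5 : ℝ) ≤ ‖pk - pl‖ →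
      ∀ x : EuclideanSpace ℝ (Fin 3), 1 ≤ ‖x - pk‖ → ‖x - pk‖ ≤ 2 →
      ∀ j ≤ n,
        ‖iteratedFDeriv ℝ j
            (fun y => (ml / ‖y - pl‖) * (‖y - pk‖ / (mk + 2 * ‖y - pk‖))) x‖
          ≤ C * ml / ‖pk - pl‖ := by
  obtain ⟨Cl, hCl⟩ := exists_norm_iteratedFDeriv_div_norm_sub_le (E := EuclideanSpace ℝ (Fin 3)) n
  obtain ⟨K, hK⟩ := exists_norm_iteratedFDeriv_norm_sub_div_le (E := EuclideanSpace ℝ (Fin 3)) n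
  refine ⟨2 ^ n * (2 * |Cl|) * |K| + 1, by positivity,
    fun mk ml hmk hml pk pl hR x hx1 hx2 j hj => ?_⟩
  have hxl : ‖pk - pl‖ ≤ 2 * ‖x - pl‖ := by
    linarith [norm_sub_rev x pk, norm_sub_le_norm_sub_add_norm_sub pk x pl]
  have hxpl : x ≠ pl := norm_sub_pos_iff.mp (by linarith)
  have hxpk : x ≠ pk := norm_sub_pos_iff.mp (by linarith)
  have hA : ∀ i ≤ j,
      ‖iteratedFDeriv ℝ i (fun y => ml / ‖y - pl‖) x‖ ≤ 2 * |Cl| * ml / ‖pk - pl‖ := by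
    intro i hi
    refine (hCl ml pl x (by linarith) i (hi.trans hj)).trans ?_
    rw [abs_of_pos hml, div_le_div_iff₀ (by linarith) (by linarith)]
    calc Cl * ml * ‖pk - pl‖ ≤ |Cl| * ml * (2 * ‖x - pl‖) := by gcongr; exact le_abs_self Cl
      _ = 2 * |Cl| * ml * ‖x - pl‖ := by ring
  have hB : ∀ i ≤ j,
      ‖iteratedFDeriv ℝ i (fun y => ‖y - pk‖ / (mk + 2 * ‖y - pk‖)) x‖ ≤ |K| :=
    fun i hi => (hK mk hmk pk x hx1 hx2 i (hi.trans hj)).trans (le_abs_self K)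
  have hAd : ContDiffAt ℝ j (fun y => ml / ‖y - pl‖) x :=
    contDiffAt_const.div (contDiffAt_norm_sub hxpl) (norm_sub_pos_iff.mpr hxpl).ne'
  have hBd : ContDiffAt ℝ j (fun y => ‖y - pk‖ / (mk + 2 * ‖y - pk‖)) x :=
    (contDiffAt_norm_sub hxpk).div
      (contDiffAt_const.add (contDiffAt_const.mul (contDiffAt_norm_sub hxpk))) (by positivity)
  calc _ ≤ 2 ^ j * (2 * |Cl| * ml / ‖pk - pl‖) * |K| :=
        norm_iteratedFDeriv_mul_le_of_contDiffAt hAd hBd hA hB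
    _ ≤ 2 ^ n * (2 * |Cl| * ml / ‖pk - pl‖) * |K| := by gcongr; exact one_le_two
    _ = 2 ^ n * (2 * |Cl|) * |K| * ml / ‖pk - pl‖ := by ring
    _ ≤ _ := by gcongr; linarith
end

section
/- Let (m_i)_{i∈ℕ} and (δ̂_k)_{k∈ℕ} be sequences of positive real numbers. Then there exists a sequence (p_k)_{k∈ℕ} of points of ℝ³ such that: (i) |p_k − p_ℓ| ≥ 5 for all k ≠ ℓ; (ii) |p_k − p_ℓ| ≥ |p_k|/2 for all ℓ < k; and (iii) for every λ ≥ 1 and every k, Σ_{ℓ≠k} m_ℓ/(λ|p_k − p_ℓ|) ≤ δ̂_k. -/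
open scoped BigOperators

private noncomputable def rseq (m δ : ℕ → ℝ) : ℕ → ℝ
  | 0 => 0
  | (j+1) => 2 * rseq m δ j + 5 + ∑ i ∈ Finset.range (j+1),
      (2^(i+1) * m i / δ (j+1) + 2^(j+2) * m (j+1) / δ i)

/-- Given positive masses `m` and positive targets `δ̂`, there is a
sequence of centers `p` in ℝ³ with mutual distances at least `5`,
`‖p k − p ℓ‖ ≥ ‖p k‖/2` for `ℓ < k`, and for every scaling `λ ≥ 1` and every `k`,
`Σ_{ℓ≠k} m ℓ / (λ‖p k − p ℓ‖) ≤ δ̂ k`. -/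
theorem exists_centers_for_masses
    (m : ℕ → ℝ) (δ : ℕ → ℝ) (hm : ∀ i, 0 < m i) (hδ : ∀ k, 0 < δ k) :
    ∃ p : ℕ → EuclideanSpace ℝ (Fin 3),
      (∀ k ℓ, k ≠ ℓ → (5 : ℝ) ≤ ‖p k - p ℓ‖) ∧
      (∀ k ℓ, ℓ < k → ‖p k‖ / 2 ≤ ‖p k - p ℓ‖) ∧
      (∀ lam : ℝ, 1 ≤ lam → ∀ k : ℕ,
        Summable (fun ℓ : {ℓ : ℕ // ℓ ≠ k} => m ℓ.1 / (lam * ‖p k - p ℓ.1‖)) ∧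
        ∑' ℓ : {ℓ : ℕ // ℓ ≠ k}, m ℓ.1 / (lam * ‖p k - p ℓ.1‖) ≤ δ k) := by
  set r := rseq m δ with hr
  -- nonnegativity of the sum term
  have hSnonneg : ∀ j : ℕ, 0 ≤ ∑ i ∈ Finset.range (j+1),
      (2^(i+1) * m i / δ (j+1) + 2^(j+2) * m (j+1) / δ i) := by
    intro j
    refine Finset.sum_nonneg fun i _ => add_nonneg ?_ ?_
    · exact div_nonneg (mul_nonneg (by positivity) (hm i).le) (hδ _).le
    · exact div_nonneg (mul_nonneg (by positivity) (hm _).le) (hδ _).le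
  have hr0 : ∀ j, 0 ≤ r j := by
    intro j
    induction j with
    | zero => simp [hr, rseq]
    | succ n ih =>
      have := hSnonneg n
      simp only [hr, rseq]
      nlinarith
  have hstep : ∀ j, r j + 5 ≤ r (j+1) := by
    intro j
    have := hSnonneg j
    have := hr0 j
    simp only [hr, rseq]
    nlinarith
  have hmono : ∀ i j : ℕ, i ≤ j → r i ≤ r j :=
    fun i j h => monotone_nat_of_le_succ (fun n => by linarith [hstep n]) h
  -- key gap estimates
  have key : ∀ i j, i < j →
      5 ≤ r j - r i ∧ r j / 2 ≤ r j - r i ∧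
      2^(i+1) * m i / δ j ≤ r j - r i ∧ 2^(j+1) * m j / δ i ≤ r j - r i := by
    intro i j hij
    obtain ⟨t, rfl⟩ : ∃ t, j = t + 1 := ⟨j - 1, by omega⟩
    have hit : i ≤ t := Nat.lt_succ_iff.mp hij
    have hrit : r i ≤ r t := hmono i t hit
    have hS := hSnonneg t
    have hterm : 2^(i+1) * m i / δ (t+1) + 2^(t+2) * m (t+1) / δ i ≤
        ∑ i ∈ Finset.range (t+1), (2^(i+1) * m i / δ (t+1) + 2^(t+2) * m (t+1) / δ i) := by
      refine Finset.single_le_sum (f := fun i => 2^(i+1) * m i / δ (t+1) + 2^(t+2) * m (t+1) / δ i)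
        (fun i _ => add_nonneg
          (div_nonneg (mul_nonneg (by positivity) (hm i).le) (hδ _).le)
          (div_nonneg (mul_nonneg (by positivity) (hm _).le) (hδ _).le))
        (Finset.mem_range.mpr hij)
    have h1 : 0 ≤ 2^(i+1) * m i / δ (t+1) :=
      div_nonneg (mul_nonneg (by positivity) (hm i).le) (hδ _).le
    have h2 : 0 ≤ 2^(t+2) * m (t+1) / δ i :=
      div_nonneg (mul_nonneg (by positivity) (hm _).le) (hδ _).le
    have hrt : r (t+1) = 2 * r t + 5 + ∑ i ∈ Finset.range (t+1),
        (2^(i+1) * m i / δ (t+1) + 2^(t+2) * m (t+1) / δ i) := by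
      simp [hr, rseq]
    have h0t := hr0 t
    have h0i := hr0 i
    refine ⟨by linarith, by linarith, by linarith, ?_⟩
    have : (2:ℝ)^(t+1+1) = 2^(t+2) := by norm_num
    rw [this]; linarith
  -- define points
  set p : ℕ → EuclideanSpace ℝ (Fin 3) := fun k => EuclideanSpace.single 0 (r k) with hp
  have hdist : ∀ k ℓ, ‖p k - p ℓ‖ = |r k - r ℓ| := by
    intro k ℓ
    have : p k - p ℓ = EuclideanSpace.single (0 : Fin 3) (r k - r ℓ) := by
      ext j
      simp only [hp, PiLp.sub_apply, EuclideanSpace.single_apply]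
      split <;> simp
    rw [this, EuclideanSpace.norm_single, Real.norm_eq_abs]
  refine ⟨p, ?_, ?_, ?_⟩
  · intro k ℓ hkl
    rw [hdist]
    rcases lt_or_gt_of_ne hkl with h | h
    · have := (key k ℓ h).1
      rw [abs_sub_comm, abs_of_nonneg (by linarith)]; linarith
    · have := (key ℓ k h).1
      rw [abs_of_nonneg (by linarith)]; linarith
  · intro k ℓ h
    have hk := (key ℓ k h).2.1
    rw [hdist, abs_of_nonneg (by linarith [(key ℓ k h).1])]
    have : ‖p k‖ = |r k| := by
      simp [hp, EuclideanSpace.norm_single]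
    rw [this, abs_of_nonneg (hr0 k)]
    linarith
  · intro lam hlam k
    have hlam0 : (0:ℝ) < lam := lt_of_lt_of_le one_pos hlam
    have hgap : ∀ ℓ : ℕ, ℓ ≠ k → 2^(ℓ+1) * m ℓ / δ k ≤ ‖p k - p ℓ‖ := by
      intro ℓ hℓ
      rw [hdist]
      rcases lt_or_gt_of_ne hℓ with h | h
      · have := (key ℓ k h).2.2.1
        rw [abs_of_nonneg (by linarith [(key ℓ k h).1])]; linarith
      · have := (key k ℓ h).2.2.2
        rw [abs_sub_comm, abs_of_nonneg (by linarith [(key k ℓ h).1])]; linarith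
    have hdpos : ∀ ℓ : ℕ, ℓ ≠ k → (0:ℝ) < ‖p k - p ℓ‖ := by
      intro ℓ hℓ
      have hg := hgap ℓ hℓ
      have : (0:ℝ) < 2^(ℓ+1) * m ℓ / δ k :=
        div_pos (mul_pos (by positivity) (hm ℓ)) (hδ k)
      linarith
    have hbound : ∀ ℓ : {ℓ : ℕ // ℓ ≠ k},
        m ℓ.1 / (lam * ‖p k - p ℓ.1‖) ≤ δ k * (1/2)^(ℓ.1+1) := by
      rintro ⟨ℓ, hℓ⟩
      have hd := hdpos ℓ hℓ
      have hg := hgap ℓ hℓ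
      have hmp := hm ℓ
      have hδp := hδ k
      have h1 : m ℓ / (lam * ‖p k - p ℓ‖) ≤ m ℓ / ‖p k - p ℓ‖ := by
        apply div_le_div_of_nonneg_left hmp.le hd
        nlinarith
      have h2 : m ℓ / ‖p k - p ℓ‖ ≤ m ℓ / (2^(ℓ+1) * m ℓ / δ k) := by
        apply div_le_div_of_nonneg_left hmp.le _ hg
        positivity
      have h3 : m ℓ / (2^(ℓ+1) * m ℓ / δ k) = δ k * (1/2)^(ℓ+1) := by
        rw [div_pow, one_pow]
        field_simp
      calc m ℓ / (lam * ‖p k - p ℓ‖) ≤ m ℓ / ‖p k - p ℓ‖ := h1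
        _ ≤ m ℓ / (2^(ℓ+1) * m ℓ / δ k) := h2
        _ = δ k * (1/2)^(ℓ+1) := h3
    have hnonneg : ∀ ℓ : {ℓ : ℕ // ℓ ≠ k}, 0 ≤ m ℓ.1 / (lam * ‖p k - p ℓ.1‖) := by
      rintro ⟨ℓ, hℓ⟩
      have := hdpos ℓ hℓ
      have := hm ℓ
      positivity
    have hgsum : Summable (fun ℓ : ℕ => δ k * (1/2)^(ℓ+1)) := by
      have : Summable (fun ℓ : ℕ => ((1:ℝ)/2)^(ℓ+1)) :=
        (summable_geometric_two).comp_injective (add_left_injective 1)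
      exact this.mul_left (δ k)
    have hgsub : Summable (fun ℓ : {ℓ : ℕ // ℓ ≠ k} => δ k * (1/2)^(ℓ.1+1)) :=
      hgsum.subtype {ℓ : ℕ | ℓ ≠ k}
    have hfsum : Summable (fun ℓ : {ℓ : ℕ // ℓ ≠ k} => m ℓ.1 / (lam * ‖p k - p ℓ.1‖)) :=
      Summable.of_nonneg_of_le hnonneg hbound hgsub
    refine ⟨hfsum, ?_⟩
    have hgfull : ∑' ℓ : ℕ, δ k * (1/2)^(ℓ+1) = δ k := by
      rw [tsum_mul_left]
      have : ∑' ℓ : ℕ, ((1:ℝ)/2)^(ℓ+1) = 1 := by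
        simp only [pow_succ']
        rw [tsum_mul_left, tsum_geometric_two]
        norm_num
      rw [this, mul_one]
    calc ∑' ℓ : {ℓ : ℕ // ℓ ≠ k}, m ℓ.1 / (lam * ‖p k - p ℓ.1‖)
        ≤ ∑' ℓ : {ℓ : ℕ // ℓ ≠ k}, δ k * (1/2)^(ℓ.1+1) :=
          Summable.tsum_le_tsum hbound hfsum hgsub
      _ ≤ ∑' ℓ : ℕ, δ k * (1/2)^(ℓ+1) :=
          Summable.tsum_subtype_le (fun ℓ : ℕ => δ k * (1/2)^(ℓ+1)) {ℓ : ℕ | ℓ ≠ k}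
            (fun ℓ => by have := (hδ k).le; positivity) hgsum
      _ = δ k := hgfull
end

section
/- For every n ∈ ℕ and every ε > 0 there exists δ̂ > 0 with the following property. Let (m_ℓ)_{ℓ∈ℕ} be reals with 0 < m_ℓ ≤ 1, let (p_ℓ)_{ℓ∈ℕ} ⊂ ℝ³ satisfy |p_i − p_j| ≥ 5 for i ≠ j, and suppose that for some index k one has Σ_{ℓ≠k} m_ℓ/|p_k − p_ℓ| ≤ δ̂. Define u(x) = 1 + Σ_ℓ m_ℓ/(2|x − p_ℓ|) and u_k(x) = 1 + m_k/(2|x − p_k|). Then for every x with 1 ≤ |x − p_k| ≤ 2 and every j ≤ n, the j-th iterated Fréchet derivative at x of the function u⁴ − u_k⁴ has norm strictly less than ε. -/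
/-!
On a neighbourhood of the annulus `1 ≤ ‖x - p k‖ ≤ 2`, every potential `m ℓ / (2 ‖y - p ℓ‖)`
coincides with the rescaled copy `m ℓ / (2 r) * F (r⁻¹ • (y - p ℓ))` of one fixed smooth compactly
supported `F` equal to `‖z‖⁻¹` for `1 / 4 ≤ ‖z‖ ≤ 2`, with `r = 2` for `ℓ = k` and
`r = ‖p k - p ℓ‖ ≥ 5` otherwise. Since `r ≥ 1`, rescaling does not increase derivatives, so the
copies have derivatives of order `≤ n` bounded by `m ℓ / (2 r)` times a bound `C` for those of `F`.
Hence the tail `∑_{ℓ ≠ k}` is `C^n` with derivatives bounded by `C / 2` times the interaction sum,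
and Leibniz' rule applied to `u⁴ - u_k⁴ = (u - u_k) (u + u_k) (u² + u_k²)` gives a bound linear in
the interaction sum.
-/

open Filter Topology

theorem tsum_eq_add_tsum_ne {α G : Type*} [AddCommMonoid G] [TopologicalSpace G]
    [ContinuousAdd G] [T2Space G] {f : α → G} (a : α)
    (hf : Summable fun i : {i // i ≠ a} => f i) : ∑' i, f i = f a + ∑' i : {i // i ≠ a}, f i := by
  rw [← Summable.tsum_add_tsum_compl (s := {a}) (Summable.of_finite) hf, tsum_singleton]
  rfl

section IteratedFDerivBounds

variable {𝕜 E F : Type*} [NontriviallyNormedField 𝕜] [NormedAddCommGroup E] [NormedSpace 𝕜 E]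
  [NormedAddCommGroup F] [NormedSpace 𝕜 F]

theorem exists_bound_iteratedFDeriv_of_hasCompactSupport {f : E → F} {n : ℕ}
    (hf : ContDiff 𝕜 n f) (hc : HasCompactSupport f) :
    ∃ C, ∀ i ≤ n, ∀ x, ‖iteratedFDeriv 𝕜 i f x‖ ≤ C := by
  have hbound (i : Fin (n + 1)) : ∃ C, ∀ x, ‖iteratedFDeriv 𝕜 i f x‖ ≤ C :=
    (hf.continuous_iteratedFDeriv (mod_cast i.is_le)).bounded_above_of_compact_support
      (hc.iteratedFDeriv i)
  choose C hC using hbound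
  obtain ⟨M, hM⟩ := (Set.finite_range C).bddAbove
  exact ⟨M, fun i hi x => (hC ⟨i, Nat.lt_succ_of_le hi⟩ x).trans (hM ⟨_, rfl⟩)⟩

theorem norm_iteratedFDeriv_const_le (c : F) (i : ℕ) (x : E) :
    ‖iteratedFDeriv 𝕜 i (fun _ : E => c) x‖ ≤ ‖c‖ := by
  cases i with
  | zero => simp
  | succ i => simp [iteratedFDeriv_const_of_ne i.succ_ne_zero]

theorem norm_iteratedFDeriv_add_le_of_le {f g : E → F} {n : ℕ} (hf : ContDiff 𝕜 n f)
    (hg : ContDiff 𝕜 n g) {x : E} {A B : ℝ} (hfA : ∀ i ≤ n, ‖iteratedFDeriv 𝕜 i f x‖ ≤ A)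
    (hgB : ∀ i ≤ n, ‖iteratedFDeriv 𝕜 i g x‖ ≤ B) :
    ∀ i ≤ n, ‖iteratedFDeriv 𝕜 i (fun y => f y + g y) x‖ ≤ A + B := by
  intro i hi
  rw [fun_iteratedFDeriv_add_apply (hf.of_le (mod_cast hi)).contDiffAt
    (hg.of_le (mod_cast hi)).contDiffAt]
  exact (norm_add_le _ _).trans (add_le_add (hfA i hi) (hgB i hi))

theorem norm_iteratedFDeriv_const_add_le_of_le {f : E → F} {n : ℕ} (hf : ContDiff 𝕜 n f)
    (c : F) {x : E} {A : ℝ} (hfA : ∀ i ≤ n, ‖iteratedFDeriv 𝕜 i f x‖ ≤ A) :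
    ∀ i ≤ n, ‖iteratedFDeriv 𝕜 i (fun y => c + f y) x‖ ≤ ‖c‖ + A :=
  norm_iteratedFDeriv_add_le_of_le contDiff_const hf
    (fun i _ => norm_iteratedFDeriv_const_le c i x) hfA

theorem norm_iteratedFDeriv_mul_le_of_le {A : Type*} [NormedRing A] [NormedAlgebra 𝕜 A]
    {f g : E → A} {n : ℕ} (hf : ContDiff 𝕜 n f) (hg : ContDiff 𝕜 n g) {x : E} {B B' : ℝ}
    (hfB : ∀ i ≤ n, ‖iteratedFDeriv 𝕜 i f x‖ ≤ B)
    (hgB' : ∀ i ≤ n, ‖iteratedFDeriv 𝕜 i g x‖ ≤ B') :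
    ∀ i ≤ n, ‖iteratedFDeriv 𝕜 i (fun y => f y * g y) x‖ ≤ 2 ^ n * B * B' := by
  intro i hi
  have hB : 0 ≤ B := (norm_nonneg _).trans (hfB 0 n.zero_le)
  have hB' : 0 ≤ B' := (norm_nonneg _).trans (hgB' 0 n.zero_le)
  calc ‖iteratedFDeriv 𝕜 i (fun y => f y * g y) x‖
      ≤ ∑ q ∈ Finset.range (i + 1),
          (i.choose q : ℝ) * ‖iteratedFDeriv 𝕜 q f x‖ * ‖iteratedFDeriv 𝕜 (i - q) g x‖ :=
        norm_iteratedFDeriv_mul_le hf hg x (mod_cast hi)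
    _ ≤ ∑ q ∈ Finset.range (i + 1), (i.choose q : ℝ) * B * B' := by
        refine Finset.sum_le_sum fun q hq => ?_
        have hqi : q ≤ i := Nat.lt_succ_iff.mp (Finset.mem_range.mp hq)
        gcongr
        exacts [hfB q (hqi.trans hi), hgB' (i - q) ((i.sub_le q).trans hi)]
    _ = 2 ^ i * B * B' := by
        rw [← Finset.sum_mul, ← Finset.sum_mul, ← Nat.cast_sum, Nat.sum_range_choose]
        push_cast
        ring
    _ ≤ 2 ^ n * B * B' := by gcongr; exact one_le_two

theorem norm_iteratedFDeriv_pow_four_sub_pow_four_le {A : Type*} [NormedCommRing A]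
    [NormedAlgebra 𝕜 A] {a b : E → A} {n : ℕ} (ha : ContDiff 𝕜 n a) (hb : ContDiff 𝕜 n b)
    {x : E} {K η : ℝ} (haK : ∀ i ≤ n, ‖iteratedFDeriv 𝕜 i a x‖ ≤ K)
    (hbK : ∀ i ≤ n, ‖iteratedFDeriv 𝕜 i b x‖ ≤ K)
    (hη : ∀ i ≤ n, ‖iteratedFDeriv 𝕜 i (fun y => a y - b y) x‖ ≤ η) :
    ∀ i ≤ n, ‖iteratedFDeriv 𝕜 i (fun y => a y ^ 4 - b y ^ 4) x‖ ≤ 4 * 8 ^ n * K ^ 3 * η := by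
  have hfactor : (fun y => a y ^ 4 - b y ^ 4)
      = fun y => (a y - b y) * ((a y + b y) * (a y * a y + b y * b y)) := by
    funext y; ring
  have hsum := norm_iteratedFDeriv_add_le_of_le ha hb haK hbK
  have hsq := norm_iteratedFDeriv_add_le_of_le (ha.mul ha) (hb.mul hb)
    (norm_iteratedFDeriv_mul_le_of_le ha ha haK haK)
    (norm_iteratedFDeriv_mul_le_of_le hb hb hbK hbK)
  have hprod := norm_iteratedFDeriv_mul_le_of_le (ha.add hb)
    ((ha.mul ha).add (hb.mul hb)) hsum hsq
  intro i hi
  rw [hfactor]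
  refine (norm_iteratedFDeriv_mul_le_of_le (ha.sub hb) ((ha.add hb).mul ((ha.mul ha).add
    (hb.mul hb))) hη hprod i hi).trans_eq ?_
  rw [show (8 : ℝ) ^ n = 2 ^ n * 2 ^ n * 2 ^ n by rw [← mul_pow, ← mul_pow]; norm_num]
  ring

theorem norm_iteratedFDeriv_comp_smul_sub_le {f : E → F} {i : ℕ} (hf : ContDiff 𝕜 i f)
    {c : 𝕜} (hc : ‖c‖ ≤ 1) (q x : E) {C : ℝ} (hC : ∀ z, ‖iteratedFDeriv 𝕜 i f z‖ ≤ C) :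
    ‖iteratedFDeriv 𝕜 i (fun y => f (c • (y - q))) x‖ ≤ C := by
  set L : E →L[𝕜] E := c • ContinuousLinearMap.id 𝕜 E
  have hL : ‖L‖ ≤ 1 := by
    refine ContinuousLinearMap.opNorm_le_bound _ zero_le_one fun z => ?_
    simp only [L, smul_apply, ContinuousLinearMap.id_apply, norm_smul]
    exact mul_le_mul_of_nonneg_right hc (norm_nonneg z)
  rw [iteratedFDeriv_comp_sub (f := fun z => f (c • z)),
    show (fun z => f (c • z)) = f ∘ L from rfl, L.iteratedFDeriv_comp_right hf _ le_rfl]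
  calc _ ≤ ‖iteratedFDeriv 𝕜 i f (L (x - q))‖ * ∏ _ : Fin i, ‖L‖ :=
        ContinuousMultilinearMap.norm_compContinuousLinearMap_le _ _
    _ ≤ C * 1 := by
        gcongr
        · exact (norm_nonneg _).trans (hC 0)
        · exact hC _
        · exact Finset.prod_le_one (fun _ _ => norm_nonneg _) fun _ _ => hL
    _ = C := mul_one C

theorem norm_iteratedFDeriv_tsum_le [IsRCLikeNormedField 𝕜] [CompleteSpace F] {ι : Type*}
    {f : ι → E → F} {w : ι → ℝ} {n : ℕ}
    (hf : ∀ l, ContDiff 𝕜 n (f l)) (hw : Summable w)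
    (hfw : ∀ i ≤ n, ∀ l x, ‖iteratedFDeriv 𝕜 i (f l) x‖ ≤ w l) :
    ∀ i ≤ n, ∀ x, ‖iteratedFDeriv 𝕜 i (fun y => ∑' l, f l y) x‖ ≤ ∑' l, w l := by
  intro i hi x
  rw [iteratedFDeriv_tsum_apply hf (fun _ _ => hw) (fun i l x hi => hfw i (mod_cast hi) l x)
    (mod_cast hi) x]
  exact tsum_of_norm_bounded hw.hasSum fun l => hfw i hi l x

end IteratedFDerivBounds

namespace BrillLindquist

open Real

noncomputable def invSqrtCutoff (t : ℝ) : ℝ :=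
  smoothTransition (32 * t - 1) * smoothTransition ((8 - t) / 4) * (√t)⁻¹

theorem invSqrtCutoff_eq {t : ℝ} (h1 : 1 / 16 ≤ t) (h2 : t ≤ 4) : invSqrtCutoff t = (√t)⁻¹ := by
  rw [invSqrtCutoff, smoothTransition.one_of_one_le (by linarith),
    smoothTransition.one_of_one_le (by linarith), one_mul, one_mul]

theorem invSqrtCutoff_eq_zero_of_le {t : ℝ} (h : t ≤ 1 / 32) : invSqrtCutoff t = 0 := by
  rw [invSqrtCutoff, smoothTransition.zero_of_nonpos (by linarith), zero_mul, zero_mul]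

theorem invSqrtCutoff_eq_zero_of_ge {t : ℝ} (h : 8 ≤ t) : invSqrtCutoff t = 0 := by
  rw [invSqrtCutoff, smoothTransition.zero_of_nonpos (x := (8 - t) / 4) (by linarith),
    mul_zero, zero_mul]

theorem contDiff_invSqrtCutoff {N : ℕ∞} : ContDiff ℝ N invSqrtCutoff := by
  refine contDiff_iff_contDiffAt.2 fun t => ?_
  rcases lt_or_ge t (1 / 32) with ht | ht
  · have hzero : invSqrtCutoff =ᶠ[𝓝 t] fun _ => 0 := by
      filter_upwards [Iio_mem_nhds ht] with s hs using invSqrtCutoff_eq_zero_of_le hs.le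
    exact contDiffAt_const.congr_of_eventuallyEq hzero
  · have ht0 : 0 < t := by linarith
    have hleft : ContDiffAt ℝ N (fun s => smoothTransition (32 * s - 1)) t := by fun_prop
    have hright : ContDiffAt ℝ N (fun s => smoothTransition ((8 - s) / 4)) t := by fun_prop
    exact (hleft.mul hright).mul ((contDiffAt_sqrt ht0.ne').inv (sqrt_ne_zero'.2 ht0))

variable {E : Type*} [NormedAddCommGroup E]

noncomputable def invNormCutoff (z : E) : ℝ := invSqrtCutoff (‖z‖ ^ 2)

theorem contDiff_invNormCutoff [InnerProductSpace ℝ E] {N : ℕ∞} :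
    ContDiff ℝ N (invNormCutoff : E → ℝ) :=
  contDiff_invSqrtCutoff.comp (contDiff_norm_sq ℝ)

theorem invNormCutoff_eq {z : E} (h1 : 1 / 4 ≤ ‖z‖) (h2 : ‖z‖ ≤ 2) : invNormCutoff z = ‖z‖⁻¹ := by
  rw [invNormCutoff, invSqrtCutoff_eq (by nlinarith) (by nlinarith), sqrt_sq (norm_nonneg z)]

theorem hasCompactSupport_invNormCutoff [ProperSpace E] :
    HasCompactSupport (invNormCutoff : E → ℝ) := by
  refine HasCompactSupport.intro (isCompact_closedBall (0 : E) 3) fun z hz => ?_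
  have h3 : 3 < ‖z‖ := by simpa using hz
  exact invSqrtCutoff_eq_zero_of_ge (by nlinarith)

noncomputable def cutoffPotential [NormedSpace ℝ E] (μ r : ℝ) (q y : E) : ℝ :=
  μ / (2 * r) * invNormCutoff (r⁻¹ • (y - q))

theorem contDiff_cutoffPotential [InnerProductSpace ℝ E] {N : ℕ∞} (μ r : ℝ) (q : E) :
    ContDiff ℝ N (cutoffPotential μ r q) :=
  contDiff_const.mul (contDiff_invNormCutoff.comp (by fun_prop))

theorem cutoffPotential_eq [NormedSpace ℝ E] {μ r : ℝ} {q y : E} (hr : 0 < r)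
    (h1 : r / 4 ≤ ‖y - q‖) (h2 : ‖y - q‖ ≤ 2 * r) :
    cutoffPotential μ r q y = μ / (2 * ‖y - q‖) := by
  have hnorm : ‖r⁻¹ • (y - q)‖ = ‖y - q‖ / r := by
    rw [norm_smul, norm_inv, norm_of_nonneg hr.le, inv_mul_eq_div]
  rw [cutoffPotential, invNormCutoff_eq (by rw [hnorm, le_div_iff₀ hr]; linarith)
    (by rw [hnorm, div_le_iff₀ hr]; linarith), hnorm]
  have : 0 < ‖y - q‖ := by linarith
  field_simp

theorem norm_iteratedFDeriv_cutoffPotential_le [InnerProductSpace ℝ E] {μ r : ℝ} (hμ : 0 ≤ μ)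
    (hr : 1 ≤ r) (q y : E) {i : ℕ} {C : ℝ}
    (hC : ∀ z : E, ‖iteratedFDeriv ℝ i invNormCutoff z‖ ≤ C) :
    ‖iteratedFDeriv ℝ i (cutoffPotential μ r q) y‖ ≤ μ / (2 * r) * C := by
  have hr0 : 0 < r := by linarith
  have hcoef : 0 ≤ μ / (2 * r) := by positivity
  have hsmul := iteratedFDeriv_const_smul_apply' (a := μ / (2 * r))
    (f := fun y => invNormCutoff (r⁻¹ • (y - q))) (x := y) (i := i)
    ((contDiff_invNormCutoff.comp (by fun_prop)).contDiffAt)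
  simp only [smul_eq_mul] at hsmul
  unfold cutoffPotential
  rw [hsmul, norm_smul, norm_of_nonneg hcoef]
  refine mul_le_mul_of_nonneg_left
    (norm_iteratedFDeriv_comp_smul_sub_le contDiff_invNormCutoff ?_ q y hC) hcoef
  rw [norm_inv, norm_of_nonneg hr0.le]
  exact inv_le_one_of_one_le₀ hr

theorem hasSum_interactionWeight {m : ℕ → ℝ} {p : ℕ → E} {k : ℕ}
    (hsumm : Summable fun ℓ : {ℓ : ℕ // ℓ ≠ k} => m ℓ / ‖p k - p ℓ‖) (C : ℝ) :
    HasSum (fun ℓ : {ℓ : ℕ // ℓ ≠ k} => m ℓ / (2 * ‖p k - p ℓ‖) * C)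
      ((∑' ℓ : {ℓ : ℕ // ℓ ≠ k}, m ℓ / ‖p k - p ℓ‖) / 2 * C) := by
  have hweight : (fun ℓ : {ℓ : ℕ // ℓ ≠ k} => m ℓ / (2 * ‖p k - p ℓ‖) * C)
      = fun ℓ : {ℓ : ℕ // ℓ ≠ k} => m ℓ / ‖p k - p ℓ‖ / 2 * C := by
    funext ℓ; ring
  rw [hweight]
  exact (hsumm.hasSum.div_const 2).mul_right C

variable [InnerProductSpace ℝ E]

noncomputable def interactionTail (m : ℕ → ℝ) (p : ℕ → E) (k : ℕ) (y : E) : ℝ :=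
  ∑' ℓ : {ℓ : ℕ // ℓ ≠ k}, cutoffPotential (m ℓ) ‖p k - p ℓ‖ (p ℓ) y

variable {m : ℕ → ℝ} {p : ℕ → E} {k : ℕ}

theorem contDiff_interactionTail {n : ℕ} {C : ℝ}
    (hC : ∀ i ≤ n, ∀ z : E, ‖iteratedFDeriv ℝ i invNormCutoff z‖ ≤ C) (hm0 : ∀ ℓ, 0 ≤ m ℓ)
    (hsep : ∀ ℓ ≠ k, 1 ≤ ‖p k - p ℓ‖)
    (hsumm : Summable fun ℓ : {ℓ : ℕ // ℓ ≠ k} => m ℓ / ‖p k - p ℓ‖) :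
    ContDiff ℝ n (interactionTail m p k) :=
  contDiff_tsum (fun _ => contDiff_cutoffPotential _ _ _)
    (fun _ _ => (hasSum_interactionWeight hsumm C).summable) fun i ℓ y hi =>
      norm_iteratedFDeriv_cutoffPotential_le (hm0 ℓ) (hsep ℓ ℓ.2) _ y (hC i (mod_cast hi))

theorem norm_iteratedFDeriv_interactionTail_le {n : ℕ} {C : ℝ}
    (hC : ∀ i ≤ n, ∀ z : E, ‖iteratedFDeriv ℝ i invNormCutoff z‖ ≤ C) (hm0 : ∀ ℓ, 0 ≤ m ℓ)
    (hsep : ∀ ℓ ≠ k, 1 ≤ ‖p k - p ℓ‖)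
    (hsumm : Summable fun ℓ : {ℓ : ℕ // ℓ ≠ k} => m ℓ / ‖p k - p ℓ‖) :
    ∀ i ≤ n, ∀ y, ‖iteratedFDeriv ℝ i (interactionTail m p k) y‖
      ≤ (∑' ℓ : {ℓ : ℕ // ℓ ≠ k}, m ℓ / ‖p k - p ℓ‖) / 2 * C := by
  rw [← (hasSum_interactionWeight hsumm C).tsum_eq]
  exact norm_iteratedFDeriv_tsum_le (fun _ => contDiff_cutoffPotential _ _ _)
    (hasSum_interactionWeight hsumm C).summable fun i hi ℓ y =>
      norm_iteratedFDeriv_cutoffPotential_le (hm0 ℓ) (hsep ℓ ℓ.2) _ y (hC i hi)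

theorem tsum_potential_eq_cutoffPotential_add_interactionTail (hm0 : ∀ ℓ, 0 ≤ m ℓ)
    (hsep : ∀ ℓ ≠ k, 5 ≤ ‖p k - p ℓ‖)
    (hsumm : Summable fun ℓ : {ℓ : ℕ // ℓ ≠ k} => m ℓ / ‖p k - p ℓ‖) {y : E}
    (hy1 : 1 / 2 ≤ ‖y - p k‖) (hy2 : ‖y - p k‖ ≤ 5 / 2) :
    ∑' ℓ, m ℓ / (2 * ‖y - p ℓ‖) = cutoffPotential (m k) 2 (p k) y + interactionTail m p k y := by
  -- `‖y - p ℓ‖` is within `5 / 2` of `‖p k - p ℓ‖ ≥ 5`.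
  have hwindow (ℓ : {ℓ : ℕ // ℓ ≠ k}) :
      ‖p k - p ℓ‖ / 2 ≤ ‖y - p ℓ‖ ∧ ‖y - p ℓ‖ ≤ 2 * ‖p k - p ℓ‖ := by
    have hlow := norm_sub_le_norm_sub_add_norm_sub (p k) y (p ℓ)
    have hupp := norm_sub_le_norm_sub_add_norm_sub y (p k) (p ℓ)
    rw [norm_sub_rev (p k) y] at hlow
    have := hsep ℓ ℓ.2
    constructor <;> linarith
  have hterm (ℓ : {ℓ : ℕ // ℓ ≠ k}) :
      m ℓ / (2 * ‖y - p ℓ‖) = cutoffPotential (m ℓ) ‖p k - p ℓ‖ (p ℓ) y := by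
    have := hsep ℓ ℓ.2
    exact (cutoffPotential_eq (by linarith) (by linarith [(hwindow ℓ).1]) (hwindow ℓ).2).symm
  have hsumm' : Summable fun ℓ : {ℓ : ℕ // ℓ ≠ k} => m ℓ / (2 * ‖y - p ℓ‖) := by
    refine Summable.of_nonneg_of_le (fun ℓ => div_nonneg (hm0 ℓ) (by positivity))
      (fun ℓ => div_le_div_of_nonneg_left (hm0 ℓ) ?_ (by linarith [(hwindow ℓ).1])) hsumm
    linarith [hsep ℓ ℓ.2]
  rw [tsum_eq_add_tsum_ne (f := fun ℓ => m ℓ / (2 * ‖y - p ℓ‖)) k hsumm',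
    cutoffPotential_eq (by norm_num) (by linarith) (by linarith), interactionTail, tsum_congr hterm]

theorem conformalFactor_sub_eventuallyEq (hm0 : ∀ ℓ, 0 ≤ m ℓ) (hsep : ∀ ℓ ≠ k, 5 ≤ ‖p k - p ℓ‖)
    (hsumm : Summable fun ℓ : {ℓ : ℕ // ℓ ≠ k} => m ℓ / ‖p k - p ℓ‖) {x : E}
    (hx1 : 1 ≤ ‖x - p k‖) (hx2 : ‖x - p k‖ ≤ 2) :
    (fun y => (1 + ∑' ℓ, m ℓ / (2 * ‖y - p ℓ‖)) ^ 4 - (1 + m k / (2 * ‖y - p k‖)) ^ 4)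
      =ᶠ[𝓝 x] fun y => (1 + cutoffPotential (m k) 2 (p k) y + interactionTail m p k y) ^ 4
        - (1 + cutoffPotential (m k) 2 (p k) y) ^ 4 := by
  filter_upwards [Metric.ball_mem_nhds x (by norm_num : (0 : ℝ) < 1 / 2)] with y hy
  have hclose : |‖y - p k‖ - ‖x - p k‖| < 1 / 2 := by
    refine (abs_norm_sub_norm_le _ _).trans_lt ?_
    rwa [sub_sub_sub_cancel_right, ← dist_eq_norm]
  rw [abs_lt] at hclose
  rw [tsum_potential_eq_cutoffPotential_add_interactionTail hm0 hsep hsumm (by linarith)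
    (by linarith), cutoffPotential_eq (by norm_num) (by linarith) (by linarith), add_assoc]

theorem norm_iteratedFDeriv_cutoffConformalFactor_sub_le {n : ℕ} {C : ℝ}
    (hC : ∀ i ≤ n, ∀ z : E, ‖iteratedFDeriv ℝ i invNormCutoff z‖ ≤ C) (hm0 : ∀ ℓ, 0 ≤ m ℓ)
    (hmk : m k ≤ 1) (hsep : ∀ ℓ ≠ k, 1 ≤ ‖p k - p ℓ‖)
    (hsumm : Summable fun ℓ : {ℓ : ℕ // ℓ ≠ k} => m ℓ / ‖p k - p ℓ‖)
    (hT : ∑' ℓ : {ℓ : ℕ // ℓ ≠ k}, m ℓ / ‖p k - p ℓ‖ ≤ 1) (x : E) :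
    ∀ j ≤ n, ‖iteratedFDeriv ℝ j (fun y =>
        (1 + cutoffPotential (m k) 2 (p k) y + interactionTail m p k y) ^ 4
          - (1 + cutoffPotential (m k) 2 (p k) y) ^ 4) x‖
      ≤ 4 * 8 ^ n * (1 + C) ^ 3 * ((∑' ℓ : {ℓ : ℕ // ℓ ≠ k}, m ℓ / ‖p k - p ℓ‖) / 2 * C) := by
  set T := ∑' ℓ : {ℓ : ℕ // ℓ ≠ k}, m ℓ / ‖p k - p ℓ‖
  have hC0 : 0 ≤ C := (norm_nonneg _).trans (hC 0 n.zero_le 0)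
  have hg := contDiff_cutoffPotential (N := n) (m k) 2 (p k)
  have hv := contDiff_interactionTail hC hm0 hsep hsumm
  have hgC (i : ℕ) (hi : i ≤ n) :
      ‖iteratedFDeriv ℝ i (cutoffPotential (m k) 2 (p k)) x‖ ≤ C / 4 := by
    refine (norm_iteratedFDeriv_cutoffPotential_le (hm0 k) one_le_two _ x (hC i hi)).trans ?_
    nlinarith
  have hvC (i : ℕ) (hi : i ≤ n) := norm_iteratedFDeriv_interactionTail_le hC hm0 hsep hsumm i hi x
  have hb := norm_iteratedFDeriv_const_add_le_of_le hg 1 hgC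
  have ha := norm_iteratedFDeriv_add_le_of_le (contDiff_const.add hg) hv hb hvC
  have hdiff : (fun y => 1 + cutoffPotential (m k) 2 (p k) y + interactionTail m p k y
      - (1 + cutoffPotential (m k) 2 (p k) y)) = interactionTail m p k := by
    funext y; ring
  refine norm_iteratedFDeriv_pow_four_sub_pow_four_le ((contDiff_const.add hg).add hv)
    (contDiff_const.add hg) (fun i hi => (ha i hi).trans ?_) (fun i hi => (hb i hi).trans ?_)
    (by rw [hdiff]; exact hvC)
  · rw [norm_one]; nlinarith
  · rw [norm_one]; linarith

end BrillLindquist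

open BrillLindquist

/-- For every `n` and `ε > 0` there is `δ̂ > 0` such that whenever
the interaction sum `Σ_{ℓ≠k} m ℓ/‖p k − p ℓ‖` is at most `δ̂` (masses in `(0,1]`,
centers `5`-separated), the Brill–Lindquist conformal factor to the fourth power
is `C^n`-close to the Schwarzschild one of mass `m k` centered at `p k` on the
annulus `1 ≤ ‖x − p k‖ ≤ 2`. -/
theorem brill_lindquist_close_to_schwarzschild (n : ℕ) (ε : ℝ) (hε : 0 < ε) :
    ∃ δ > (0 : ℝ), ∀ (m : ℕ → ℝ) (p : ℕ → EuclideanSpace ℝ (Fin 3)) (k : ℕ),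
      (∀ ℓ, 0 < m ℓ) → (∀ ℓ, m ℓ ≤ 1) →
      (∀ i j, i ≠ j → (5 : ℝ) ≤ ‖p i - p j‖) →
      Summable (fun ℓ : {ℓ : ℕ // ℓ ≠ k} => m ℓ.1 / ‖p k - p ℓ.1‖) →
      (∑' ℓ : {ℓ : ℕ // ℓ ≠ k}, m ℓ.1 / ‖p k - p ℓ.1‖) ≤ δ →
      ∀ x : EuclideanSpace ℝ (Fin 3), 1 ≤ ‖x - p k‖ → ‖x - p k‖ ≤ 2 →
      ∀ j ≤ n,
        ‖iteratedFDeriv ℝ j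
            (fun y => (1 + ∑' ℓ, m ℓ / (2 * ‖y - p ℓ‖)) ^ 4
              - (1 + m k / (2 * ‖y - p k‖)) ^ 4) x‖ < ε := by
  obtain ⟨C, hC⟩ := exists_bound_iteratedFDeriv_of_hasCompactSupport
    (contDiff_invNormCutoff (N := n))
    (hasCompactSupport_invNormCutoff (E := EuclideanSpace ℝ (Fin 3)))
  have hC0 : 0 ≤ C := (norm_nonneg _).trans (hC 0 n.zero_le 0)
  set M := 4 * 8 ^ n * (1 + C) ^ 3 * (C / 2)
  refine ⟨min 1 (ε / (M + 1)), by positivity, ?_⟩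
  intro m p k hm0 hm1 hsep hsumm hδ x hx1 hx2 j hj
  set T := ∑' ℓ : {ℓ : ℕ // ℓ ≠ k}, m ℓ / ‖p k - p ℓ‖
  have hsep5 : ∀ ℓ ≠ k, 5 ≤ ‖p k - p ℓ‖ := fun ℓ hℓ => hsep k ℓ (Ne.symm hℓ)
  rw [((conformalFactor_sub_eventuallyEq (fun ℓ => (hm0 ℓ).le) hsep5 hsumm hx1 hx2).iteratedFDeriv
    ℝ j).eq_of_nhds]
  calc _ ≤ 4 * 8 ^ n * (1 + C) ^ 3 * (T / 2 * C) :=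
        norm_iteratedFDeriv_cutoffConformalFactor_sub_le hC (fun ℓ => (hm0 ℓ).le) (hm1 k)
          (fun ℓ hℓ => by linarith [hsep5 ℓ hℓ]) hsumm (hδ.trans (min_le_left _ _)) x j hj
    _ = M * T := by ring
    _ ≤ M * (ε / (M + 1)) := by gcongr; exact hδ.trans (min_le_right _ _)
    _ < ε := by
        rw [mul_div_assoc', div_lt_iff₀ (by positivity)]
        nlinarith
end

section
/- Let (m_j)_{j∈ℕ} be nonnegative real numbers with Σ_j m_j² < ∞. Then the double series Σ_j Σ_k m_j·m_k·2^{−|j−k|} converges and satisfies Σ_j Σ_k m_j·m_k·2^{−|j−k|} ≤ 3·Σ_j m_j². -/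
open scoped BigOperators

noncomputable def F : ℤ → ℝ := fun n => (2:ℝ) ^ (-|n|)

lemma F_nonneg (n : ℤ) : 0 ≤ F n := zpow_nonneg (by norm_num) _

lemma F_nat (n : ℕ) : F n = (1/2:ℝ)^n := by
  simp [F, Nat.abs_cast, zpow_neg, zpow_natCast, ← inv_pow, one_div]

lemma F_neg (n : ℕ) : F (-(n+1)) = (1/2:ℝ)^(n+1) := by
  show (2:ℝ) ^ (-|(-((n:ℤ)+1))|) = _
  rw [abs_neg, abs_of_nonneg (by positivity), one_div, inv_pow,
    ← zpow_natCast (2:ℝ) (n+1), ← zpow_neg]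
  push_cast
  ring_nf

lemma sgeo : Summable fun n : ℕ => (1/2:ℝ)^n :=
  summable_geometric_of_lt_one (by norm_num) (by norm_num)

lemma summableF : Summable F := by
  apply Summable.of_nat_of_neg_add_one
  · simpa [F_nat] using sgeo
  · have : (fun n : ℕ => F (-(n+1))) = fun n : ℕ => (1/2:ℝ)^n * (1/2) := by
      funext n; rw [F_neg, pow_succ]
    rw [this]; exact sgeo.mul_right _

lemma tsumF : ∑' n : ℤ, F n = 3 := by
  rw [tsum_of_nat_of_neg_add_one (by simpa [F_nat] using sgeo)
    (by have : (fun n : ℕ => F (-(n+1))) = fun n : ℕ => (1/2:ℝ)^n * (1/2) := by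
          funext n; rw [F_neg, pow_succ]
        rw [this]; exact sgeo.mul_right _)]
  have h1 : ∑' n : ℕ, F n = 2 := by
    simp only [F_nat]; rw [tsum_geometric_of_lt_one (by norm_num) (by norm_num)]; norm_num
  have h2 : ∑' n : ℕ, F (-(n+1)) = 1 := by
    simp only [F_neg, pow_succ]
    rw [tsum_mul_right, tsum_geometric_of_lt_one (by norm_num) (by norm_num)]; norm_num
  rw [h1, h2]; norm_num

lemma row_summable (j : ℕ) : Summable fun k : ℕ => F ((j:ℤ) - k) := by
  have hinj : Function.Injective (fun k : ℕ => (j:ℤ) - k) := by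
    intro a b h; simpa using h
  exact summableF.comp_injective hinj

lemma row_le (j : ℕ) : ∑' k : ℕ, F ((j:ℤ) - k) ≤ 3 := by
  rw [← tsumF]
  exact Summable.tsum_le_tsum_of_inj _ (fun a b h => by simpa using h)
    (fun c _ => F_nonneg c) (fun k => le_rfl) (row_summable j) summableF

lemma F_symm (a b : ℤ) : F (a - b) = F (b - a) := by
  simp [F, abs_sub_comm]

lemma F_eq (n : ℤ) : F n = (2:ℝ) ^ (-|n|) := rfl

attribute [irreducible] F

theorem aux_main
    (m : ℕ → ℝ) (hm : ∀ j, 0 ≤ m j)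
    (hsum : Summable (fun j => (m j) ^ 2)) :
    Summable (fun jk : ℕ × ℕ => m jk.1 * m jk.2 * F ((jk.1:ℤ) - jk.2)) ∧
      ∑' jk : ℕ × ℕ, m jk.1 * m jk.2 * F ((jk.1:ℤ) - jk.2)
        ≤ 3 * ∑' j, (m j) ^ 2 := by
  let f : ℕ × ℕ → ℝ := fun jk => m jk.1 * m jk.2 * F ((jk.1:ℤ) - jk.2)
  let g1 : ℕ × ℕ → ℝ := fun jk => m jk.1 ^ 2 * F ((jk.1:ℤ) - jk.2)
  -- summability of g1
  have hg1nn : ∀ jk, 0 ≤ g1 jk := fun jk =>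
    mul_nonneg (sq_nonneg _) (F_nonneg _)
  have hrow : ∀ j : ℕ, Summable fun k => g1 (j, k) := by
    intro j
    show Summable fun k : ℕ => m j ^ 2 * F ((j:ℤ) - k)
    exact (row_summable j).mul_left (m j ^ 2)
  have hrowsum : ∀ j : ℕ, ∑' k, g1 (j, k) ≤ 3 * m j ^ 2 := by
    intro j
    show ∑' k : ℕ, m j ^ 2 * F ((j:ℤ) - k) ≤ 3 * m j ^ 2
    rw [tsum_mul_left]
    calc m j ^ 2 * ∑' k : ℕ, F ((j:ℤ) - k) ≤ m j ^ 2 * 3 :=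
          mul_le_mul_of_nonneg_left (row_le j) (sq_nonneg _)
      _ = 3 * m j ^ 2 := by ring
  have hrowsum_nn : ∀ j : ℕ, 0 ≤ ∑' k, g1 (j, k) := fun j =>
    tsum_nonneg (fun k => hg1nn _)
  have hcol : Summable fun j => ∑' k, g1 (j, k) :=
    Summable.of_nonneg_of_le hrowsum_nn hrowsum (hsum.mul_left 3)
  have hSg1 : Summable g1 :=
    (summable_prod_of_nonneg hg1nn).2 ⟨hrow, hcol⟩
  have htg1 : ∑' jk, g1 jk ≤ 3 * ∑' j, (m j)^2 := by
    rw [Summable.tsum_prod' hSg1 hrow, ← tsum_mul_left]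
    exact Summable.tsum_le_tsum hrowsum hcol (hsum.mul_left 3)
  -- g2 via swap
  have hswap : ∀ jk : ℕ × ℕ, g1 jk.swap = m jk.2 ^ 2 * F ((jk.1:ℤ) - jk.2) := by
    intro jk
    show m jk.2 ^ 2 * F ((jk.2:ℤ) - jk.1) = _
    rw [F_symm]
  have hSg2 : Summable fun jk : ℕ × ℕ => g1 jk.swap := hSg1.prod_symm
  have htg2 : ∑' jk : ℕ × ℕ, g1 jk.swap = ∑' jk, g1 jk :=
    (Equiv.prodComm ℕ ℕ).tsum_eq g1
  -- pointwise bound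
  have hfle : ∀ jk : ℕ × ℕ, f jk ≤ (g1 jk + g1 jk.swap) / 2 := by
    intro jk
    rw [hswap]
    show m jk.1 * m jk.2 * F ((jk.1:ℤ) - jk.2) ≤
      (m jk.1 ^ 2 * F ((jk.1:ℤ) - jk.2) + m jk.2 ^ 2 * F ((jk.1:ℤ) - jk.2)) / 2
    have h2 : m jk.1 * m jk.2 ≤ (m jk.1 ^ 2 + m jk.2 ^ 2) / 2 := by
      nlinarith [sq_nonneg (m jk.1 - m jk.2)]
    have h3 := mul_le_mul_of_nonneg_right h2 (F_nonneg ((jk.1:ℤ) - jk.2))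
    calc m jk.1 * m jk.2 * F ((jk.1:ℤ) - jk.2)
        ≤ (m jk.1 ^ 2 + m jk.2 ^ 2) / 2 * F ((jk.1:ℤ) - jk.2) := h3
      _ = (m jk.1 ^ 2 * F ((jk.1:ℤ) - jk.2) + m jk.2 ^ 2 * F ((jk.1:ℤ) - jk.2)) / 2 := by ring
  have hfnn : ∀ jk, 0 ≤ f jk := fun jk =>
    mul_nonneg (mul_nonneg (hm _) (hm _)) (F_nonneg _)
  have hSg : Summable fun jk : ℕ × ℕ => (g1 jk + g1 jk.swap) / 2 :=
    (hSg1.add hSg2).div_const 2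
  have hSf : Summable f := Summable.of_nonneg_of_le hfnn hfle hSg
  refine ⟨hSf, ?_⟩
  calc ∑' jk, f jk ≤ ∑' jk : ℕ × ℕ, (g1 jk + g1 jk.swap) / 2 :=
        Summable.tsum_le_tsum hfle hSf hSg
    _ = (∑' jk, g1 jk + ∑' jk : ℕ × ℕ, g1 jk.swap) / 2 := by
        rw [tsum_div_const, Summable.tsum_add hSg1 hSg2]
    _ = ∑' jk, g1 jk := by rw [htg2]; ring
    _ ≤ 3 * ∑' j, (m j)^2 := htg1

/-- If `m : ℕ → ℝ` is nonnegative with `Σ m_j² < ∞`, then the double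
series `Σ_{j,k} m_j m_k 2^{−|j−k|}` converges and is at most `3 Σ_j m_j²`. -/
theorem double_series_almost_orthogonal
    (m : ℕ → ℝ) (hm : ∀ j, 0 ≤ m j)
    (hsum : Summable (fun j => (m j) ^ 2)) :
    Summable (fun jk : ℕ × ℕ =>
        m jk.1 * m jk.2 * (2 : ℝ) ^ (-|(jk.1 : ℤ) - (jk.2 : ℤ)|)) ∧
      ∑' jk : ℕ × ℕ, m jk.1 * m jk.2 * (2 : ℝ) ^ (-|(jk.1 : ℤ) - (jk.2 : ℤ)|)
        ≤ 3 * ∑' j, (m j) ^ 2 := by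
  simpa only [F_eq] using aux_main m hm hsum
end

section
/- There exists a constant C > 0 such that for all c, c' ∈ ℝ³, the Lebesgue integral over the region {x ∈ ℝ³ : |x − c| ≥ 2 and |x − c'| ≥ 2} of the function x ↦ |x − c|⁻²·|x − c'|⁻² is at most C/(1 + |c − c'|). -/
/-!
Where `‖x - c‖ ≤ ‖x - c'‖`, the triangle inequality gives `‖x - c'‖ ≥ (‖x - c‖ + ‖c - c'‖) / 3`,
so the integrand is at most `9 ‖x - c‖⁻² (‖x - c‖ + ‖c - c'‖)⁻²`, and symmetrically on the other
part. In polar coordinates around `c` the Jacobian `r²` cancels `‖x - c‖⁻²`, leaving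
`4π ∫_2^∞ (r + ‖c - c'‖)⁻² dr = 4π / (2 + ‖c - c'‖)`.
-/

open MeasureTheory Set Filter Topology Real
open scoped ENNReal

lemma hasDerivAt_neg_inv_add {a x : ℝ} (hx : x + a ≠ 0) :
    HasDerivAt (fun r : ℝ ↦ -(r + a)⁻¹) ((x + a) ^ 2)⁻¹ x := by
  have h := (((hasDerivAt_id x).add_const a).inv hx).neg
  simp only [id, neg_div, neg_neg, one_div] at h
  exact h

lemma lintegral_Ici_inv_sq_add {a b : ℝ} (hab : 0 < b + a) :
    ∫⁻ r in Ici b, ENNReal.ofReal ((r + a) ^ 2)⁻¹ = ENNReal.ofReal (b + a)⁻¹ := by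
  have hderiv : ∀ x ∈ Ici b, HasDerivAt (fun r : ℝ ↦ -(r + a)⁻¹) ((x + a) ^ 2)⁻¹ x :=
    fun x hx ↦ hasDerivAt_neg_inv_add (by linarith [mem_Ici.1 hx])
  have hnonneg : ∀ x ∈ Ioi b, 0 ≤ ((x + a) ^ 2)⁻¹ := fun x _ ↦ by positivity
  have hlim : Tendsto (fun r : ℝ ↦ -(r + a)⁻¹) atTop (𝓝 0) := by
    simpa using (tendsto_atTop_add_const_right atTop a tendsto_id).inv_tendsto_atTop.neg
  rw [← setLIntegral_congr Ioi_ae_eq_Ici, ← ofReal_integral_eq_lintegral_ofReal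
    (integrableOn_Ioi_deriv_of_nonneg' hderiv hnonneg hlim)
    (ae_restrict_of_forall_mem measurableSet_Ioi hnonneg),
    integral_Ioi_of_hasDerivAt_of_nonneg' hderiv hnonneg hlim]
  simp

lemma inv_sq_mul_inv_sq_le {r s d : ℝ} (hr : 0 < r) (hs : 0 < s) (hd : 0 ≤ d)
    (hdrs : d ≤ r + s) :
    (r ^ 2)⁻¹ * (s ^ 2)⁻¹
      ≤ 9 * ((r ^ 2)⁻¹ * ((r + d) ^ 2)⁻¹) + 9 * ((s ^ 2)⁻¹ * ((s + d) ^ 2)⁻¹) := by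
  wlog hrs : r ≤ s generalizing r s
  · linarith [this hs hr (by linarith) (le_of_not_ge hrs), mul_comm (r ^ 2)⁻¹ (s ^ 2)⁻¹]
  have hs_inv : (s ^ 2)⁻¹ ≤ 9 * ((r + d) ^ 2)⁻¹ := by
    rw [← div_eq_mul_inv, le_div_iff₀ (by positivity), ← div_eq_inv_mul,
      div_le_iff₀ (by positivity)]
    nlinarith
  have hs_term : 0 ≤ 9 * ((s ^ 2)⁻¹ * ((s + d) ^ 2)⁻¹) := by positivity
  calc (r ^ 2)⁻¹ * (s ^ 2)⁻¹ ≤ (r ^ 2)⁻¹ * (9 * ((r + d) ^ 2)⁻¹) := by gcongr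
    _ ≤ _ := by linarith

section Exterior

variable {E : Type*} [NormedAddCommGroup E] [NormedSpace ℝ E] [MeasurableSpace E] [BorelSpace E]
  [FiniteDimensional ℝ E] (μ : Measure E) [μ.IsAddHaarMeasure]

lemma lintegral_fun_norm_addHaar [Nontrivial E] {g : ℝ → ℝ≥0∞} (hg : Measurable g) :
    ∫⁻ x, g ‖x‖ ∂μ = μ.toSphere univ *
      ∫⁻ r in Ioi (0 : ℝ), ENNReal.ofReal (r ^ (Module.finrank ℝ E - 1)) * g r := by
  calc ∫⁻ x, g ‖x‖ ∂μ = ∫⁻ x : ({0}ᶜ : Set E), g ‖(x : E)‖ ∂μ.comap (↑) := by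
        rw [lintegral_subtype_comap (measurableSet_singleton _).compl fun x : E ↦ g ‖x‖,
          restrict_compl_singleton]
    _ = ∫⁻ p : Metric.sphere (0 : E) 1 × Ioi (0 : ℝ), 1 * g p.2
          ∂μ.toSphere.prod (.volumeIoiPow (Module.finrank ℝ E - 1)) := by
        simpa using μ.measurePreserving_homeomorphUnitSphereProd.lintegral_comp_emb
          (Homeomorph.measurableEmbedding _) (fun p ↦ g p.2)
    _ = μ.toSphere univ * ∫⁻ r : Ioi (0 : ℝ), g r ∂.volumeIoiPow (Module.finrank ℝ E - 1) := by
        rw [lintegral_prod_mul (f := fun _ ↦ 1) (g := fun r : Ioi (0 : ℝ) ↦ g r) aemeasurable_const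
          (hg.comp measurable_subtype_coe).aemeasurable]
        simp
    _ = _ := by
        rw [Measure.volumeIoiPow, lintegral_withDensity_eq_lintegral_mul _ (by fun_prop)
          (show Measurable fun r : Ioi (0 : ℝ) ↦ g r from hg.comp measurable_subtype_coe)]
        exact congrArg _ (lintegral_subtype_comap measurableSet_Ioi
          fun r ↦ ENNReal.ofReal (r ^ (Module.finrank ℝ E - 1)) * g r)

lemma setLIntegral_exterior_fun_norm_sub [Nontrivial E] (c : E) {R : ℝ} (hR : 0 < R)
    {g : ℝ → ℝ≥0∞} (hg : Measurable g) :
    ∫⁻ x in {x | R ≤ ‖x - c‖}, g ‖x - c‖ ∂μ = μ.toSphere univ *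
      ∫⁻ r in Ici R, ENNReal.ofReal (r ^ (Module.finrank ℝ E - 1)) * g r := by
  have hIci : Ici R ∩ Ioi 0 = Ici R := inter_eq_left.2 fun r hr ↦ hR.trans_le hr
  calc ∫⁻ x in {x | R ≤ ‖x - c‖}, g ‖x - c‖ ∂μ = ∫⁻ x, (Ici R).indicator g ‖x - c‖ ∂μ := by
        rw [← lintegral_indicator (measurableSet_le measurable_const (by fun_prop))]
        rfl
    _ = ∫⁻ x, (Ici R).indicator g ‖x‖ ∂μ :=
        lintegral_sub_right_eq_self (fun x ↦ (Ici R).indicator g ‖x‖) c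
    _ = _ := by
        rw [lintegral_fun_norm_addHaar μ (hg.indicator measurableSet_Ici)]
        conv_rhs => rw [← hIci, ← setLIntegral_indicator measurableSet_Ici]
        exact congrArg _ (lintegral_congr fun r ↦ (indicator_mul_right _
          (fun r : ℝ ↦ ENNReal.ofReal (r ^ (Module.finrank ℝ E - 1))) g).symm)

lemma setLIntegral_exterior_inv_sq_mul_inv_sq_add (hE : Module.finrank ℝ E = 3) (c : E)
    {R a : ℝ} (hR : 0 < R) (hRa : 0 < R + a) :
    ∫⁻ x in {x | R ≤ ‖x - c‖}, ENNReal.ofReal ((‖x - c‖ ^ 2)⁻¹ * ((‖x - c‖ + a) ^ 2)⁻¹) ∂μ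
      = μ.toSphere univ * ENNReal.ofReal (R + a)⁻¹ := by
  have : Nontrivial E := Module.nontrivial_of_finrank_eq_succ hE
  rw [setLIntegral_exterior_fun_norm_sub μ c hR
    (g := fun t ↦ ENNReal.ofReal ((t ^ 2)⁻¹ * ((t + a) ^ 2)⁻¹)) (by fun_prop), hE,
    ← lintegral_Ici_inv_sq_add hRa]
  refine congrArg _ (setLIntegral_congr_fun measurableSet_Ici fun r hr ↦ ?_)
  have hr0 : r ≠ 0 := (hR.trans_le hr).ne'
  rw [← ENNReal.ofReal_mul (pow_nonneg (hR.trans_le hr).le _)]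
  congr 1
  field_simp

lemma setLIntegral_exterior_inv_sq_mul_inv_sq_le (hE : Module.finrank ℝ E = 3)
    (c c' : E) {R : ℝ} (hR : 0 < R) :
    ∫⁻ x in {x | R ≤ ‖x - c‖ ∧ R ≤ ‖x - c'‖},
        ENNReal.ofReal ((‖x - c‖ ^ 2)⁻¹ * (‖x - c'‖ ^ 2)⁻¹) ∂μ
      ≤ 18 * μ.toSphere univ * ENNReal.ofReal (R + ‖c - c'‖)⁻¹ := by
  set d := ‖c - c'‖
  set K : E → E → ℝ≥0∞ := fun p x ↦ ENNReal.ofReal ((‖x - p‖ ^ 2)⁻¹ * ((‖x - p‖ + d) ^ 2)⁻¹)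
  have hK : Measurable (K c) := by fun_prop
  have hKc (p : E) :
      ∫⁻ x in {x | R ≤ ‖x - p‖}, K p x ∂μ = μ.toSphere univ * ENNReal.ofReal (R + d)⁻¹ :=
    setLIntegral_exterior_inv_sq_mul_inv_sq_add μ hE p hR (by positivity)
  have hpoint : ∀ x ∈ {x | R ≤ ‖x - c‖ ∧ R ≤ ‖x - c'‖},
      ENNReal.ofReal ((‖x - c‖ ^ 2)⁻¹ * (‖x - c'‖ ^ 2)⁻¹) ≤ 9 * K c x + 9 * K c' x := by
    rintro x ⟨hc, hc'⟩
    have hd : d ≤ ‖x - c‖ + ‖x - c'‖ := by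
      simpa only [sub_sub_sub_cancel_left, norm_sub_rev c'] using norm_sub_le (x - c) (x - c')
    refine (ENNReal.ofReal_le_ofReal (inv_sq_mul_inv_sq_le (hR.trans_le hc) (hR.trans_le hc')
      (norm_nonneg _) hd)).trans_eq ?_
    rw [ENNReal.ofReal_add (by positivity) (by positivity),
      ENNReal.ofReal_mul (p := 9) (by norm_num), ENNReal.ofReal_mul (p := 9) (by norm_num),
      ENNReal.ofReal_ofNat]
  calc _ ≤ ∫⁻ x in {x | R ≤ ‖x - c‖ ∧ R ≤ ‖x - c'‖}, 9 * K c x + 9 * K c' x ∂μ :=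
        setLIntegral_mono (by fun_prop) hpoint
    _ = 9 * ∫⁻ x in {x | R ≤ ‖x - c‖ ∧ R ≤ ‖x - c'‖}, K c x ∂μ
          + 9 * ∫⁻ x in {x | R ≤ ‖x - c‖ ∧ R ≤ ‖x - c'‖}, K c' x ∂μ := by
        rw [lintegral_add_left (hK.const_mul 9), lintegral_const_mul _ hK,
          lintegral_const_mul _ (by fun_prop)]
    _ ≤ 9 * ∫⁻ x in {x | R ≤ ‖x - c‖}, K c x ∂μ
          + 9 * ∫⁻ x in {x | R ≤ ‖x - c'‖}, K c' x ∂μ := by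
        gcongr 9 * ?_ + 9 * ?_ <;> exact lintegral_mono_set fun x hx ↦ by simp_all
    _ = _ := by
        rw [hKc, hKc]
        ring

end Exterior

lemma toSphere_volume_univ_euclideanSpace_fin_three :
    (volume : Measure (EuclideanSpace ℝ (Fin 3))).toSphere univ = ENNReal.ofReal (4 * π) := by
  rw [Measure.toSphere_apply_univ, finrank_euclideanSpace_fin,
    EuclideanSpace.volume_ball_fin_three, ENNReal.ofReal_one, one_pow, one_mul,
    ← ENNReal.ofReal_natCast, ← ENNReal.ofReal_mul (by norm_num)]
  congr 1
  push_cast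
  ring

/-- There is `C > 0` such that for all `c, c' ∈ ℝ³`,
`∫_{‖x−c‖≥2, ‖x−c'‖≥2} ‖x−c‖⁻² ‖x−c'‖⁻² dx ≤ C/(1 + ‖c−c'‖)`. -/
theorem interaction_integral_bound :
    ∃ C > (0 : ℝ), ∀ c c' : EuclideanSpace ℝ (Fin 3),
      ∫⁻ x in {x : EuclideanSpace ℝ (Fin 3) | 2 ≤ ‖x - c‖ ∧ 2 ≤ ‖x - c'‖},
          ENNReal.ofReal ((‖x - c‖ ^ 2)⁻¹ * (‖x - c'‖ ^ 2)⁻¹) ∂volume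
        ≤ ENNReal.ofReal (C / (1 + ‖c - c'‖)) := by
  refine ⟨72 * π, by positivity, fun c c' ↦ ?_⟩
  calc _ ≤ 18 * (volume : Measure (EuclideanSpace ℝ (Fin 3))).toSphere univ
        * ENNReal.ofReal (2 + ‖c - c'‖)⁻¹ :=
        setLIntegral_exterior_inv_sq_mul_inv_sq_le volume finrank_euclideanSpace_fin c c' two_pos
    _ = ENNReal.ofReal (72 * π / (2 + ‖c - c'‖)) := by
        rw [toSphere_volume_univ_euclideanSpace_fin_three, ← ENNReal.ofReal_ofNat,
          ← ENNReal.ofReal_mul (by norm_num), ← ENNReal.ofReal_mul (by positivity)]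
        congr 1
        ring
    _ ≤ _ := ENNReal.ofReal_le_ofReal (by gcongr; linarith)
end

section
/- There is a universal constant C > 0 with the following property. Let (m_k)_{k∈ℕ} be positive reals with Σ_k m_k² < ∞, and let (c_k)_{k∈ℕ} ⊂ ℝ³ satisfy 1 + |c_j − c_k| ≥ 2^{|j−k|} for all j ≠ k. Set v(x) = 1 + Σ_k m_k/(2|x − c_k|) and f = v⁴, and let ℛ = {x ∈ ℝ³ : |x − c_k| ≥ 2 for all k}. Then the Lebesgue integral over ℛ of |∇(log f)|² is at most C·Σ_k m_k². -/
/-!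
Since `log (v ^ 4) = 4 log v` and `v ≥ 1`, one has `|∇ log f| ≤ 4 |∇v| ≤ 2 ∑ₖ mₖ |x - cₖ|⁻²` on `ℛ`;
the separation makes `|x - cₖ|` grow geometrically in `k`, which justifies differentiating the
series termwise. Squaring, the integral is at most a multiple of
`∑ⱼ ∑ₖ mⱼ mₖ ∫_ℛ |x - cⱼ|⁻² |x - cₖ|⁻²`. Each cross integral is `O((1 + |cⱼ - cₖ|)^(-1/2))`,
hence `O(2^(-|j - k|/2))`, and `mⱼ mₖ ≤ mⱼ² + mₖ²` turns the double sum into a convolution of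
`(mⱼ²)` with a summable geometric kernel.
-/

open MeasureTheory Filter Metric Set
open scoped ENNReal

local notation "ℝ³" => EuclideanSpace ℝ (Fin 3)

def GeometricallySeparated {E : Type*} [NormedAddCommGroup E] (c : ℕ → E) : Prop :=
  ∀ j k : ℕ, j ≠ k → (2 : ℝ) ^ ((j : ℤ) - k).natAbs ≤ 1 + ‖c j - c k‖

noncomputable def brillLindquist {E : Type*} [NormedAddCommGroup E] (m : ℕ → ℝ) (c : ℕ → E)
    (y : E) : ℝ :=
  1 + ∑' k, m k / (2 * ‖y - c k‖)

namespace GeometricallySeparated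

variable {E : Type*} [NormedAddCommGroup E] {c : ℕ → E}

lemma two_pow_natAbs_sub_le (hsep : GeometricallySeparated c) (j k : ℕ) :
    (2 : ℝ) ^ ((j : ℤ) - k).natAbs ≤ 1 + ‖c j - c k‖ := by
  rcases eq_or_ne j k with rfl | hjk
  · simp
  · exact hsep j k hjk

lemma eventually_two_pow_le (hsep : GeometricallySeparated c) (x : E) :
    ∀ᶠ k in atTop, (2 : ℝ) ^ k ≤ 2 * ‖x - c k‖ := by
  filter_upwards [(tendsto_pow_atTop_atTop_of_one_lt one_lt_two).eventually_ge_atTop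
    (2 * (1 + ‖x - c 0‖))] with k hk
  have hk0 : (2 : ℝ) ^ k ≤ 1 + ‖c k - c 0‖ := by
    simpa using hsep.two_pow_natAbs_sub_le k 0
  have htri : ‖c k - c 0‖ ≤ ‖x - c k‖ + ‖x - c 0‖ := by
    simpa only [dist_eq_norm] using dist_triangle_left (c k) (c 0) x
  linarith

lemma summable_div_norm_sub_pow (hsep : GeometricallySeparated c) {m : ℕ → ℝ}
    (hm : Summable fun k => m k ^ 2) (x : E) {n : ℕ} (hn : n ≠ 0) :
    Summable fun k => m k / ‖x - c k‖ ^ n := by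
  -- Eventually `|m k| ≤ 1` and `‖x - c k‖ ≥ 2 ^ (k - 1) ≥ 1`: the terms are `O(2⁻ᵏ)`.
  have hm1 : ∀ᶠ k in atTop, m k ^ 2 ≤ 1 :=
    hm.tendsto_atTop_zero.eventually_le_const zero_lt_one
  refine .of_norm_bounded_eventually_nat (summable_geometric_two' 4) ?_
  filter_upwards [hm1, hsep.eventually_two_pow_le x, eventually_ge_atTop 1]
    with k hmk hk hk1
  have h2k : (2 : ℝ) ≤ 2 ^ k := le_self_pow₀ one_le_two (by omega)
  have hxk : 1 ≤ ‖x - c k‖ := by linarith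
  have habs : |m k| ≤ 1 := (sq_le_one_iff_abs_le_one _).1 hmk
  rw [norm_div, norm_pow, norm_norm, Real.norm_eq_abs]
  calc |m k| / ‖x - c k‖ ^ n ≤ 1 / ‖x - c k‖ :=
        div_le_div₀ zero_le_one habs (by positivity) (le_self_pow₀ hxk hn)
    _ ≤ 4 / 2 / 2 ^ k := by
        rw [div_le_div_iff₀ (by positivity) (by positivity)]
        linarith

end GeometricallySeparated

section Gradient

variable {E : Type*} [NormedAddCommGroup E] [InnerProductSpace ℝ E]

lemma hasFDerivAt_div_two_mul_norm_sub (r : ℝ) {a y : E} (hy : y ≠ a) :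
    HasFDerivAt (fun z => r / (2 * ‖z - a‖))
      ((r / 2 * -(‖y - a‖ ^ 2)⁻¹) • fderiv ℝ (fun z => ‖z - a‖) y) y := by
  have hnorm : DifferentiableAt ℝ (fun z => ‖z - a‖) y :=
    (differentiableAt_id.sub_const a).norm ℝ (sub_ne_zero.2 hy)
  have hinv : HasDerivAt (fun t : ℝ => r / (2 * t)) (r / 2 * -(‖y - a‖ ^ 2)⁻¹) ‖y - a‖ := by
    have hfun : (fun t : ℝ => r / (2 * t)) = fun t => r / 2 * t⁻¹ := by
      funext t
      ring
    rw [hfun]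
    exact (hasDerivAt_inv (norm_ne_zero_iff.2 (sub_ne_zero.2 hy))).const_mul (r / 2)
  exact HasDerivAt.comp_hasFDerivAt (h₂ := fun t : ℝ => r / (2 * t)) y hinv hnorm.hasFDerivAt

lemma norm_fderiv_div_two_mul_norm_sub_le (r : ℝ) {a y : E} (hy : y ≠ a) :
    ‖fderiv ℝ (fun z => r / (2 * ‖z - a‖)) y‖ ≤ |r| / (2 * ‖y - a‖ ^ 2) := by
  have hnorm : ‖fderiv ℝ (fun z => ‖z - a‖) y‖ ≤ 1 := by
    rw [fderiv_comp_sub (f := fun z : E => ‖z‖)]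
    simpa using norm_fderiv_le_of_lipschitz ℝ (lipschitzWith_one_norm (E := E)) (x₀ := y - a)
  rw [(hasFDerivAt_div_two_mul_norm_sub r hy).fderiv, norm_smul]
  calc ‖r / 2 * -(‖y - a‖ ^ 2)⁻¹‖ * ‖fderiv ℝ (fun z => ‖z - a‖) y‖
      ≤ ‖r / 2 * -(‖y - a‖ ^ 2)⁻¹‖ * 1 := by gcongr
    _ = |r| / (2 * ‖y - a‖ ^ 2) := by
        rw [mul_one, Real.norm_eq_abs, abs_mul, abs_neg, abs_div, abs_inv, abs_two,
          abs_pow, abs_norm]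
        ring

lemma norm_gradient_log_pow_four_le [CompleteSpace E] {v : E → ℝ} {L : StrongDual ℝ E} {x : E}
    (hv : HasFDerivAt v L x) (hx : 1 ≤ v x) :
    ‖gradient (fun y => Real.log (v y ^ 4)) x‖ ≤ 4 * ‖L‖ := by
  have hlog : HasFDerivAt (fun y => Real.log (v y ^ 4)) ((4 * (v x)⁻¹) • L) x := by
    simp only [Real.log_pow, Nat.cast_ofNat]
    exact ((hv.log (by positivity)).const_mul 4).congr_fderiv (by rw [smul_smul])
  rw [(hasFDerivAt_iff_hasGradientAt.1 hlog).gradient, LinearIsometryEquiv.norm_map, norm_smul,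
    Real.norm_eq_abs, abs_of_pos (by positivity)]
  gcongr
  exact mul_le_of_le_one_right (by norm_num) (inv_le_one_of_one_le₀ hx)

lemma exists_hasFDerivAt_brillLindquist [CompleteSpace E] {m : ℕ → ℝ} {c : ℕ → E} {x : E}
    (hm : ∀ k, 0 ≤ m k) (hx : ∀ k, 2 ≤ ‖x - c k‖)
    (hs₁ : Summable fun k => m k / ‖x - c k‖) (hs₂ : Summable fun k => m k / ‖x - c k‖ ^ 2) :
    ∃ L : StrongDual ℝ E,
      HasFDerivAt (brillLindquist m c) L x ∧ ‖L‖ ≤ ∑' k, m k / (2 * ‖x - c k‖ ^ 2) := by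
  have hfar (k : ℕ) {y : E} (hy : y ∈ ball x 1) : ‖x - c k‖ / 2 ≤ ‖y - c k‖ := by
    have htri : ‖x - c k‖ ≤ ‖y - x‖ + ‖y - c k‖ := by
      simpa only [dist_eq_norm] using dist_triangle_left x (c k) y
    linarith [hx k, mem_ball_iff_norm.1 hy]
  have hne (k : ℕ) {y : E} (hy : y ∈ ball x 1) : y ≠ c k := by
    rw [← sub_ne_zero, ← norm_pos_iff]
    linarith [hfar k hy, hx k]
  have hbound (k : ℕ) (y : E) (hy : y ∈ ball x 1) :
      ‖fderiv ℝ (fun z => m k / (2 * ‖z - c k‖)) y‖ ≤ 2 * (m k / ‖x - c k‖ ^ 2) := by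
    have hxk : 0 < ‖x - c k‖ := by linarith [hx k]
    calc _ ≤ |m k| / (2 * ‖y - c k‖ ^ 2) := norm_fderiv_div_two_mul_norm_sub_le _ (hne k hy)
      _ ≤ m k / (2 * (‖x - c k‖ / 2) ^ 2) := by
          rw [abs_of_nonneg (hm k)]
          gcongr
          · exact hm k
          · exact hfar k hy
      _ = 2 * (m k / ‖x - c k‖ ^ 2) := by field_simp
  have hsum := hasFDerivAt_tsum_of_isPreconnected (hs₂.mul_left 2) isOpen_ball
    (convex_ball x 1).isPreconnected
    (fun k y hy => (hasFDerivAt_div_two_mul_norm_sub (m k) (hne k hy)).differentiableAt.hasFDerivAt)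
    hbound (mem_ball_self one_pos)
    ((hs₁.div_const 2).congr fun k => by rw [div_div, mul_comm]) (mem_ball_self one_pos)
  refine ⟨_, hsum.const_add 1, tsum_of_norm_bounded
    ((hs₂.div_const 2).congr fun k => by rw [div_div, mul_comm]).hasSum fun k => ?_⟩
  simpa [abs_of_nonneg (hm k)] using
    norm_fderiv_div_two_mul_norm_sub_le (m k) (hne k (mem_ball_self one_pos))

lemma ofReal_norm_gradient_log_brillLindquist_sq_le [CompleteSpace E] {m : ℕ → ℝ} {c : ℕ → E}
    {x : E} (hm : ∀ k, 0 ≤ m k) (hm₂ : Summable fun k => m k ^ 2)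
    (hsep : GeometricallySeparated c) (hx : ∀ k, 2 ≤ ‖x - c k‖) :
    ENNReal.ofReal (‖gradient (fun y => Real.log (brillLindquist m c y ^ 4)) x‖ ^ 2)
      ≤ 4 * (∑' k, ENNReal.ofReal (m k / ‖x - c k‖ ^ 2)) ^ 2 := by
  have hs₂ := hsep.summable_div_norm_sub_pow hm₂ x two_ne_zero
  obtain ⟨L, hL, hLle⟩ := exists_hasFDerivAt_brillLindquist hm hx
    (by simpa using hsep.summable_div_norm_sub_pow hm₂ x one_ne_zero) hs₂
  have hv : 1 ≤ brillLindquist m c x :=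
    le_add_of_nonneg_right (tsum_nonneg fun k => div_nonneg (hm k) (by positivity))
  have hgrad : ‖gradient (fun y => Real.log (brillLindquist m c y ^ 4)) x‖
      ≤ 2 * ∑' k, m k / ‖x - c k‖ ^ 2 :=
    calc _ ≤ 4 * ‖L‖ := norm_gradient_log_pow_four_le hL hv
      _ ≤ 4 * ∑' k, m k / (2 * ‖x - c k‖ ^ 2) := by gcongr
      _ = 2 * ∑' k, m k / ‖x - c k‖ ^ 2 := by
          rw [← tsum_mul_left, ← tsum_mul_left]
          exact tsum_congr fun k => by field_simp; ring
  have hS : 0 ≤ ∑' k, m k / ‖x - c k‖ ^ 2 := tsum_nonneg fun k => div_nonneg (hm k) (by positivity)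
  rw [← ENNReal.ofReal_tsum_of_nonneg (fun k => div_nonneg (hm k) (by positivity)) hs₂,
    ← ENNReal.ofReal_pow hS, ← ENNReal.ofReal_ofNat 4, ← ENNReal.ofReal_mul (by norm_num)]
  refine ENNReal.ofReal_le_ofReal ?_
  calc _ ≤ (2 * ∑' k, m k / ‖x - c k‖ ^ 2) ^ 2 := by gcongr
    _ = 4 * (∑' k, m k / ‖x - c k‖ ^ 2) ^ 2 := by ring

end Gradient

lemma volume_ball_eq_mul_volume_unitBall (a : ℝ³) {r : ℝ} (hr : 0 ≤ r) :
    volume (ball a r) = ENNReal.ofReal (r ^ 3) * volume (ball (0 : ℝ³) 1) := by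
  rw [Measure.addHaar_ball _ _ hr, finrank_euclideanSpace_fin]

lemma setLIntegral_inv_norm_sub_pow_four_le (a : ℝ³) {R : ℝ} (hR : 0 < R) :
    ∫⁻ x in {x | R ≤ ‖x - a‖}, ENNReal.ofReal ((‖x - a‖ ^ 4)⁻¹)
      ≤ ENNReal.ofReal (16 / R) * volume (ball (0 : ℝ³) 1) := by
  set shell : ℕ → Set ℝ³ := fun i => {x | R * 2 ^ i ≤ ‖x - a‖ ∧ ‖x - a‖ < R * 2 ^ (i + 1)}
  have hcover : {x | R ≤ ‖x - a‖} ⊆ ⋃ i, shell i := by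
    intro x (hx : R ≤ ‖x - a‖)
    obtain ⟨i, hi, hi'⟩ := exists_nat_pow_near ((one_le_div hR).2 hx) one_lt_two
    exact mem_iUnion.2 ⟨i, by rwa [le_div_iff₀' hR] at hi, by rwa [div_lt_iff₀' hR] at hi'⟩
  have hshell (i : ℕ) : ∫⁻ x in shell i, ENNReal.ofReal ((‖x - a‖ ^ 4)⁻¹)
      ≤ ENNReal.ofReal (16 / R / 2 / 2 ^ i) * volume (ball (0 : ℝ³) 1) := by
    have hRi : 0 < R * 2 ^ i := by positivity
    calc ∫⁻ x in shell i, ENNReal.ofReal ((‖x - a‖ ^ 4)⁻¹)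
        ≤ ∫⁻ _ in shell i, ENNReal.ofReal (((R * 2 ^ i) ^ 4)⁻¹) :=
          setLIntegral_mono measurable_const fun x hx =>
            ENNReal.ofReal_le_ofReal (by gcongr; exact hx.1)
      _ ≤ ENNReal.ofReal (((R * 2 ^ i) ^ 4)⁻¹) * volume (ball a (R * 2 ^ (i + 1))) := by
          rw [setLIntegral_const]
          gcongr
          exact fun x hx => mem_ball_iff_norm.2 hx.2
      _ = ENNReal.ofReal (16 / R / 2 / 2 ^ i) * volume (ball (0 : ℝ³) 1) := by
          rw [volume_ball_eq_mul_volume_unitBall a (by positivity), ← mul_assoc,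
            ← ENNReal.ofReal_mul (by positivity)]
          congr 2
          field_simp
          ring
  calc ∫⁻ x in {x | R ≤ ‖x - a‖}, ENNReal.ofReal ((‖x - a‖ ^ 4)⁻¹)
      ≤ ∑' i, ∫⁻ x in shell i, ENNReal.ofReal ((‖x - a‖ ^ 4)⁻¹) :=
        (lintegral_mono_set hcover).trans (lintegral_iUnion_le _ _)
    _ ≤ ∑' i, ENNReal.ofReal (16 / R / 2 / 2 ^ i) * volume (ball (0 : ℝ³) 1) :=
        ENNReal.tsum_le_tsum hshell
    _ = ENNReal.ofReal (16 / R) * volume (ball (0 : ℝ³) 1) := by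
        rw [ENNReal.tsum_mul_right, ← ENNReal.ofReal_tsum_of_nonneg (fun i => by positivity)
          (summable_geometric_two' _), tsum_geometric_two']

lemma setLIntegral_inv_sq_mul_sq_le_of_le (a b : ℝ³) :
    ∫⁻ x in {x | 2 ≤ ‖x - a‖ ∧ ‖x - a‖ ≤ ‖x - b‖}, ENNReal.ofReal ((‖x - a‖ ^ 2 * ‖x - b‖ ^ 2)⁻¹)
      ≤ ENNReal.ofReal (20 / √(1 + ‖a - b‖)) * volume (ball (0 : ℝ³) 1) := by
  set S := {x | 2 ≤ ‖x - a‖ ∧ ‖x - a‖ ≤ ‖x - b‖}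
  set T := √(1 + ‖a - b‖)
  have hT : 0 < T := Real.sqrt_pos.2 (by positivity)
  have hT4 : T ^ 4 = (1 + ‖a - b‖) ^ 2 := by
    rw [show T ^ 4 = (T ^ 2) ^ 2 by ring, Real.sq_sqrt (by positivity)]
  -- Near `a`, `‖x - b‖ ≥ (1 + ‖a - b‖) / 3` makes the integrand small; far from `a` it is at most
  -- `‖x - a‖⁻⁴`. Splitting at radius `√(1 + ‖a - b‖)` balances the two contributions.
  have hnear : ∫⁻ x in S ∩ ball a T, ENNReal.ofReal ((‖x - a‖ ^ 2 * ‖x - b‖ ^ 2)⁻¹)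
      ≤ ENNReal.ofReal (9 / 4 / T) * volume (ball (0 : ℝ³) 1) := by
    calc ∫⁻ x in S ∩ ball a T, ENNReal.ofReal ((‖x - a‖ ^ 2 * ‖x - b‖ ^ 2)⁻¹)
        ≤ ∫⁻ _ in S ∩ ball a T, ENNReal.ofReal (9 / 4 / T ^ 4) := by
          refine setLIntegral_mono measurable_const fun x ⟨⟨hxa, hab⟩, _⟩ => ?_
          have htri : ‖a - b‖ ≤ ‖x - a‖ + ‖x - b‖ := by
            simpa only [dist_eq_norm] using dist_triangle_left a b x
          have hxb : (1 + ‖a - b‖) / 3 ≤ ‖x - b‖ := by linarith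
          refine ENNReal.ofReal_le_ofReal ?_
          rw [hT4, div_div, ← inv_div]
          gcongr ?_⁻¹
          calc 4 * (1 + ‖a - b‖) ^ 2 / 9 = 2 ^ 2 * ((1 + ‖a - b‖) / 3) ^ 2 := by ring
            _ ≤ ‖x - a‖ ^ 2 * ‖x - b‖ ^ 2 := by gcongr
      _ ≤ ENNReal.ofReal (9 / 4 / T ^ 4) * volume (ball a T) := by
          rw [setLIntegral_const]
          gcongr
          exact inter_subset_right
      _ = ENNReal.ofReal (9 / 4 / T) * volume (ball (0 : ℝ³) 1) := by
          rw [volume_ball_eq_mul_volume_unitBall a hT.le, ← mul_assoc,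
            ← ENNReal.ofReal_mul (by positivity)]
          congr 2
          field_simp
  have hfar : ∫⁻ x in S ∩ {x | T ≤ ‖x - a‖}, ENNReal.ofReal ((‖x - a‖ ^ 2 * ‖x - b‖ ^ 2)⁻¹)
      ≤ ENNReal.ofReal (16 / T) * volume (ball (0 : ℝ³) 1) := by
    calc ∫⁻ x in S ∩ {x | T ≤ ‖x - a‖}, ENNReal.ofReal ((‖x - a‖ ^ 2 * ‖x - b‖ ^ 2)⁻¹)
        ≤ ∫⁻ x in S ∩ {x | T ≤ ‖x - a‖}, ENNReal.ofReal ((‖x - a‖ ^ 4)⁻¹) := by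
          refine setLIntegral_mono (by fun_prop) fun x ⟨⟨hxa, hab⟩, _⟩ => ?_
          refine ENNReal.ofReal_le_ofReal ?_
          rw [show ‖x - a‖ ^ 4 = ‖x - a‖ ^ 2 * ‖x - a‖ ^ 2 by ring]
          gcongr
      _ ≤ ∫⁻ x in {x | T ≤ ‖x - a‖}, ENNReal.ofReal ((‖x - a‖ ^ 4)⁻¹) :=
          lintegral_mono_set inter_subset_right
      _ ≤ ENNReal.ofReal (16 / T) * volume (ball (0 : ℝ³) 1) :=
          setLIntegral_inv_norm_sub_pow_four_le a hT
  have hsplit : S ⊆ (S ∩ ball a T) ∪ (S ∩ {x | T ≤ ‖x - a‖}) := fun x hx => by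
    by_cases h : ‖x - a‖ < T
    · exact Or.inl ⟨hx, mem_ball_iff_norm.2 h⟩
    · exact Or.inr ⟨hx, not_lt.1 h⟩
  calc _ ≤ _ := (lintegral_mono_set hsplit).trans (lintegral_union_le _ _ _)
    _ ≤ ENNReal.ofReal (9 / 4 / T) * volume (ball (0 : ℝ³) 1)
        + ENNReal.ofReal (16 / T) * volume (ball (0 : ℝ³) 1) := add_le_add hnear hfar
    _ ≤ ENNReal.ofReal (20 / T) * volume (ball (0 : ℝ³) 1) := by
        rw [← add_mul, ← ENNReal.ofReal_add (by positivity) (by positivity), ← add_div]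
        gcongr
        norm_num

lemma setLIntegral_inv_sq_mul_sq_le (a b : ℝ³) :
    ∫⁻ x in {x | 2 ≤ ‖x - a‖ ∧ 2 ≤ ‖x - b‖}, ENNReal.ofReal ((‖x - a‖ ^ 2 * ‖x - b‖ ^ 2)⁻¹)
      ≤ ENNReal.ofReal (40 / √(1 + ‖a - b‖)) * volume (ball (0 : ℝ³) 1) := by
  have hsplit : {x | 2 ≤ ‖x - a‖ ∧ 2 ≤ ‖x - b‖} ⊆
      {x | 2 ≤ ‖x - a‖ ∧ ‖x - a‖ ≤ ‖x - b‖} ∪ {x | 2 ≤ ‖x - b‖ ∧ ‖x - b‖ ≤ ‖x - a‖} :=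
    fun x ⟨ha, hb⟩ => (le_total ‖x - a‖ ‖x - b‖).imp (⟨ha, ·⟩) (⟨hb, ·⟩)
  have hswap : ∫⁻ x in {x | 2 ≤ ‖x - b‖ ∧ ‖x - b‖ ≤ ‖x - a‖},
      ENNReal.ofReal ((‖x - a‖ ^ 2 * ‖x - b‖ ^ 2)⁻¹)
      ≤ ENNReal.ofReal (20 / √(1 + ‖a - b‖)) * volume (ball (0 : ℝ³) 1) := by
    simpa only [mul_comm (‖_ - a‖ ^ 2), norm_sub_rev b a] using
      setLIntegral_inv_sq_mul_sq_le_of_le b a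
  calc _ ≤ _ := (lintegral_mono_set hsplit).trans (lintegral_union_le _ _ _)
    _ ≤ _ := add_le_add (setLIntegral_inv_sq_mul_sq_le_of_le a b) hswap
    _ = ENNReal.ofReal (40 / √(1 + ‖a - b‖)) * volume (ball (0 : ℝ³) 1) := by
        rw [← add_mul, ← ENNReal.ofReal_add (by positivity) (by positivity)]
        ring_nf

lemma tsum_pow_natAbs_sub_le (q : ℝ≥0∞) (j : ℕ) :
    ∑' k : ℕ, q ^ ((j : ℤ) - k).natAbs ≤ 2 * (1 - q)⁻¹ := by
  -- `k ↦ (|j - k|, k ≤ j)` is injective, so each power of `q` occurs at most twice.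
  have hinj : Function.Injective fun k : ℕ => (((j : ℤ) - k).natAbs, decide (k ≤ j)) := by
    intro k₁ k₂ h
    simp only [Prod.mk.injEq, decide_eq_decide] at h
    omega
  calc ∑' k : ℕ, q ^ ((j : ℤ) - k).natAbs
      ≤ ∑' p : ℕ × Bool, q ^ p.1 :=
        ENNReal.tsum_comp_le_tsum_of_injective hinj fun p : ℕ × Bool => q ^ p.1
    _ = 2 * (1 - q)⁻¹ := by
        rw [ENNReal.tsum_prod (f := fun i (_ : Bool) => q ^ i)]
        simp only [tsum_fintype, Fintype.sum_bool]
        rw [ENNReal.tsum_add, ENNReal.tsum_geometric, two_mul]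

lemma tsum_tsum_add_mul_pow_natAbs_sub_le (a : ℕ → ℝ≥0∞) (q : ℝ≥0∞) :
    ∑' j : ℕ, ∑' k : ℕ, (a j + a k) * q ^ ((j : ℤ) - k).natAbs ≤ 4 * (1 - q)⁻¹ * ∑' j, a j := by
  have hrow (j : ℕ) : ∑' k : ℕ, a j * q ^ ((j : ℤ) - k).natAbs ≤ a j * (2 * (1 - q)⁻¹) := by
    rw [ENNReal.tsum_mul_left]
    exact mul_le_mul_right (tsum_pow_natAbs_sub_le q j) _
  have hsymm (j k : ℕ) : ((j : ℤ) - k).natAbs = ((k : ℤ) - j).natAbs := by omega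
  calc ∑' j : ℕ, ∑' k : ℕ, (a j + a k) * q ^ ((j : ℤ) - k).natAbs
      = ∑' j : ℕ, ∑' k : ℕ, a j * q ^ ((j : ℤ) - k).natAbs
        + ∑' k : ℕ, ∑' j : ℕ, a k * q ^ ((k : ℤ) - j).natAbs := by
        simp only [add_mul, ENNReal.tsum_add]
        rw [ENNReal.tsum_comm (f := fun j k => a k * _)]
        simp only [hsymm]
    _ ≤ ∑' j, a j * (2 * (1 - q)⁻¹) + ∑' k, a k * (2 * (1 - q)⁻¹) :=
        add_le_add (ENNReal.tsum_le_tsum hrow) (ENNReal.tsum_le_tsum hrow)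
    _ = 4 * (1 - q)⁻¹ * ∑' j, a j := by
        rw [ENNReal.tsum_mul_right]
        ring

lemma lintegral_tsum_sq {α : Type*} [MeasurableSpace α] {μ : Measure α} {f : ℕ → α → ℝ≥0∞}
    (hf : ∀ k, AEMeasurable (f k) μ) :
    ∫⁻ x, (∑' k, f k x) ^ 2 ∂μ = ∑' j, ∑' k, ∫⁻ x, f j x * f k x ∂μ := by
  have hsq (x : α) : (∑' k, f k x) ^ 2 = ∑' j, ∑' k, f j x * f k x := by
    rw [sq, ← ENNReal.tsum_mul_right]
    exact tsum_congr fun j => ENNReal.tsum_mul_left.symm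
  have hprod (j k : ℕ) : AEMeasurable (fun x => f j x * f k x) μ := (hf j).mul (hf k)
  simp_rw [hsq]
  rw [lintegral_tsum fun j => AEMeasurable.tsum (hprod j)]
  exact tsum_congr fun j => lintegral_tsum (hprod j)

lemma inv_sqrt_le_inv_sqrt_two_pow {t : ℝ} {n : ℕ} (h : 2 ^ n ≤ t) : (√t)⁻¹ ≤ (√2)⁻¹ ^ n := by
  rw [inv_pow]
  refine inv_anti₀ (by positivity)
    ((Real.le_sqrt (by positivity) ((pow_nonneg zero_le_two n).trans h)).2 ?_)
  rwa [← pow_mul, mul_comm, pow_mul, Real.sq_sqrt zero_le_two]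

lemma setLIntegral_div_norm_sub_sq_mul_le {m : ℕ → ℝ} {c : ℕ → ℝ³} (hm : ∀ k, 0 ≤ m k)
    (hsep : GeometricallySeparated c) (j k : ℕ) :
    ∫⁻ x in {x | ∀ k, 2 ≤ ‖x - c k‖},
        ENNReal.ofReal (m j / ‖x - c j‖ ^ 2) * ENNReal.ofReal (m k / ‖x - c k‖ ^ 2)
      ≤ (ENNReal.ofReal (m j ^ 2) + ENNReal.ofReal (m k ^ 2))
        * (40 * volume (ball (0 : ℝ³) 1) * ENNReal.ofReal (√2)⁻¹ ^ ((j : ℤ) - k).natAbs) := by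
  have hprod (x : ℝ³) : ENNReal.ofReal (m j / ‖x - c j‖ ^ 2) * ENNReal.ofReal (m k / ‖x - c k‖ ^ 2)
      = ENNReal.ofReal (m j * m k) * ENNReal.ofReal ((‖x - c j‖ ^ 2 * ‖x - c k‖ ^ 2)⁻¹) := by
    rw [← ENNReal.ofReal_mul (div_nonneg (hm j) (by positivity)),
      ← ENNReal.ofReal_mul (mul_nonneg (hm j) (hm k))]
    congr 1
    field_simp
  have hsub : {x : ℝ³ | ∀ k, 2 ≤ ‖x - c k‖} ⊆ {x | 2 ≤ ‖x - c j‖ ∧ 2 ≤ ‖x - c k‖} :=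
    fun x hx => ⟨hx j, hx k⟩
  have hmass :
      ENNReal.ofReal (m j * m k) ≤ ENNReal.ofReal (m j ^ 2) + ENNReal.ofReal (m k ^ 2) := by
    rw [← ENNReal.ofReal_add (sq_nonneg _) (sq_nonneg _)]
    exact ENNReal.ofReal_le_ofReal (by nlinarith [sq_nonneg (m j - m k)])
  have hdecay : ENNReal.ofReal (40 / √(1 + ‖c j - c k‖))
      ≤ 40 * ENNReal.ofReal (√2)⁻¹ ^ ((j : ℤ) - k).natAbs := by
    rw [div_eq_mul_inv, ENNReal.ofReal_mul (by norm_num), ENNReal.ofReal_ofNat,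
      ← ENNReal.ofReal_pow (by positivity)]
    gcongr
    exact inv_sqrt_le_inv_sqrt_two_pow (hsep.two_pow_natAbs_sub_le j k)
  calc _ = ENNReal.ofReal (m j * m k) * ∫⁻ x in {x | ∀ k, 2 ≤ ‖x - c k‖},
          ENNReal.ofReal ((‖x - c j‖ ^ 2 * ‖x - c k‖ ^ 2)⁻¹) := by
        simp_rw [hprod]
        exact lintegral_const_mul _ (by fun_prop)
    _ ≤ ENNReal.ofReal (m j * m k) * (ENNReal.ofReal (40 / √(1 + ‖c j - c k‖))
          * volume (ball (0 : ℝ³) 1)) := by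
        gcongr
        exact (lintegral_mono_set hsub).trans (setLIntegral_inv_sq_mul_sq_le (c j) (c k))
    _ = ENNReal.ofReal (m j * m k) * ENNReal.ofReal (40 / √(1 + ‖c j - c k‖))
          * volume (ball (0 : ℝ³) 1) := by ring
    _ ≤ (ENNReal.ofReal (m j ^ 2) + ENNReal.ofReal (m k ^ 2))
          * (40 * ENNReal.ofReal (√2)⁻¹ ^ ((j : ℤ) - k).natAbs) * volume (ball (0 : ℝ³) 1) := by
        gcongr
    _ = _ := by ring

lemma lintegral_norm_gradient_log_brillLindquist_sq_le {m : ℕ → ℝ} {c : ℕ → ℝ³}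
    (hm : ∀ k, 0 ≤ m k) (hm₂ : Summable fun k => m k ^ 2) (hsep : GeometricallySeparated c) :
    ∫⁻ x in {x | ∀ k, 2 ≤ ‖x - c k‖},
        ENNReal.ofReal (‖gradient (fun y => Real.log (brillLindquist m c y ^ 4)) x‖ ^ 2)
      ≤ 640 * volume (ball (0 : ℝ³) 1) * (1 - ENNReal.ofReal (√2)⁻¹)⁻¹
        * ENNReal.ofReal (∑' k, m k ^ 2) := by
  set B := volume (ball (0 : ℝ³) 1)
  set q := ENNReal.ofReal (√2)⁻¹
  calc _ ≤ ∫⁻ x in {x | ∀ k, 2 ≤ ‖x - c k‖},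
          4 * (∑' k, ENNReal.ofReal (m k / ‖x - c k‖ ^ 2)) ^ 2 :=
        setLIntegral_mono (by fun_prop) fun x hx =>
          ofReal_norm_gradient_log_brillLindquist_sq_le hm hm₂ hsep hx
    _ = 4 * ∑' j, ∑' k, ∫⁻ x in {x | ∀ k, 2 ≤ ‖x - c k‖},
          ENNReal.ofReal (m j / ‖x - c j‖ ^ 2) * ENNReal.ofReal (m k / ‖x - c k‖ ^ 2) := by
        rw [lintegral_const_mul' _ _ (by norm_num), lintegral_tsum_sq fun k => by fun_prop]
    _ ≤ 4 * ∑' j, ∑' k, (ENNReal.ofReal (m j ^ 2) + ENNReal.ofReal (m k ^ 2))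
          * q ^ ((j : ℤ) - k).natAbs * (40 * B) := by
        gcongr with j k
        rw [mul_assoc, mul_comm _ (40 * B)]
        exact setLIntegral_div_norm_sub_sq_mul_le hm hsep j k
    _ ≤ 4 * (4 * (1 - q)⁻¹ * ∑' k, ENNReal.ofReal (m k ^ 2)) * (40 * B) := by
        simp_rw [ENNReal.tsum_mul_right]
        rw [← mul_assoc]
        gcongr
        exact tsum_tsum_add_mul_pow_natAbs_sub_le _ q
    _ = 640 * B * (1 - q)⁻¹ * ENNReal.ofReal (∑' k, m k ^ 2) := by
        rw [ENNReal.ofReal_tsum_of_nonneg (fun k => sq_nonneg _) hm₂]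
        ring

/-- Universal `C > 0` such that for positive masses with
`Σ m_k² < ∞` and geometrically separated centers (`1 + ‖c_j − c_k‖ ≥ 2^{|j−k|}`),
the integral of `‖∇ log f‖²` over `ℛ = {x : ∀ k, ‖x − c_k‖ ≥ 2}` is at most
`C Σ m_k²`, where `f = v⁴` and `v` is the Brill–Lindquist conformal factor. -/
theorem gradient_log_conformal_factor_L2_bound :
    ∃ C > (0 : ℝ), ∀ (m : ℕ → ℝ) (c : ℕ → EuclideanSpace ℝ (Fin 3)),
      (∀ k, 0 < m k) →
      Summable (fun k => (m k) ^ 2) →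
      (∀ j k : ℕ, j ≠ k → (2 : ℝ) ^ ((j : ℤ) - (k : ℤ)).natAbs ≤ 1 + ‖c j - c k‖) →
      ∫⁻ x in {x : EuclideanSpace ℝ (Fin 3) | ∀ k, 2 ≤ ‖x - c k‖},
          ENNReal.ofReal
            (‖gradient
                (fun y => Real.log ((1 + ∑' k, m k / (2 * ‖y - c k‖)) ^ 4)) x‖ ^ 2)
          ∂volume
        ≤ ENNReal.ofReal (C * ∑' k, (m k) ^ 2) := by
  set K := 640 * volume (ball (0 : ℝ³) 1) * (1 - ENNReal.ofReal (√2)⁻¹)⁻¹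
  have hq : ENNReal.ofReal (√2)⁻¹ < 1 :=
    ENNReal.ofReal_lt_one.2 (inv_lt_one_of_one_lt₀ (Real.lt_sqrt zero_le_one |>.2 (by norm_num)))
  have hK₀ : K ≠ 0 :=
    mul_ne_zero (mul_ne_zero (by norm_num) (measure_ball_pos volume _ one_pos).ne')
      (ENNReal.inv_ne_zero.2 (ENNReal.sub_ne_top ENNReal.one_ne_top))
  have hK : K ≠ ⊤ := ENNReal.mul_ne_top (ENNReal.mul_ne_top (by norm_num) measure_ball_lt_top.ne)
    (ENNReal.inv_ne_top.2 (tsub_pos_of_lt hq).ne')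
  refine ⟨K.toReal, ENNReal.toReal_pos hK₀ hK, fun m c hm hm₂ hsep => ?_⟩
  rw [ENNReal.ofReal_mul ENNReal.toReal_nonneg, ENNReal.ofReal_toReal hK]
  exact lintegral_norm_gradient_log_brillLindquist_sq_le (fun k => (hm k).le) hm₂ hsep
end

section
/- Let (m_k)_{k∈ℕ} be positive reals and (c_k)_{k∈ℕ} ⊂ ℝ³ with |c_i − c_j| ≥ 5 for i ≠ j and Σ_k m_k/(1+|c_k|) < ∞. Set v(x) = 1 + Σ_k m_k/(2|x − c_k|) and f = v⁴. Then for every x ∈ ℝ³ with |x − c_k| ≥ 1 for all k, the gradient of log f at x satisfies |∇(log f)(x)| ≤ 2·Σ_k m_k/|x − c_k|². -/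
/-! By `log (v ^ 4) = 4 log v` we have `∇ log f = 4 ∇v / v` with `v ≥ 1`, so it suffices that
`|∇v(x)| ≤ Σ m_k / (2 |x - c_k|²)`, the sum of the norms of the termwise gradients. Termwise
differentiation is legitimate on the ball of radius `1/2` about `x`: there
`|y - c_k| ≥ |x - c_k| / 2`, so the k-th derivative is at most `2 m_k / |x - c_k|²`, and these
bounds are summable because `|x - c_k|² ≥ |x - c_k|` and `1 + |c_k| ≤ (2 + |x|) |x - c_k|`. -/

section Summability

variable {E : Type*} [SeminormedAddCommGroup E]
  {a : ℕ → ℝ} {c : ℕ → E} {x : E} {r : ℝ}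

theorem Summable.div_norm_sub_of_div_one_add_norm (h : Summable fun k => a k / (1 + ‖c k‖))
    (hr : 0 < r) (hx : ∀ k, r ≤ ‖x - c k‖) : Summable fun k => a k / ‖x - c k‖ := by
  refine .of_norm_bounded (h.norm.mul_left (1 + (1 + ‖x‖) / r)) fun k => ?_
  have hxc : 0 < ‖x - c k‖ := hr.trans_le (hx k)
  have hc : 1 + ‖c k‖ ≤ (1 + (1 + ‖x‖) / r) * ‖x - c k‖ := by
    have : ‖c k‖ ≤ ‖x‖ + ‖x - c k‖ := by simpa using norm_sub_le x (x - c k)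
    have : 1 + ‖x‖ ≤ (1 + ‖x‖) / r * ‖x - c k‖ := by
      rw [div_mul_eq_mul_div, le_div_iff₀ hr]; gcongr; exact hx k
    linarith
  rw [norm_div, norm_div, norm_norm, Real.norm_of_nonneg (by positivity : (0:ℝ) ≤ 1 + ‖c k‖),
    mul_div_assoc', div_le_div_iff₀ hxc (by positivity)]
  calc ‖a k‖ * (1 + ‖c k‖) ≤ ‖a k‖ * ((1 + (1 + ‖x‖) / r) * ‖x - c k‖) := by gcongr
    _ = _ := by ring

theorem summable_abs_div_norm_sub_sq (hr : 0 < r) (hx : ∀ k, r ≤ ‖x - c k‖)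
    (ha : Summable fun k => a k / ‖x - c k‖) : Summable fun k => |a k| / ‖x - c k‖ ^ 2 := by
  refine .of_nonneg_of_le (fun k => by positivity) (fun k => ?_) (ha.abs.div_const r)
  have hxc : 0 < ‖x - c k‖ := hr.trans_le (hx k)
  rw [abs_div, abs_norm, div_div, sq]
  gcongr
  exact hx k

end Summability

section InverseDistance

variable {E : Type*} [NormedAddCommGroup E] [InnerProductSpace ℝ E]
  {a : ℕ → ℝ} {c : ℕ → E} {x : E} {r : ℝ}

theorem hasFDerivAt_div_norm_sub (b : ℝ) {p y : E} (h : y ≠ p) :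
    HasFDerivAt (fun z => b / ‖z - p‖) ((-b / ‖y - p‖ ^ 2) • fderiv ℝ (‖·‖) (y - p)) y := by
  have hyp : y - p ≠ 0 := sub_ne_zero.2 h
  have hnorm : HasFDerivAt (fun z => ‖z - p‖) (fderiv ℝ (‖·‖) (y - p)) y :=
    (((contDiffAt_norm ℝ (n := 1) hyp).differentiableAt one_ne_zero).hasFDerivAt).comp y
      ((hasFDerivAt_id y).sub_const p)
  have hdiv : HasDerivAt (fun t : ℝ => b / t) (-b / ‖y - p‖ ^ 2) ‖y - p‖ := by
    simpa [div_eq_mul_inv, neg_div] using (hasDerivAt_inv (norm_ne_zero_iff.2 hyp)).const_mul b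
  exact hdiv.comp_hasFDerivAt y hnorm

theorem norm_fderiv_div_norm_sub (b : ℝ) {p y : E} (h : y ≠ p) :
    ‖fderiv ℝ (fun z => b / ‖z - p‖) y‖ = |b| / ‖y - p‖ ^ 2 := by
  have hyp : y - p ≠ 0 := sub_ne_zero.2 h
  have : Nontrivial E := nontrivial_of_ne _ _ hyp
  rw [(hasFDerivAt_div_norm_sub b h).fderiv, norm_smul,
    norm_fderiv_norm ((contDiffAt_norm ℝ (n := 1) hyp).differentiableAt one_ne_zero),
    mul_one, norm_div, norm_neg, Real.norm_eq_abs, norm_pow, norm_norm]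

theorem hasFDerivAt_tsum_div_norm_sub (hr : 0 < r) (hx : ∀ k, r ≤ ‖x - c k‖)
    (ha : Summable fun k => a k / ‖x - c k‖) :
    HasFDerivAt (fun y => ∑' k, a k / ‖y - c k‖)
      (∑' k, fderiv ℝ (fun z => a k / ‖z - c k‖) x) x := by
  have hball : ∀ y ∈ Metric.ball x (r / 2), ∀ k, ‖x - c k‖ / 2 ≤ ‖y - c k‖ := by
    intro y hy k
    rw [Metric.mem_ball, dist_comm, dist_eq_norm] at hy
    linarith [norm_sub_le_norm_sub_add_norm_sub x y (c k), hx k]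
  have hpos : ∀ y ∈ Metric.ball x (r / 2), ∀ k, 0 < ‖y - c k‖ := fun y hy k =>
    (half_pos (hr.trans_le (hx k))).trans_le (hball y hy k)
  refine hasFDerivAt_tsum_of_isPreconnected
    ((summable_abs_div_norm_sub_sq hr hx ha).mul_left 4) Metric.isOpen_ball
    (convex_ball x _).isPreconnected
    (fun k y hy => (hasFDerivAt_div_norm_sub (a k)
      (norm_sub_pos_iff.1 (hpos y hy k))).differentiableAt.hasFDerivAt)
    (fun k y hy => ?_) (Metric.mem_ball_self (half_pos hr)) ha (Metric.mem_ball_self (half_pos hr))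
  have hxc : 0 < ‖x - c k‖ / 2 := half_pos (hr.trans_le (hx k))
  calc ‖fderiv ℝ (fun z => a k / ‖z - c k‖) y‖ = |a k| / ‖y - c k‖ ^ 2 :=
        norm_fderiv_div_norm_sub (a k) (norm_sub_pos_iff.1 (hpos y hy k))
    _ ≤ |a k| / (‖x - c k‖ / 2) ^ 2 := by gcongr; exact hball y hy k
    _ = 4 * (|a k| / ‖x - c k‖ ^ 2) := by ring

theorem norm_tsum_fderiv_div_norm_sub_le (hr : 0 < r) (hx : ∀ k, r ≤ ‖x - c k‖)
    (ha : Summable fun k => a k / ‖x - c k‖) :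
    ‖∑' k, fderiv ℝ (fun z => a k / ‖z - c k‖) x‖ ≤ ∑' k, |a k| / ‖x - c k‖ ^ 2 := by
  have hnorm : ∀ k, ‖fderiv ℝ (fun z => a k / ‖z - c k‖) x‖ = |a k| / ‖x - c k‖ ^ 2 := fun k =>
    norm_fderiv_div_norm_sub (a k) (norm_sub_pos_iff.1 (hr.trans_le (hx k)))
  refine (norm_tsum_le_tsum_norm ?_).trans_eq (tsum_congr hnorm)
  simpa only [hnorm] using summable_abs_div_norm_sub_sq hr hx ha

end InverseDistance

theorem norm_fderiv_log_one_add_pow_le {F : Type*} [NormedAddCommGroup F] [NormedSpace ℝ F]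
    {f : F → ℝ} {f' : F →L[ℝ] ℝ} {x : F} (n : ℕ) (hf : HasFDerivAt f f' x) (hx : 0 ≤ f x) :
    ‖fderiv ℝ (fun y => Real.log ((1 + f y) ^ n)) x‖ ≤ n * ‖f'‖ := by
  have hpos : 0 < 1 + f x := by linarith
  simp_rw [Real.log_pow]
  rw [(((hf.const_add 1).log hpos.ne').const_mul (n : ℝ)).fderiv, norm_smul, norm_smul,
    Real.norm_natCast, norm_inv, Real.norm_of_nonneg hpos.le, ← mul_assoc]
  gcongr
  exact mul_le_of_le_one_right n.cast_nonneg (inv_le_one_of_one_le₀ (by linarith))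

theorem gradient_log_conformal_factor_pointwise_bound_general
    (m : ℕ → ℝ) (c : ℕ → EuclideanSpace ℝ (Fin 3))
    (hm : ∀ k, 0 < m k)
    (hsum : Summable (fun k => m k / (1 + ‖c k‖)))
    (x : EuclideanSpace ℝ (Fin 3)) (hx : ∀ k, 1 ≤ ‖x - c k‖) :
    ‖gradient (fun y => Real.log ((1 + ∑' k, m k / (2 * ‖y - c k‖)) ^ 4)) x‖
      ≤ 2 * ∑' k, m k / ‖x - c k‖ ^ 2 := by
  have ha : Summable fun k => m k / 2 / ‖x - c k‖ := by
    simpa only [div_right_comm] using (hsum.div_norm_sub_of_div_one_add_norm one_pos hx).div_const 2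
  have hS : 0 ≤ ∑' k, m k / 2 / ‖x - c k‖ := tsum_nonneg fun k => by have := hm k; positivity
  simp_rw [gradient, LinearIsometryEquiv.norm_map, ← div_div]
  calc _ ≤ (4 : ℕ) * ‖∑' k, fderiv ℝ (fun z => m k / 2 / ‖z - c k‖) x‖ :=
        norm_fderiv_log_one_add_pow_le 4 (hasFDerivAt_tsum_div_norm_sub one_pos hx ha) hS
    _ ≤ 4 * ∑' k, |m k / 2| / ‖x - c k‖ ^ 2 := by
        push_cast; gcongr; exact norm_tsum_fderiv_div_norm_sub_le one_pos hx ha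
    _ = 2 * ∑' k, m k / ‖x - c k‖ ^ 2 := by
        simp_rw [abs_of_pos (half_pos (hm _)), div_right_comm _ (2 : ℝ), tsum_div_const]; ring

/-- Pointwise gradient bound for the logarithm of the
Brill–Lindquist conformal factor to the fourth power:
`‖∇(log f)(x)‖ ≤ 2 Σ_k m_k/‖x − c_k‖²` whenever `‖x − c_k‖ ≥ 1` for all `k`. -/
theorem gradient_log_conformal_factor_pointwise_bound
    (m : ℕ → ℝ) (c : ℕ → EuclideanSpace ℝ (Fin 3))
    (hm : ∀ k, 0 < m k)
    (hsep : ∀ i j, i ≠ j → (5 : ℝ) ≤ ‖c i - c j‖)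
    (hsum : Summable (fun k => m k / (1 + ‖c k‖)))
    (x : EuclideanSpace ℝ (Fin 3)) (hx : ∀ k, 1 ≤ ‖x - c k‖) :
    ‖gradient (fun y => Real.log ((1 + ∑' k, m k / (2 * ‖y - c k‖)) ^ 4)) x‖
      ≤ 2 * ∑' k, m k / ‖x - c k‖ ^ 2 :=
  gradient_log_conformal_factor_pointwise_bound_general m c hm hsum x hx
end

section
/- Let (m_k)_{k∈ℕ} be positive reals and (c_k)_{k∈ℕ} ⊂ ℝ³ with |c_i − c_j| ≥ 5 for i ≠ j and Σ_k m_k/(1+|c_k|) < ∞, and set v(x) = 1 + Σ_k m_k/(2|x − c_k|). Then on the open set U = ℝ³ \ {c_k : k ∈ ℕ}, the Euclidean Laplacian of log(v⁴) equals −4·|∇v|²/v²; in particular Δ(log(v⁴)) ≤ 0 on U, i.e. log of the Brill–Lindquist conformal factor raised to the fourth power is superharmonic on U. -/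
/-!
Each term `y ↦ m / (2‖y - c‖)` is harmonic away from `c`. Near a point `x` off the centres, the
separation of the centres gives `r > 0` with `‖x - c k‖ ≥ r` for all `k`; on the ball of radius
`r / 2` one then has `‖y - c k‖ ≥ ‖x - c k‖ / 2`, and `‖x - c k‖` is comparable to `1 + ‖c k‖`.
So the series for `v` and for its first partial derivatives can be differentiated term by term,
and `v` is harmonic off the centres. For harmonic `v > 0` the chain rule gives
`Δ log (v ^ n) = n (Δv / v - ‖∇v‖² / v²) = -n ‖∇v‖² / v²`.
-/

open scoped RealInnerProductSpace Topology
open Metric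

section InverseDistance

variable {E : Type*} [NormedAddCommGroup E] [InnerProductSpace ℝ E] {c x y : E}

theorem hasFDerivAt_norm_sub (h : x ≠ c) :
    HasFDerivAt (fun y => ‖y - c‖) (‖x - c‖⁻¹ • innerSL ℝ (x - c)) x := by
  have hsq := ((hasFDerivAt_id x).sub_const c).norm_sq.sqrt
    (pow_ne_zero 2 (norm_ne_zero_iff.mpr (sub_ne_zero.mpr h)))
  simp only [Real.sqrt_sq (norm_nonneg _), id] at hsq
  refine hsq.congr_fderiv ?_
  ext z
  simp only [smul_apply, ContinuousLinearMap.comp_apply, innerSL_apply_apply,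
    ContinuousLinearMap.id_apply, smul_eq_mul]
  rw [two_smul]
  field_simp
  ring

theorem hasFDerivAt_inv_norm_sub_pow (n : ℕ) (h : x ≠ c) :
    HasFDerivAt (fun y => (‖y - c‖ ^ n)⁻¹)
      ((-n * (‖x - c‖ ^ (n + 2))⁻¹) • innerSL ℝ (x - c)) x := by
  have hx : ‖x - c‖ ≠ 0 := norm_ne_zero_iff.mpr (sub_ne_zero.mpr h)
  refine ((hasDerivAt_inv (pow_ne_zero n hx)).comp_hasFDerivAt x
    ((hasFDerivAt_norm_sub h).pow n)).congr_fderiv ?_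
  rw [smul_smul, smul_smul]
  congr 1
  rcases n with _ | n
  · simp
  · simp only [Nat.add_sub_cancel]
    field_simp
    push_cast
    ring

noncomputable def inverseDistFDeriv (c y : E) : E →L[ℝ] ℝ :=
  (-(‖y - c‖ ^ 3)⁻¹) • innerSL ℝ (y - c)

noncomputable def inverseDistFDeriv2 (c e y : E) : E →L[ℝ] ℝ :=
  (3 * (‖y - c‖ ^ 5)⁻¹ * ⟪y - c, e⟫) • innerSL ℝ (y - c) - (‖y - c‖ ^ 3)⁻¹ • innerSL ℝ e

theorem inverseDistFDeriv2_apply (c e y z : E) :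
    inverseDistFDeriv2 c e y z =
      3 * (‖y - c‖ ^ 5)⁻¹ * ⟪y - c, e⟫ * ⟪y - c, z⟫ - (‖y - c‖ ^ 3)⁻¹ * ⟪e, z⟫ := rfl

theorem hasFDerivAt_inv_norm_sub (h : x ≠ c) :
    HasFDerivAt (fun y => ‖y - c‖⁻¹) (inverseDistFDeriv c x) x := by
  have h1 := hasFDerivAt_inv_norm_sub_pow 1 h
  simp only [pow_one] at h1
  refine h1.congr_fderiv ?_
  rw [inverseDistFDeriv]
  norm_num

theorem hasFDerivAt_inverseDistFDeriv_apply (e : E) (h : x ≠ c) :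
    HasFDerivAt (fun y => inverseDistFDeriv c y e) (inverseDistFDeriv2 c e x) x := by
  have hinner : HasFDerivAt (fun y => ⟪y - c, e⟫) (innerSL ℝ e) x := by
    refine (((hasFDerivAt_id x).sub_const c).inner ℝ (hasFDerivAt_const e x)).congr_fderiv ?_
    ext z
    simp [real_inner_comm]
  refine (((hasFDerivAt_inv_norm_sub_pow 3 h).neg).mul hinner).congr_fderiv ?_
  ext z
  simp only [inverseDistFDeriv2_apply, add_apply, smul_apply, neg_apply, innerSL_apply_apply,
    smul_eq_mul, Pi.neg_apply]
  push_cast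
  ring

theorem norm_inverseDistFDeriv (c y : E) : ‖inverseDistFDeriv c y‖ = (‖y - c‖ ^ 2)⁻¹ := by
  rw [inverseDistFDeriv, norm_smul, innerSL_apply_norm, norm_neg, norm_inv, norm_pow, norm_norm]
  rcases eq_or_ne ‖y - c‖ 0 with h | h
  · simp [h]
  · field_simp

theorem norm_inverseDistFDeriv2_le (c e y : E) :
    ‖inverseDistFDeriv2 c e y‖ ≤ 4 * ‖e‖ * (‖y - c‖ ^ 3)⁻¹ := by
  calc ‖inverseDistFDeriv2 c e y‖
      ≤ ‖3 * (‖y - c‖ ^ 5)⁻¹ * ⟪y - c, e⟫‖ * ‖y - c‖ + (‖y - c‖ ^ 3)⁻¹ * ‖e‖ := by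
        refine (norm_sub_le _ _).trans_eq ?_
        rw [norm_smul, norm_smul, innerSL_apply_norm, innerSL_apply_norm, norm_inv, norm_pow,
          norm_norm]
    _ ≤ 3 * (‖y - c‖ ^ 5)⁻¹ * (‖y - c‖ * ‖e‖) * ‖y - c‖ + (‖y - c‖ ^ 3)⁻¹ * ‖e‖ := by
        rw [norm_mul, norm_mul, Real.norm_eq_abs, Real.norm_eq_abs, Real.norm_eq_abs,
          abs_of_pos three_pos, abs_inv, abs_pow, abs_norm]
        gcongr
        exact abs_real_inner_le_norm _ _
    _ = 4 * ‖e‖ * (‖y - c‖ ^ 3)⁻¹ := by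
        rcases eq_or_ne ‖y - c‖ 0 with h | h
        · simp [h]
        · field_simp
          ring

theorem sum_inverseDistFDeriv2_orthonormalBasis (b : OrthonormalBasis (Fin 3) ℝ E) (c y : E) :
    ∑ i, inverseDistFDeriv2 c (b i) y (b i) = 0 := by
  have hb : ∀ i, ⟪b i, b i⟫ = 1 := fun i => by
    rw [real_inner_self_eq_norm_sq, b.orthonormal.1 i, one_pow]
  simp only [inverseDistFDeriv2_apply, mul_assoc, ← sq, hb, Finset.sum_sub_distrib,
    ← Finset.mul_sum, b.sum_sq_inner_left]
  rcases eq_or_ne ‖y - c‖ 0 with h | h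
  · simp [h]
  · field_simp
    norm_num

end InverseDistance

section LocalBounds

variable {ι E : Type*} [NormedAddCommGroup E] {c : ι → E} {x y z : E} {r : ℝ}

theorem exists_pos_forall_le_norm_sub {ε : ℝ} (hε : 0 < ε)
    (hc : Pairwise fun i j => ε ≤ ‖c i - c j‖) (hx : ∀ k, x ≠ c k) :
    ∃ r > 0, ∀ k, r ≤ ‖x - c k‖ := by
  have hclosed : IsClosed (Set.range c) := by
    refine isClosed_of_pairwise_le_dist hε ?_
    rintro _ ⟨i, rfl⟩ _ ⟨j, rfl⟩ hij
    rw [dist_eq_norm]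
    exact hc (ne_of_apply_ne c hij)
  obtain ⟨r, hr, hball⟩ :=
    isOpen_iff.mp hclosed.isOpen_compl x (by rintro ⟨k, rfl⟩; exact hx k rfl)
  refine ⟨r, hr, fun k => not_lt.mp fun hk => hball ?_ ⟨k, rfl⟩⟩
  rwa [mem_ball', dist_eq_norm]

theorem half_norm_sub_le_of_mem_ball (hrz : r ≤ ‖x - z‖) (hy : y ∈ ball x (r / 2)) :
    ‖x - z‖ / 2 ≤ ‖y - z‖ := by
  have hxy : ‖x - y‖ < r / 2 := by rwa [mem_ball', dist_eq_norm] at hy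
  linarith [norm_sub_le_norm_sub_add_norm_sub x y z]

theorem half_norm_sub_pos_of_mem_ball (hrz : r ≤ ‖x - z‖) (hy : y ∈ ball x (r / 2)) :
    0 < ‖x - z‖ / 2 := by
  have : 0 < r / 2 := pos_of_mem_ball hy
  linarith

theorem ne_of_mem_ball_of_le_norm_sub (hrz : r ≤ ‖x - z‖) (hy : y ∈ ball x (r / 2)) : y ≠ z :=
  sub_ne_zero.mp <| norm_pos_iff.mp <|
    (half_norm_sub_pos_of_mem_ball hrz hy).trans_le (half_norm_sub_le_of_mem_ball hrz hy)

theorem inv_norm_sub_pow_le_of_mem_ball (hrz : r ≤ ‖x - z‖) (hy : y ∈ ball x (r / 2)) (n : ℕ) :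
    (‖y - z‖ ^ n)⁻¹ ≤ 2 ^ n * (‖x - z‖ ^ n)⁻¹ := by
  have hpos := half_norm_sub_pos_of_mem_ball hrz hy
  calc (‖y - z‖ ^ n)⁻¹ ≤ ((‖x - z‖ / 2) ^ n)⁻¹ := by
        gcongr
        exact half_norm_sub_le_of_mem_ball hrz hy
    _ = 2 ^ n * (‖x - z‖ ^ n)⁻¹ := by rw [div_pow, inv_div, div_eq_mul_inv]

theorem summable_abs_div_norm_sub {a : ι → ℝ} (ha : Summable fun k => |a k| / (1 + ‖c k‖))
    (hr : 0 < r) (hrx : ∀ k, r ≤ ‖x - c k‖) : Summable fun k => |a k| / ‖x - c k‖ := by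
  refine Summable.of_nonneg_of_le (fun k => by positivity) (fun k => ?_)
    (ha.mul_right ((1 + ‖x‖) / r + 1))
  have hd : 0 < ‖x - c k‖ := hr.trans_le (hrx k)
  have hck : 1 + ‖c k‖ ≤ ((1 + ‖x‖) / r + 1) * ‖x - c k‖ := by
    have h1 : 1 + ‖x‖ ≤ (1 + ‖x‖) / r * ‖x - c k‖ := by
      rw [div_mul_eq_mul_div, le_div_iff₀ hr]
      gcongr
      exact hrx k
    linarith [norm_le_norm_add_norm_sub' (c k) x, norm_sub_rev (c k) x]
  calc |a k| / ‖x - c k‖ = |a k| / (1 + ‖c k‖) * ((1 + ‖c k‖) / ‖x - c k‖) := by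
        field_simp
    _ ≤ |a k| / (1 + ‖c k‖) * ((1 + ‖x‖) / r + 1) := by
        gcongr
        rwa [div_le_iff₀ hd]

theorem Summable.abs_div_norm_sub_pow {a : ι → ℝ} (ha : Summable fun k => |a k| / ‖x - c k‖)
    (hr : 0 < r) (hrx : ∀ k, r ≤ ‖x - c k‖) (p : ℕ) :
    Summable fun k => |a k| / ‖x - c k‖ ^ (p + 1) := by
  refine Summable.of_nonneg_of_le (fun k => by positivity) (fun k => ?_) (ha.mul_left (r ^ p)⁻¹)
  calc |a k| / ‖x - c k‖ ^ (p + 1) = (‖x - c k‖ ^ p)⁻¹ * (|a k| / ‖x - c k‖) := by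
        rw [pow_succ]
        ring
    _ ≤ (r ^ p)⁻¹ * (|a k| / ‖x - c k‖) := by
        gcongr
        exact hrx k

end LocalBounds

section PointMassPotential

variable {ι E : Type*} [NormedAddCommGroup E] [InnerProductSpace ℝ E]
  {a : ι → ℝ} {c : ι → E} {x y : E} {r : ℝ}

noncomputable def pointMassPotential (a : ι → ℝ) (c : ι → E) (y : E) : ℝ :=
  ∑' k, a k * ‖y - c k‖⁻¹

theorem norm_smul_inverseDistFDeriv_le {α : ℝ} {z : E} (hrz : r ≤ ‖x - z‖)
    (hy : y ∈ ball x (r / 2)) :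
    ‖α • inverseDistFDeriv z y‖ ≤ 4 * (|α| / ‖x - z‖ ^ 2) := by
  rw [norm_smul, norm_inverseDistFDeriv, Real.norm_eq_abs, div_eq_mul_inv, mul_left_comm]
  gcongr
  exact (inv_norm_sub_pow_le_of_mem_ball hrz hy 2).trans_eq (by norm_num)

theorem norm_smul_inverseDistFDeriv2_le {α : ℝ} {z : E} (e : E) (hrz : r ≤ ‖x - z‖)
    (hy : y ∈ ball x (r / 2)) :
    ‖α • inverseDistFDeriv2 z e y‖ ≤ 32 * ‖e‖ * (|α| / ‖x - z‖ ^ 3) := by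
  rw [norm_smul, Real.norm_eq_abs]
  calc |α| * ‖inverseDistFDeriv2 z e y‖ ≤ |α| * (4 * ‖e‖ * (‖y - z‖ ^ 3)⁻¹) := by
        gcongr
        exact norm_inverseDistFDeriv2_le z e y
    _ ≤ |α| * (4 * ‖e‖ * (2 ^ 3 * (‖x - z‖ ^ 3)⁻¹)) := by
        gcongr
        exact inv_norm_sub_pow_le_of_mem_ball hrz hy 3
    _ = 32 * ‖e‖ * (|α| / ‖x - z‖ ^ 3) := by ring

theorem hasFDerivAt_pointMassPotential (hr : 0 < r) (hrx : ∀ k, r ≤ ‖x - c k‖)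
    (ha : Summable fun k => |a k| / ‖x - c k‖) (hy : y ∈ ball x (r / 2)) :
    HasFDerivAt (pointMassPotential a c) (∑' k, a k • inverseDistFDeriv (c k) y) y := by
  refine hasFDerivAt_tsum_of_isPreconnected ((ha.abs_div_norm_sub_pow hr hrx 1).mul_left 4)
    isOpen_ball (convex_ball x _).isPreconnected
    (fun k y hy => (hasFDerivAt_inv_norm_sub (ne_of_mem_ball_of_le_norm_sub (hrx k) hy)).const_mul
      (a k))
    (fun k y hy => norm_smul_inverseDistFDeriv_le (hrx k) hy) (mem_ball_self (half_pos hr))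
    (ha.of_norm_bounded fun k => ?_) hy
  rw [norm_mul, Real.norm_eq_abs, norm_inv, norm_norm, div_eq_mul_inv]

theorem summable_smul_inverseDistFDeriv (hr : 0 < r) (hrx : ∀ k, r ≤ ‖x - c k‖)
    (ha : Summable fun k => |a k| / ‖x - c k‖) (hy : y ∈ ball x (r / 2)) :
    Summable fun k => a k • inverseDistFDeriv (c k) y :=
  ((ha.abs_div_norm_sub_pow hr hrx 1).mul_left 4).of_norm_bounded
    fun k => norm_smul_inverseDistFDeriv_le (hrx k) hy

theorem fderiv_pointMassPotential_apply (hr : 0 < r) (hrx : ∀ k, r ≤ ‖x - c k‖)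
    (ha : Summable fun k => |a k| / ‖x - c k‖) (hy : y ∈ ball x (r / 2)) (e : E) :
    fderiv ℝ (pointMassPotential a c) y e = ∑' k, a k * inverseDistFDeriv (c k) y e := by
  rw [(hasFDerivAt_pointMassPotential hr hrx ha hy).fderiv]
  exact (ContinuousLinearMap.apply ℝ ℝ e).map_tsum (summable_smul_inverseDistFDeriv hr hrx ha hy)

theorem hasFDerivAt_fderiv_pointMassPotential_apply (hr : 0 < r) (hrx : ∀ k, r ≤ ‖x - c k‖)
    (ha : Summable fun k => |a k| / ‖x - c k‖) (e : E) :
    HasFDerivAt (fun y => fderiv ℝ (pointMassPotential a c) y e)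
      (∑' k, a k • inverseDistFDeriv2 (c k) e x) x := by
  have hfirst : HasFDerivAt (fun y => ∑' k, a k * inverseDistFDeriv (c k) y e)
      (∑' k, a k • inverseDistFDeriv2 (c k) e x) x := by
    refine hasFDerivAt_tsum_of_isPreconnected
      ((ha.abs_div_norm_sub_pow hr hrx 2).mul_left (32 * ‖e‖))
      isOpen_ball (convex_ball x (r / 2)).isPreconnected
      (fun k y hy => (hasFDerivAt_inverseDistFDeriv_apply e
        (ne_of_mem_ball_of_le_norm_sub (hrx k) hy)).const_mul (a k))
      (fun k y hy => norm_smul_inverseDistFDeriv2_le e (hrx k) hy) (mem_ball_self (half_pos hr))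
      ((summable_smul_inverseDistFDeriv hr hrx ha (mem_ball_self (half_pos hr))).mapL
        (ContinuousLinearMap.apply ℝ ℝ e)) (mem_ball_self (half_pos hr))
  refine hfirst.congr_of_eventuallyEq ?_
  filter_upwards [isOpen_ball.mem_nhds (mem_ball_self (half_pos hr))] with y hy
  exact fderiv_pointMassPotential_apply hr hrx ha hy e

theorem sum_pointMassPotential_fderiv2_orthonormalBasis (hr : 0 < r) (hrx : ∀ k, r ≤ ‖x - c k‖)
    (ha : Summable fun k => |a k| / ‖x - c k‖) (b : OrthonormalBasis (Fin 3) ℝ E) :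
    ∑ i, (∑' k, a k • inverseDistFDeriv2 (c k) (b i) x) (b i) = 0 := by
  have hsummable : ∀ e, Summable fun k => a k • inverseDistFDeriv2 (c k) e x := fun e =>
    ((ha.abs_div_norm_sub_pow hr hrx 2).mul_left (32 * ‖e‖)).of_norm_bounded
      fun k => norm_smul_inverseDistFDeriv2_le e (hrx k) (mem_ball_self (half_pos hr))
  calc ∑ i, (∑' k, a k • inverseDistFDeriv2 (c k) (b i) x) (b i)
      = ∑ i, ∑' k, a k * inverseDistFDeriv2 (c k) (b i) x (b i) :=
        Finset.sum_congr rfl fun i _ =>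
          (ContinuousLinearMap.apply ℝ ℝ (b i)).map_tsum (hsummable (b i))
    _ = ∑' k, a k * ∑ i, inverseDistFDeriv2 (c k) (b i) x (b i) := by
        simp only [Finset.mul_sum]
        exact (Summable.tsum_finsetSum fun i _ =>
          (hsummable (b i)).mapL (ContinuousLinearMap.apply ℝ ℝ (b i))).symm
    _ = 0 := by simp [sum_inverseDistFDeriv2_orthonormalBasis]

end PointMassPotential

section LogOfHarmonic

variable {E : Type*} [NormedAddCommGroup E] [InnerProductSpace ℝ E] {v : E → ℝ} {x : E}

theorem fderiv_fderiv_log_pow_apply (n : ℕ) {e : E} {L : E →L[ℝ] ℝ}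
    (hv : ∀ᶠ y in 𝓝 x, DifferentiableAt ℝ v y) (hvx : v x ≠ 0)
    (hL : HasFDerivAt (fun y => fderiv ℝ v y e) L x) :
    fderiv ℝ (fun y => fderiv ℝ (fun z => Real.log (v z ^ n)) y e) x e =
      n * (L e / v x - fderiv ℝ v x e ^ 2 / v x ^ 2) := by
  have hne : ∀ᶠ y in 𝓝 x, v y ≠ 0 := hv.self_of_nhds.continuousAt.eventually_ne hvx
  have hloc : (fun y => fderiv ℝ (fun z => Real.log (v z ^ n)) y e) =ᶠ[𝓝 x]
      fun y => n * ((v y)⁻¹ * fderiv ℝ v y e) := by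
    filter_upwards [hv, hne] with y hdy hy
    have hlog : HasFDerivAt (fun z => Real.log (v z ^ n)) ((n : ℝ) • (v y)⁻¹ • fderiv ℝ v y) y := by
      simp only [Real.log_pow]
      exact (hdy.hasFDerivAt.log hy).const_mul (n : ℝ)
    rw [hlog.fderiv, smul_apply, smul_apply, smul_eq_mul, smul_eq_mul]
  have hinv : HasFDerivAt (fun y => (v y)⁻¹) ((-(v x ^ 2)⁻¹) • fderiv ℝ v x) x :=
    (hasDerivAt_inv hvx).comp_hasFDerivAt x hv.self_of_nhds.hasFDerivAt
  have hprod : HasFDerivAt (fun y => n * ((v y)⁻¹ * fderiv ℝ v y e))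
      ((n : ℝ) • ((v x)⁻¹ • L + fderiv ℝ v x e • (-(v x ^ 2)⁻¹) • fderiv ℝ v x)) x :=
    (hinv.mul hL).const_mul _
  rw [hloc.fderiv_eq, hprod.fderiv]
  simp only [smul_apply, add_apply, smul_eq_mul]
  field_simp
  ring

theorem norm_gradient_sq_eq_sum {ι : Type*} [Fintype ι] [CompleteSpace E]
    (b : OrthonormalBasis ι ℝ E) (f : E → ℝ) (x : E) :
    ‖gradient f x‖ ^ 2 = ∑ i, fderiv ℝ f x (b i) ^ 2 := by
  rw [← b.sum_sq_inner_left]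
  simp only [gradient, InnerProductSpace.toDual_symm_apply]

theorem sum_fderiv_fderiv_log_pow_of_harmonic {ι : Type*} [Fintype ι] [CompleteSpace E]
    (b : OrthonormalBasis ι ℝ E) (n : ℕ) {L : ι → E →L[ℝ] ℝ}
    (hv : ∀ᶠ y in 𝓝 x, DifferentiableAt ℝ v y) (hvx : v x ≠ 0)
    (hL : ∀ i, HasFDerivAt (fun y => fderiv ℝ v y (b i)) (L i) x) (hΔ : ∑ i, L i (b i) = 0) :
    ∑ i, fderiv ℝ (fun y => fderiv ℝ (fun z => Real.log (v z ^ n)) y (b i)) x (b i) =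
      -n * ‖gradient v x‖ ^ 2 / v x ^ 2 := by
  simp only [fun i => fderiv_fderiv_log_pow_apply n hv hvx (hL i), ← Finset.mul_sum,
    Finset.sum_sub_distrib, ← Finset.sum_div, hΔ, norm_gradient_sq_eq_sum b]
  ring

end LogOfHarmonic

/-- On `U = ℝ³ \ {c_k}`, the Euclidean Laplacian (sum of pure second
partial derivatives) of `log(v⁴)` equals `−4‖∇v‖²/v²`; in particular it is `≤ 0`,
i.e. `log(v⁴)` is superharmonic, where `v` is the Brill–Lindquist conformal
factor. -/
theorem log_conformal_factor_superharmonic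
    (m : ℕ → ℝ) (c : ℕ → EuclideanSpace ℝ (Fin 3))
    (hm : ∀ k, 0 < m k)
    (hsep : ∀ i j, i ≠ j → (5 : ℝ) ≤ ‖c i - c j‖)
    (hsum : Summable (fun k => m k / (1 + ‖c k‖)))
    (v : EuclideanSpace ℝ (Fin 3) → ℝ)
    (hv : v = fun x => 1 + ∑' k, m k / (2 * ‖x - c k‖)) :
    ∀ x : EuclideanSpace ℝ (Fin 3), (∀ k, x ≠ c k) →
      (∑ i : Fin 3,
          fderiv ℝ (fun y => fderiv ℝ (fun z => Real.log ((v z) ^ 4)) y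
              (EuclideanSpace.single i 1)) x (EuclideanSpace.single i 1))
        = -4 * ‖gradient v x‖ ^ 2 / (v x) ^ 2 ∧
      (∑ i : Fin 3,
          fderiv ℝ (fun y => fderiv ℝ (fun z => Real.log ((v z) ^ 4)) y
              (EuclideanSpace.single i 1)) x (EuclideanSpace.single i 1)) ≤ 0 := by
  intro x hx
  obtain ⟨r, hr, hrx⟩ := exists_pos_forall_le_norm_sub (by norm_num) hsep hx
  have ha : Summable fun k => |m k / 2| / ‖x - c k‖ := by
    refine summable_abs_div_norm_sub ((hsum.div_const 2).congr fun k => ?_) hr hrx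
    rw [abs_of_pos (half_pos (hm k))]
    ring
  have hv' : v = fun y => 1 + pointMassPotential (fun k => m k / 2) c y := by
    rw [hv]
    funext y
    simp only [pointMassPotential]
    congr 1
    exact tsum_congr fun k => by ring
  have hdiff : ∀ᶠ y in 𝓝 x, DifferentiableAt ℝ v y := by
    filter_upwards [isOpen_ball.mem_nhds (mem_ball_self (half_pos hr))] with y hy
    rw [hv']
    exact (hasFDerivAt_pointMassPotential hr hrx ha hy).differentiableAt.const_add 1
  have hvx : 0 < v x := by
    rw [hv]
    exact add_pos_of_pos_of_nonneg one_pos (tsum_nonneg fun k => by have := hm k; positivity)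
  have hL : ∀ e, HasFDerivAt (fun y => fderiv ℝ v y e)
      (∑' k, (m k / 2) • inverseDistFDeriv2 (c k) e x) x := fun e => by
    simp only [hv', fderiv_const_add]
    exact hasFDerivAt_fderiv_pointMassPotential_apply hr hrx ha e
  have hlap := sum_fderiv_fderiv_log_pow_of_harmonic (EuclideanSpace.basisFun (Fin 3) ℝ) 4
    hdiff hvx.ne' (fun i => hL _) (sum_pointMassPotential_fderiv2_orthonormalBasis hr hrx ha _)
  simp only [EuclideanSpace.basisFun_apply, Nat.cast_ofNat] at hlap
  exact ⟨hlap, hlap ▸ div_nonpos_of_nonpos_of_nonneg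
    (mul_nonpos_of_nonpos_of_nonneg (by norm_num) (sq_nonneg _)) (sq_nonneg _)⟩
end

section
/- For every q > 1 there exists a constant C > 0 such that for every r > 0 and every c ∈ ℝ³, the integral of x ↦ |x − c|^{−2q} over the set {x ∈ ℝ³ : |x| = r and |x − c| ≥ 2}, with respect to the 2-dimensional Hausdorff measure, is at most C. -/
/-!
A cap of radius `s ≤ r` of the sphere `S_r` of radius `r` in `ℝⁿ⁺¹` is the image, under the
`2`-Lipschitz radial projection onto `S_r`, of a disc of radius `2s` in the tangent hyperplane, so
its `n`-dimensional Hausdorff measure is `O(sⁿ)`. Together with the scaling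
`μH[n](S_r) = rⁿ μH[n](S_1)` this gives `μH[n](S_r ∩ B(c, t)) ≤ K tⁿ` uniformly in `r` and `c`.
Summing `‖x - c‖^(-s)` over the dyadic shells `2^k ρ ≤ ‖x - c‖ ≤ 2^(k+1) ρ` then gives a
convergent geometric series when `s > n`.
-/

open MeasureTheory Metric Set Module RealInnerProductSpace
open scoped NNReal ENNReal Pointwise

theorem lipschitzOnWith_div_norm_smul {E : Type*} [NormedAddCommGroup E] [NormedSpace ℝ E]
    {r : ℝ} (hr : 0 < r) : LipschitzOnWith 2 (fun x : E => (r / ‖x‖) • x) {x | r ≤ ‖x‖} := by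
  refine LipschitzOnWith.of_dist_le_mul fun x hx y hy => ?_
  have hx0 : 0 < ‖x‖ := hr.trans_le hx
  have hy0 : 0 < ‖y‖ := hr.trans_le hy
  have hscale : ‖(r / ‖x‖) • (x - y)‖ ≤ ‖x - y‖ := by
    rw [norm_smul, Real.norm_of_nonneg (by positivity)]
    exact mul_le_of_le_one_left (norm_nonneg _) ((div_le_one hx0).2 hx)
  have hradial : ‖(r / ‖x‖ - r / ‖y‖) • y‖ ≤ ‖x - y‖ := by
    rw [norm_smul, div_sub_div _ _ hx0.ne' hy0.ne', Real.norm_eq_abs, abs_div,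
      abs_of_pos (by positivity : 0 < ‖x‖ * ‖y‖), div_mul_eq_mul_div, div_le_iff₀ (by positivity),
      show r * ‖y‖ - ‖x‖ * r = r * (‖y‖ - ‖x‖) by ring, abs_mul, abs_of_pos hr]
    calc r * |‖y‖ - ‖x‖| * ‖y‖ ≤ ‖x‖ * ‖x - y‖ * ‖y‖ := by
          gcongr
          · exact hx
          · rw [norm_sub_rev x y]; exact abs_norm_sub_norm_le y x
      _ = ‖x - y‖ * (‖x‖ * ‖y‖) := by ring
  calc dist ((r / ‖x‖) • x) ((r / ‖y‖) • y)
      = ‖(r / ‖x‖) • (x - y) + (r / ‖x‖ - r / ‖y‖) • y‖ := by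
        rw [dist_eq_norm, smul_sub, sub_smul]; abel_nf
    _ ≤ ‖x - y‖ + ‖x - y‖ := norm_add_le_of_le hscale hradial
    _ = 2 * dist x y := by rw [dist_eq_norm]; ring

theorem exists_tangent_point_of_norm_sub_le {E : Type*} [NormedAddCommGroup E]
    [InnerProductSpace ℝ E] {r : ℝ} (hr : 0 < r) {p x : E} (hp : ‖p‖ = r) (hx : ‖x‖ = r)
    (hxp : ‖x - p‖ ≤ r) : ∃ y : E, ⟪p, y - p⟫ = 0 ∧ ‖y - p‖ ≤ 2 * ‖x - p‖ ∧ (r / ‖y‖) • y = x := by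
  set δ := ‖x - p‖
  set t := ⟪x, p⟫
  have hδ : δ ^ 2 = 2 * r ^ 2 - 2 * t := by
    rw [norm_sub_sq_real, hx, hp]; ring
  have ht : r ^ 2 ≤ 2 * t := by nlinarith [norm_nonneg (x - p)]
  have ht0 : 0 < t := by nlinarith
  set a := r ^ 2 / t
  have hat : a * t = r ^ 2 := div_mul_cancel₀ _ ht0.ne'
  have ha : 1 ≤ a := by rw [le_div_iff₀ ht0]; nlinarith
  refine ⟨a • x, ?_, ?_, ?_⟩
  · rw [inner_sub_right, real_inner_smul_right, real_inner_comm, real_inner_self_eq_norm_sq, hp,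
      hat, sub_self]
  · -- the radial correction `(a - 1) r = δ² r / (2t)` is at most `δ` because `δ r ≤ r² ≤ 2t`
    have hcorr : (a - 1) * r ≤ δ := by
      have hδr : δ * r ≤ 2 * t := by nlinarith
      rw [show a - 1 = δ ^ 2 / (2 * t) by
          rw [eq_div_iff (by positivity)]; linear_combination 2 * hat - hδ,
        div_mul_eq_mul_div, div_le_iff₀ (by positivity)]
      nlinarith [mul_le_mul_of_nonneg_left hδr (norm_nonneg (x - p))]
    calc ‖a • x - p‖ = ‖(a - 1) • x + (x - p)‖ := by rw [sub_smul, one_smul]; abel_nf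
      _ ≤ (a - 1) * r + δ := by
        refine (norm_add_le _ _).trans ?_
        rw [norm_smul, Real.norm_of_nonneg (by linarith), hx]
      _ ≤ 2 * δ := by linarith
  · rw [norm_smul, Real.norm_of_nonneg (by linarith), hx, smul_smul,
      div_mul_cancel_right₀ hr.ne', inv_mul_cancel₀ (by linarith : a ≠ 0), one_smul]

theorem hausdorffMeasure_smul_of_pos {X : Type*} [NormedAddCommGroup X] [NormedSpace ℝ X]
    [MeasurableSpace X] [BorelSpace X] {d : ℝ} (hd : 0 ≤ d) {ρ : ℝ} (hρ : 0 < ρ) (s : Set X) :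
    μH[d] (ρ • s) = ENNReal.ofReal ρ ^ d * μH[d] s := by
  rw [Measure.hausdorffMeasure_smul₀ hd hρ.ne', ENNReal.smul_def, smul_eq_mul,
    ENNReal.coe_rpow_of_nonneg _ hd, ← Real.enorm_eq_ofReal hρ.le]
  rfl

section Sphere

variable {E : Type*} [NormedAddCommGroup E] [InnerProductSpace ℝ E] [MeasurableSpace E]
  [BorelSpace E] {n : ℕ}

theorem hausdorffMeasure_sphere_inter_closedBall_le (hn : finrank ℝ E = n + 1) {r s : ℝ}
    (hr : 0 < r) (hsr : s ≤ r) {p : E} (hp : ‖p‖ = r) :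
    μH[n] (sphere (0 : E) r ∩ closedBall p s) ≤
      2 ^ n * μH[n] (closedBall (0 : EuclideanSpace ℝ (Fin n)) (2 * s)) := by
  have : FiniteDimensional ℝ E := Module.finite_of_finrank_eq_succ hn
  set F := (ℝ ∙ p)ᗮ
  have hF : finrank ℝ F = n := Submodule.finrank_add_finrank_orthogonal' <| by
    rw [finrank_span_singleton (norm_pos_iff.1 (hp ▸ hr)), hn, add_comm]
  let L : EuclideanSpace ℝ (Fin n) ≃ₗᵢ[ℝ] F :=
    ((stdOrthonormalBasis ℝ F).reindex (finCongr hF)).repr.symm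
  let φ : EuclideanSpace ℝ (Fin n) → E := fun v => p + L v
  have hφ : Isometry φ :=
    (IsometryEquiv.addLeft p).isometry.comp (isometry_subtype_coe.comp L.isometry)
  have hφr : ∀ v, r ≤ ‖φ v‖ := by
    intro v
    have h := norm_add_sq_eq_norm_sq_add_norm_sq_real
      (Submodule.mem_orthogonal_singleton_iff_inner_right.1 (L v).2)
    rw [hp] at h
    nlinarith [norm_nonneg (φ v), norm_nonneg (L v : E)]
  have hcover : sphere (0 : E) r ∩ closedBall p s ⊆
      (fun x : E => (r / ‖x‖) • x) '' (φ '' closedBall 0 (2 * s)) := by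
    rintro x ⟨hx, hxp⟩
    rw [mem_sphere_zero_iff_norm] at hx
    rw [mem_closedBall, dist_eq_norm] at hxp
    obtain ⟨y, hyp, hy, rfl⟩ := exists_tangent_point_of_norm_sub_le hr hp hx (hxp.trans hsr)
    have hyF : y - p ∈ F := Submodule.mem_orthogonal_singleton_iff_inner_right.2 hyp
    refine ⟨y, ⟨L.symm ⟨y - p, hyF⟩, ?_, by simp [φ]⟩, rfl⟩
    rw [mem_closedBall_zero_iff, LinearIsometryEquiv.norm_map]
    exact hy.trans (by linarith)
  calc μH[n] (sphere (0 : E) r ∩ closedBall p s)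
      ≤ μH[n] ((fun x : E => (r / ‖x‖) • x) '' (φ '' closedBall 0 (2 * s))) := measure_mono hcover
    _ ≤ (2 : ℝ≥0) ^ (n : ℝ) * μH[n] (φ '' closedBall 0 (2 * s)) :=
        ((lipschitzOnWith_div_norm_smul hr).mono (by rintro _ ⟨v, -, rfl⟩; exact hφr v)
          ).hausdorffMeasure_image_le n.cast_nonneg
    _ = 2 ^ n * μH[n] (closedBall (0 : EuclideanSpace ℝ (Fin n)) (2 * s)) := by
        rw [hφ.hausdorffMeasure_image (Or.inl n.cast_nonneg), ENNReal.rpow_natCast]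
        rfl

theorem hausdorffMeasure_sphere_lt_top (hn : finrank ℝ E = n + 1) {r : ℝ} (hr : 0 < r) :
    μH[n] (sphere (0 : E) r) < ∞ := by
  have : FiniteDimensional ℝ E := Module.finite_of_finrank_eq_succ hn
  obtain ⟨T, hTs, hT, hcover⟩ := finite_cover_balls_of_compact (isCompact_sphere (0 : E) r) hr
  have hsub : sphere (0 : E) r ⊆ ⋃ p ∈ T, sphere (0 : E) r ∩ closedBall p r := fun x hx => by
    obtain ⟨p, hp, hxp⟩ := mem_iUnion₂.1 (hcover hx)
    exact mem_iUnion₂.2 ⟨p, hp, hx, ball_subset_closedBall hxp⟩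
  refine (measure_mono hsub).trans_lt (measure_biUnion_lt_top hT fun p hp => ?_)
  refine (hausdorffMeasure_sphere_inter_closedBall_le hn hr le_rfl
    (mem_sphere_zero_iff_norm.1 (hTs hp))).trans_lt ?_
  exact ENNReal.mul_lt_top (by simp) (isCompact_closedBall _ _).measure_lt_top

theorem exists_hausdorffMeasure_sphere_inter_closedBall_le (hn : finrank ℝ E = n + 1) :
    ∃ K : ℝ≥0, ∀ r, 0 < r → ∀ (c : E) (t : ℝ), 0 < t →
      μH[n] (sphere (0 : E) r ∩ closedBall c t) ≤ K * ENNReal.ofReal (t ^ n) := by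
  set B := μH[n] (closedBall (0 : EuclideanSpace ℝ (Fin n)) 1)
  set S := μH[n] (sphere (0 : E) 1)
  have hB : B ≠ ∞ := (isCompact_closedBall _ _).measure_lt_top.ne
  have hS : S ≠ ∞ := (hausdorffMeasure_sphere_lt_top hn one_pos).ne
  refine ⟨(8 ^ n * B + 2 ^ n * S).toNNReal, fun r hr c t ht => ?_⟩
  rw [ENNReal.coe_toNNReal (by finiteness), ENNReal.ofReal_pow ht.le]
  rcases (sphere (0 : E) r ∩ closedBall c t).eq_empty_or_nonempty with h | ⟨x₀, hx₀, hx₀c⟩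
  · simp [h]
  have hsub : sphere (0 : E) r ∩ closedBall c t ⊆ sphere (0 : E) r ∩ closedBall x₀ (2 * t) :=
    fun x ⟨hx, hxc⟩ => ⟨hx, by
      rw [mem_closedBall] at hxc hx₀c ⊢; linarith [dist_triangle_right x x₀ c]⟩
  refine (measure_mono hsub).trans ?_
  rcases le_or_gt (2 * t) r with h | h
  · calc μH[n] (sphere (0 : E) r ∩ closedBall x₀ (2 * t))
        ≤ 2 ^ n * μH[n] (closedBall (0 : EuclideanSpace ℝ (Fin n)) (2 * (2 * t))) :=
          hausdorffMeasure_sphere_inter_closedBall_le hn hr h (mem_sphere_zero_iff_norm.1 hx₀)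
      _ = 8 ^ n * B * ENNReal.ofReal t ^ n := by
          rw [show closedBall (0 : EuclideanSpace ℝ (Fin n)) (2 * (2 * t)) =
              (4 * t) • closedBall 0 1 by
            rw [smul_closedBall' (by positivity), smul_zero, Real.norm_of_nonneg (by positivity)]
            ring_nf,
            hausdorffMeasure_smul_of_pos n.cast_nonneg (by positivity), ENNReal.rpow_natCast,
            ENNReal.ofReal_mul zero_le_four, mul_pow, ENNReal.ofReal_ofNat,
            show (8 : ℝ≥0∞) = 2 * 4 by norm_num, mul_pow]
          ring
      _ ≤ _ := by gcongr; exact le_self_add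
  · calc μH[n] (sphere (0 : E) r ∩ closedBall x₀ (2 * t))
        ≤ μH[n] (sphere (0 : E) r) := measure_mono inter_subset_left
      _ = ENNReal.ofReal r ^ n * S := by
          rw [show sphere (0 : E) r = r • sphere 0 1 by
              rw [smul_sphere' hr.ne', smul_zero, Real.norm_of_nonneg hr.le, mul_one],
            hausdorffMeasure_smul_of_pos n.cast_nonneg hr, ENNReal.rpow_natCast]
      _ ≤ ENNReal.ofReal (2 * t) ^ n * S := by gcongr
      _ = 2 ^ n * S * ENNReal.ofReal t ^ n := by
          rw [ENNReal.ofReal_mul zero_le_two, mul_pow, ENNReal.ofReal_ofNat]; ring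
      _ ≤ _ := by gcongr; exact le_add_self

end Sphere

theorem rpow_neg_mul_rpow_dyadic (d s : ℝ) {ρ : ℝ} (hρ : 0 < ρ) (k : ℕ) :
    (ρ * 2 ^ k) ^ (-s) * (ρ * 2 ^ (k + 1)) ^ d = (2 * ρ) ^ d * ρ ^ (-s) * (2 ^ (d - s)) ^ k := by
  have h2k : (0 : ℝ) < 2 ^ k := by positivity
  rw [show ρ * 2 ^ (k + 1) = 2 * ρ * 2 ^ k by ring,
    Real.mul_rpow hρ.le h2k.le, Real.mul_rpow (by positivity) h2k.le,
    Real.rpow_pow_comm zero_le_two, sub_eq_neg_add, Real.rpow_add h2k]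
  ring

theorem lintegral_rpow_neg_dist_le_of_measure_closedBall_le {X : Type*} [PseudoMetricSpace X]
    [MeasurableSpace X] {μ : Measure X} {c : X} {K : ℝ≥0} {d s ρ : ℝ} (hd : 0 ≤ d) (hds : d < s)
    (hρ : 0 < ρ)
    (hμ : ∀ t, 0 < t → μ (closedBall c t) ≤ K * ENNReal.ofReal (t ^ d)) :
    ∫⁻ x in {x | ρ ≤ dist x c}, ENNReal.ofReal (dist x c ^ (-s)) ∂μ ≤
      K * ENNReal.ofReal ((2 * ρ) ^ d * ρ ^ (-s) / (1 - 2 ^ (d - s))) := by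
  set A := (2 * ρ) ^ d * ρ ^ (-s)
  set w : ℝ := 2 ^ (d - s)
  have hw0 : 0 ≤ w := by positivity
  have hw1 : w < 1 := Real.rpow_lt_one_of_one_lt_of_neg one_lt_two (by linarith)
  let shell : ℕ → Set X := fun k => {x | ρ * 2 ^ k ≤ dist x c} ∩ closedBall c (ρ * 2 ^ (k + 1))
  have hcover : {x | ρ ≤ dist x c} ⊆ ⋃ k, shell k := by
    intro x hx
    obtain ⟨k, hk, hk'⟩ :=
      exists_nat_pow_near (x := dist x c / ρ) ((one_le_div hρ).2 hx) one_lt_two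
    refine mem_iUnion.2 ⟨k, ?_, ?_⟩
    · rw [mem_ofPred_eq, ← le_div_iff₀' hρ]; exact hk
    · rw [mem_closedBall, ← div_le_iff₀' hρ]; exact hk'.le
  have hshell : ∀ k, ∫⁻ x in shell k, ENNReal.ofReal (dist x c ^ (-s)) ∂μ ≤
      K * ENNReal.ofReal (A * w ^ k) := by
    intro k
    have hbound : ∀ x ∈ shell k,
        ENNReal.ofReal (dist x c ^ (-s)) ≤ ENNReal.ofReal ((ρ * 2 ^ k) ^ (-s)) :=
      fun x hx => ENNReal.ofReal_le_ofReal
        (Real.rpow_le_rpow_of_nonpos (by positivity) hx.1 (by linarith))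
    calc ∫⁻ x in shell k, ENNReal.ofReal (dist x c ^ (-s)) ∂μ
        ≤ ∫⁻ _ in shell k, ENNReal.ofReal ((ρ * 2 ^ k) ^ (-s)) ∂μ :=
          setLIntegral_mono measurable_const hbound
      _ = ENNReal.ofReal ((ρ * 2 ^ k) ^ (-s)) * μ (shell k) := setLIntegral_const _ _
      _ ≤ ENNReal.ofReal ((ρ * 2 ^ k) ^ (-s)) * (K * ENNReal.ofReal ((ρ * 2 ^ (k + 1)) ^ d)) :=
          mul_le_mul_right ((measure_mono inter_subset_right).trans (hμ _ (by positivity))) _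
      _ = K * ENNReal.ofReal (A * w ^ k) := by
          rw [mul_left_comm, ← ENNReal.ofReal_mul (by positivity), rpow_neg_mul_rpow_dyadic d s hρ]
  calc ∫⁻ x in {x | ρ ≤ dist x c}, ENNReal.ofReal (dist x c ^ (-s)) ∂μ
      ≤ ∫⁻ x in ⋃ k, shell k, ENNReal.ofReal (dist x c ^ (-s)) ∂μ := lintegral_mono_set hcover
    _ ≤ ∑' k, ∫⁻ x in shell k, ENNReal.ofReal (dist x c ^ (-s)) ∂μ := lintegral_iUnion_le _ _
    _ ≤ ∑' k, K * ENNReal.ofReal (A * w ^ k) := ENNReal.tsum_le_tsum hshell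
    _ = K * ENNReal.ofReal (∑' k, A * w ^ k) := by
        rw [ENNReal.tsum_mul_left, ENNReal.ofReal_tsum_of_nonneg (fun k => by positivity)
          ((summable_geometric_of_lt_one hw0 hw1).mul_left A)]
    _ = K * ENNReal.ofReal (A / (1 - w)) := by
        rw [tsum_mul_left, tsum_geometric_of_lt_one hw0 hw1, div_eq_mul_inv]

/-- For every `q > 1` there is `C > 0` such that for every `r > 0`
and every `c ∈ ℝ³`, the surface integral of `‖x − c‖^{−2q}` over
`{‖x‖ = r, ‖x − c‖ ≥ 2}` is at most `C`. -/
theorem sphere_integral_inverse_power_uniform_bound (q : ℝ) (hq : 1 < q) :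
    ∃ C > (0 : ℝ), ∀ r : ℝ, 0 < r → ∀ c : EuclideanSpace ℝ (Fin 3),
      ∫⁻ x in {x : EuclideanSpace ℝ (Fin 3) | ‖x‖ = r ∧ 2 ≤ ‖x - c‖},
          ENNReal.ofReal (‖x - c‖ ^ (-(2 * q))) ∂(μH[2])
        ≤ ENNReal.ofReal C := by
  obtain ⟨K, hK⟩ :=
    exists_hausdorffMeasure_sphere_inter_closedBall_le (E := EuclideanSpace ℝ (Fin 3)) (n := 2)
      (by simp)
  set A : ℝ := (2 * 2) ^ (2 : ℝ) * 2 ^ (-(2 * q)) / (1 - 2 ^ ((2 : ℝ) - 2 * q))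
  have hA : 0 ≤ A := div_nonneg (by positivity)
    (sub_nonneg.2 (Real.rpow_le_one_of_one_le_of_nonpos one_le_two (by linarith)))
  refine ⟨K * A + 1, by positivity, fun r hr c => ?_⟩
  have hμ : ∀ t, 0 < t →
      μH[2].restrict (sphere 0 r) (closedBall c t) ≤ K * ENNReal.ofReal (t ^ (2 : ℝ)) :=
    fun t ht => by
      rw [Measure.restrict_apply measurableSet_closedBall, inter_comm, Real.rpow_two]
      exact_mod_cast hK r hr c t ht
  have hset : {x : EuclideanSpace ℝ (Fin 3) | ‖x‖ = r ∧ 2 ≤ ‖x - c‖} =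
      {x | 2 ≤ dist x c} ∩ sphere 0 r := by
    ext; simp [dist_eq_norm, and_comm]
  have hmeas : MeasurableSet {x : EuclideanSpace ℝ (Fin 3) | 2 ≤ dist x c} :=
    measurableSet_le measurable_const (measurable_id.dist measurable_const)
  calc _ = ∫⁻ x in {x | 2 ≤ dist x c}, ENNReal.ofReal (dist x c ^ (-(2 * q)))
          ∂(μH[2].restrict (sphere 0 r)) := by
        rw [Measure.restrict_restrict hmeas, ← hset]
        simp only [dist_eq_norm]
    _ ≤ K * ENNReal.ofReal A :=
        lintegral_rpow_neg_dist_le_of_measure_closedBall_le zero_le_two (by linarith) two_pos hμ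
    _ ≤ ENNReal.ofReal (K * A + 1) := by
        rw [← ENNReal.ofReal_coe_nnreal, ← ENNReal.ofReal_mul K.coe_nonneg]
        exact ENNReal.ofReal_le_ofReal (by linarith)
end

section
/- There exists a smooth, compactly supported map h : ℝ³ → (3×3 real matrices), not identically zero, such that for every x ∈ ℝ³: (i) h(x) is a symmetric matrix; (ii) h(x) is trace-free, i.e. Σ_{i=1}^{3} h_{ii}(x) = 0; (iii) h is divergence-free, i.e. Σ_{i=1}^{3} ∂_i h_{ij}(x) = 0 for each j = 1,2,3; and (iv) h is parity-symmetric, i.e. h(−x) = h(x). -/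
/-!
Work on the Fourier side with polynomial symbols in `ξ`. The matrix `Q = |ξ|² I - ξ ξᵀ`
satisfies `ξᵀ Q = 0`, `Q² = |ξ|² Q` and `tr Q = (n - 1) |ξ|²`, so for every constant symmetric `M`
the quartic symbol `(n - 1) Q M Q - tr (Q M) Q` (`|ξ|⁴` times the transverse-traceless projection
of `M`) is symmetric, trace-free and annihilated by `ξᵀ`. Replacing `ξ` by `∂` and applying the
result to the even product bump `Φ x = ∏ i, f (x i)` gives a smooth, compactly supported,
symmetric, trace-free and divergence-free tensor, which is even because its entries are
homogeneous of degree four. For `n = 3` and `M = e₀ e₀ᵀ` the `(0, 0)` entry is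
`(∂₁² + ∂₂²)² Φ`; as `f` is constant near `0`, on the `x₁`-axis this is `f⁽⁴⁾ (x₁)`, which is not
identically zero because `f` has compact support.
-/

open scoped ContDiff

open MvPolynomial Set Metric

section HomogeneousMatrix

variable {σ R l m n : Type*} [CommRing R] [Fintype m]

lemma isHomogeneous_mul_apply {A : Matrix l m (MvPolynomial σ R)}
    {B : Matrix m n (MvPolynomial σ R)} {a b : ℕ} (hA : ∀ i j, (A i j).IsHomogeneous a)
    (hB : ∀ i j, (B i j).IsHomogeneous b) (i : l) (j : n) : ((A * B) i j).IsHomogeneous (a + b) :=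
  IsHomogeneous.sum _ _ _ fun k _ => (hA i k).mul (hB k j)

lemma isHomogeneous_trace {A : Matrix m m (MvPolynomial σ R)} {a : ℕ}
    (hA : ∀ i j, (A i j).IsHomogeneous a) : A.trace.IsHomogeneous a :=
  IsHomogeneous.sum _ _ _ fun i _ => hA i i

end HomogeneousMatrix

section Symbol

open Matrix

variable (ι R : Type*) [Fintype ι] [DecidableEq ι] [CommRing R]

local notation "ξ" => (X : ι → MvPolynomial ι R)

noncomputable def transverseSymbol : Matrix ι ι (MvPolynomial ι R) :=
  (ξ ⬝ᵥ ξ) • 1 - vecMulVec ξ ξ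

local notation "Q" => transverseSymbol ι R

variable {ι R}

lemma transverseSymbol_transpose : (Q)ᵀ = Q := by
  simp [transverseSymbol, transpose_sub, transpose_smul, transpose_vecMulVec]

lemma vecMul_transverseSymbol : ξ ᵥ* Q = 0 := by
  simp [transverseSymbol, vecMul_sub, vecMul_smul, vecMul_vecMulVec]

lemma transverseSymbol_mul_self : Q * Q = (ξ ⬝ᵥ ξ) • Q := by
  simp only [transverseSymbol, sub_mul, mul_sub, smul_mul, Matrix.mul_smul, one_mul, mul_one,
    vecMulVec_mul_vecMulVec, vecMulVec_smul, smul_sub]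
  module

lemma trace_transverseSymbol : trace Q = (Fintype.card ι - 1) * (ξ ⬝ᵥ ξ) := by
  simp only [transverseSymbol, trace_sub, trace_smul, trace_one, smul_eq_mul, trace_vecMulVec]
  ring

lemma isHomogeneous_transverseSymbol (i j : ι) : (Q i j).IsHomogeneous 2 := by
  have hξξ : (ξ ⬝ᵥ ξ).IsHomogeneous 2 :=
    IsHomogeneous.sum _ _ _ fun k _ => (isHomogeneous_X R k).mul (isHomogeneous_X R k)
  simp only [transverseSymbol, Matrix.sub_apply, Matrix.smul_apply, one_apply, vecMulVec_apply,
    smul_eq_mul, mul_ite, mul_one, mul_zero]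
  refine IsHomogeneous.sub ?_ ((isHomogeneous_X R i).mul (isHomogeneous_X R j))
  split_ifs
  exacts [hξξ, isHomogeneous_zero _ _ _]

variable (ι) in
noncomputable def ttSymbol (M : Matrix ι ι R) : Matrix ι ι (MvPolynomial ι R) :=
  ((Fintype.card ι : MvPolynomial ι R) - 1) • (Q * M.map C * Q) - trace (Q * M.map C) • Q

variable {M : Matrix ι ι R}

lemma isSymm_ttSymbol (hM : M.IsSymm) : (ttSymbol ι M).IsSymm := by
  have hM' : (M.map (C : R →+* MvPolynomial ι R)).IsSymm := hM.map _
  simp only [Matrix.IsSymm, ttSymbol, transpose_sub, transpose_smul, transpose_mul,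
    transverseSymbol_transpose, hM'.eq, Matrix.mul_assoc]

lemma vecMul_ttSymbol : ξ ᵥ* ttSymbol ι M = 0 := by
  simp [ttSymbol, vecMul_sub, vecMul_smul, ← vecMul_vecMul, vecMul_transverseSymbol]

lemma trace_ttSymbol : trace (ttSymbol ι M) = 0 := by
  rw [ttSymbol, trace_sub, trace_smul, trace_smul, trace_mul_cycle, transverseSymbol_mul_self,
    Matrix.smul_mul, trace_smul, trace_transverseSymbol, smul_eq_mul, smul_eq_mul, smul_eq_mul]
  ring

lemma isHomogeneous_ttSymbol (i j : ι) : (ttSymbol ι M i j).IsHomogeneous 4 := by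
  have hM (i j : ι) : (M.map (C : R →+* MvPolynomial ι R) i j).IsHomogeneous 0 :=
    isHomogeneous_C _ _
  have hQMQ := isHomogeneous_mul_apply (isHomogeneous_mul_apply isHomogeneous_transverseSymbol hM)
    isHomogeneous_transverseSymbol i j
  have hcard : ((Fintype.card ι : MvPolynomial ι R) - 1).IsHomogeneous 0 := by
    simpa using isHomogeneous_C ι (Fintype.card ι - 1 : R)
  exact (hcard.mul hQMQ).sub
    ((isHomogeneous_trace (isHomogeneous_mul_apply isHomogeneous_transverseSymbol hM)).mul
      (isHomogeneous_transverseSymbol i j))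

end Symbol

lemma HasCompactSupport.eq_zero_of_deriv_eq_zero {g : ℝ → ℝ} (hc : HasCompactSupport g)
    (hd : Differentiable ℝ g) (h : deriv g = 0) : g = 0 := by
  obtain ⟨y, hy⟩ := (Set.ne_univ_iff_exists_notMem _).1 hc.isCompact.ne_univ
  funext x
  rw [is_const_of_deriv_eq_zero hd (congrFun h) x y, image_eq_zero_of_notMem_tsupport hy,
    Pi.zero_apply]

lemma hasCompactSupport_iteratedDeriv {g : ℝ → ℝ} (hc : HasCompactSupport g) (n : ℕ) :
    HasCompactSupport (iteratedDeriv n g) := by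
  induction n with
  | zero => simpa using hc
  | succ n ih => exact iteratedDeriv_succ (f := g) ▸ ih.deriv

lemma iteratedDeriv_ne_zero_of_hasCompactSupport {g : ℝ → ℝ} (hc : HasCompactSupport g)
    (hg : ContDiff ℝ ∞ g) (h : g ≠ 0) (n : ℕ) : iteratedDeriv n g ≠ 0 := by
  induction n with
  | zero => simpa using h
  | succ n ih =>
    rw [iteratedDeriv_succ]
    exact fun h0 => ih ((hasCompactSupport_iteratedDeriv hc n).eq_zero_of_deriv_eq_zero
      (hg.differentiable_iteratedDeriv n (by exact_mod_cast ENat.natCast_lt_top n)) h0)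

section Profile

variable (f : ContDiffBump (0 : ℝ))

lemma contDiff_iteratedDeriv_bump (n : ℕ) : ContDiff ℝ ∞ (iteratedDeriv n f) := by
  rw [iteratedDeriv_eq_iterate]
  exact f.contDiff.iterate_deriv n

lemma iteratedDeriv_bump_neg (n : ℕ) (t : ℝ) :
    iteratedDeriv n f (-t) = (-1) ^ n * iteratedDeriv n f t := by
  have h := iteratedDeriv_comp_neg n f t
  simp only [f.neg, smul_eq_mul] at h
  rw [h, ← mul_assoc, ← mul_pow]
  norm_num

lemma iteratedDeriv_bump_zero (n : ℕ) : iteratedDeriv n f 0 = if n = 0 then 1 else 0 := by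
  rw [f.eventuallyEq_one.iteratedDeriv_eq, Pi.one_def, iteratedDeriv_const]

lemma tsupport_iteratedDeriv_bump_subset (n : ℕ) :
    tsupport (iteratedDeriv n f) ⊆ closedBall 0 f.rOut := by
  induction n with
  | zero => simp [f.tsupport_eq]
  | succ n ih => exact (iteratedDeriv_succ (f := ⇑f) ▸ tsupport_deriv_subset).trans ih

lemma iteratedDeriv_bump_ne_zero (n : ℕ) : iteratedDeriv n f ≠ 0 := by
  refine iteratedDeriv_ne_zero_of_hasCompactSupport f.hasCompactSupport f.contDiff (fun h => ?_) n
  simpa [h] using iteratedDeriv_bump_zero f 0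

end Profile

def cube (ι : Type*) (r : ℝ) : Set (EuclideanSpace ℝ ι) :=
  EuclideanSpace.equiv ι ℝ ⁻¹' univ.pi fun _ => closedBall 0 r

lemma isCompact_cube (ι : Type*) (r : ℝ) : IsCompact (cube ι r) :=
  (EuclideanSpace.equiv ι ℝ).toHomeomorph.isCompact_preimage.2
    (isCompact_univ_pi fun _ => isCompact_closedBall 0 r)

section ProductBump

variable {ι : Type*} [Fintype ι] (f : ContDiffBump (0 : ℝ))

/-- `∂^α Φ` for `Φ x = ∏ i, f (x i)`; `prodBumpDiff f p` below is `p(∂) Φ`. -/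
noncomputable def prodBumpDeriv (α : ι →₀ ℕ) (x : EuclideanSpace ℝ ι) : ℝ :=
  ∏ i, iteratedDeriv (α i) f (x i)

noncomputable def prodBumpDiff : MvPolynomial ι ℝ →ₗ[ℝ] EuclideanSpace ℝ ι → ℝ :=
  (basisMonomials ι ℝ).constr ℝ (prodBumpDeriv f)

variable {f}

lemma contDiff_prodBumpDeriv (α : ι →₀ ℕ) : ContDiff ℝ ∞ (prodBumpDeriv f α) :=
  contDiff_prod fun i _ => (contDiff_iteratedDeriv_bump f (α i)).comp
    (EuclideanSpace.proj i : EuclideanSpace ℝ ι →L[ℝ] ℝ).contDiff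

lemma fderiv_prodBumpDeriv_single [DecidableEq ι] (α : ι →₀ ℕ) (x : EuclideanSpace ℝ ι) (k : ι) :
    fderiv ℝ (prodBumpDeriv f α) x (EuclideanSpace.single k 1) =
      prodBumpDeriv f (α + Finsupp.single k 1) x := by
  have hfactor (i : ι) : HasFDerivAt (fun y : EuclideanSpace ℝ ι => iteratedDeriv (α i) f (y i))
      (iteratedDeriv (α i + 1) f (x i) • (EuclideanSpace.proj i : EuclideanSpace ℝ ι →L[ℝ] ℝ))
      x := by
    rw [iteratedDeriv_succ]
    have hd := (contDiff_iteratedDeriv_bump f (α i)).differentiable (by simp) (x i)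
    exact hd.hasDerivAt.comp_hasFDerivAt x
      (EuclideanSpace.proj i : EuclideanSpace ℝ ι →L[ℝ] ℝ).hasFDerivAt
  unfold prodBumpDeriv
  rw [(HasFDerivAt.finsetProd fun i _ => hfactor i).fderiv]
  simp only [sum_apply, smul_apply, PiLp.proj_apply,
    PiLp.single_apply, smul_eq_mul, mul_ite, mul_one, mul_zero, Finset.sum_ite_eq',
    Finset.mem_univ, if_true, Finsupp.coe_add, Pi.add_apply]
  rw [← Finset.prod_erase_mul _ _ (Finset.mem_univ k), Finsupp.single_eq_same]
  congr 1
  refine Finset.prod_congr rfl fun j hj => ?_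
  rw [Finsupp.single_eq_of_ne (Finset.ne_of_mem_erase hj), add_zero]

lemma prodBumpDeriv_neg (α : ι →₀ ℕ) (x : EuclideanSpace ℝ ι) :
    prodBumpDeriv f α (-x) = (-1) ^ α.degree * prodBumpDeriv f α x := by
  simp only [prodBumpDeriv, PiLp.neg_apply, iteratedDeriv_bump_neg, Finset.prod_mul_distrib,
    Finset.prod_pow_eq_pow_sum, Finsupp.degree_eq_sum]

lemma prodBumpDeriv_eq_zero_of_notMem_cube (α : ι →₀ ℕ) {x : EuclideanSpace ℝ ι}
    (hx : x ∉ cube ι f.rOut) : prodBumpDeriv f α x = 0 := by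
  simp only [cube, mem_preimage, mem_univ_pi, not_forall] at hx
  obtain ⟨i, hi⟩ := hx
  exact Finset.prod_eq_zero (Finset.mem_univ i) (image_eq_zero_of_notMem_tsupport fun h =>
    hi (tsupport_iteratedDeriv_bump_subset f _ h))

lemma prodBumpDiff_monomial (α : ι →₀ ℕ) (c : ℝ) :
    prodBumpDiff f (monomial α c) = c • prodBumpDeriv f α := by
  have h : monomial α c = c • basisMonomials ι ℝ α := by simp [smul_monomial]
  rw [h, map_smul, prodBumpDiff, Module.Basis.constr_basis]

lemma contDiff_prodBumpDiff (p : MvPolynomial ι ℝ) : ContDiff ℝ ∞ (prodBumpDiff f p) := by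
  induction p using MvPolynomial.induction_on' with
  | monomial α c => rw [prodBumpDiff_monomial]; exact contDiff_const.smul (contDiff_prodBumpDeriv α)
  | add p q hp hq => rw [map_add]; exact hp.add hq

lemma fderiv_prodBumpDiff_single [DecidableEq ι] (p : MvPolynomial ι ℝ) (x : EuclideanSpace ℝ ι)
    (k : ι) : fderiv ℝ (prodBumpDiff f p) x (EuclideanSpace.single k 1) =
      prodBumpDiff f (X k * p) x := by
  induction p using MvPolynomial.induction_on' with
  | monomial α c =>
    rw [X, monomial_mul, one_mul, add_comm, prodBumpDiff_monomial, prodBumpDiff_monomial,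
      fderiv_const_smul ((contDiff_prodBumpDeriv α).differentiable (by simp) x)]
    simp [fderiv_prodBumpDeriv_single]
  | add p q hp hq =>
    have hd := fun r => (contDiff_prodBumpDiff (f := f) r).differentiable (by simp) x
    rw [map_add, fderiv_add (hd p) (hd q), mul_add, map_add]
    simp [hp, hq]

lemma prodBumpDiff_neg {p : MvPolynomial ι ℝ} {d : ℕ} (hp : p.IsHomogeneous d)
    (x : EuclideanSpace ℝ ι) : prodBumpDiff f p (-x) = (-1) ^ d * prodBumpDiff f p x := by
  rw [p.as_sum]
  simp only [map_sum, Finset.sum_apply, prodBumpDiff_monomial, Pi.smul_apply, smul_eq_mul,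
    prodBumpDeriv_neg, Finset.mul_sum]
  refine Finset.sum_congr rfl fun α hα => ?_
  rw [Finsupp.degree_eq_weight_one, ← Pi.one_def, hp (mem_support_iff.1 hα)]
  ring

lemma prodBumpDiff_eq_zero_of_notMem_cube (p : MvPolynomial ι ℝ) {x : EuclideanSpace ℝ ι}
    (hx : x ∉ cube ι f.rOut) : prodBumpDiff f p x = 0 := by
  induction p using MvPolynomial.induction_on' with
  | monomial α c => simp [prodBumpDiff_monomial, prodBumpDeriv_eq_zero_of_notMem_cube α hx]
  | add p q hp hq => simp [hp, hq]

end ProductBump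

section TensorField

open Matrix

variable {ι : Type*} [Fintype ι] (f : ContDiffBump (0 : ℝ))

noncomputable def tensorField (H : Matrix ι ι (MvPolynomial ι ℝ)) :
    EuclideanSpace ℝ ι → ι → ι → ℝ :=
  fun x i j => prodBumpDiff f (H i j) x

variable {f} (H : Matrix ι ι (MvPolynomial ι ℝ))

lemma contDiff_tensorField : ContDiff ℝ ∞ (tensorField f H) :=
  contDiff_pi.2 fun i => contDiff_pi.2 fun j => contDiff_prodBumpDiff (H i j)

lemma hasCompactSupport_tensorField : HasCompactSupport (tensorField f H) :=
  HasCompactSupport.intro (isCompact_cube ι f.rOut) fun x hx => by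
    ext i j
    exact prodBumpDiff_eq_zero_of_notMem_cube (H i j) hx

lemma tensorField_symm (hH : H.IsSymm) (x : EuclideanSpace ℝ ι) (i j : ι) :
    tensorField f H x i j = tensorField f H x j i := by
  rw [tensorField, ← hH.apply i j]
  rfl

lemma trace_tensorField_eq_zero (hH : H.trace = 0) (x : EuclideanSpace ℝ ι) :
    ∑ i, tensorField f H x i i = 0 := by
  simp only [tensorField, ← Finset.sum_apply, ← map_sum]
  change prodBumpDiff f H.trace x = 0
  rw [hH, map_zero, Pi.zero_apply]

lemma divergence_tensorField_eq_zero [DecidableEq ι] (hH : (X : ι → MvPolynomial ι ℝ) ᵥ* H = 0)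
    (x : EuclideanSpace ℝ ι) (j : ι) :
    ∑ i, fderiv ℝ (fun y => tensorField f H y i j) x (EuclideanSpace.single i 1) = 0 := by
  simp only [tensorField, fderiv_prodBumpDiff_single, ← Finset.sum_apply, ← map_sum]
  change prodBumpDiff f ((X ᵥ* H) j) x = 0
  rw [hH, Pi.zero_apply, map_zero, Pi.zero_apply]

lemma tensorField_neg {d : ℕ} (hd : Even d) (hH : ∀ i j, (H i j).IsHomogeneous d)
    (x : EuclideanSpace ℝ ι) : tensorField f H (-x) = tensorField f H x := by
  ext i j
  rw [tensorField, tensorField, prodBumpDiff_neg (hH i j), hd.neg_one_pow, one_mul]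

end TensorField

lemma ttSymbol_single_zero_zero :
    ttSymbol (Fin 3) (Matrix.single 0 0 (1 : ℝ)) 0 0 = (X 1 ^ 2 + X 2 ^ 2) ^ 2 := by
  simp only [ttSymbol, Fintype.card_fin, Nat.cast_ofNat, transverseSymbol, dotProduct,
    Fin.sum_univ_three, Fin.isValue, Matrix.map_single, C_1, Matrix.trace, Matrix.diag_apply,
    Matrix.mul_apply, Matrix.sub_apply, Matrix.smul_apply, smul_eq_mul, Matrix.vecMulVec_apply,
    Matrix.single_apply, mul_ite, mul_one, mul_zero, true_and, zero_ne_one, false_and,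
    ↓reduceIte, add_zero, Fin.reduceEq, Finset.sum_ite_eq, Finset.mem_univ, Matrix.one_apply_eq,
    ite_mul, zero_mul]
  ring

lemma prodBumpDiff_sq_add_sq_sq_single (f : ContDiffBump (0 : ℝ)) (t : ℝ) :
    prodBumpDiff f ((X 1 ^ 2 + X 2 ^ 2) ^ 2 : MvPolynomial (Fin 3) ℝ)
      (EuclideanSpace.single 1 t) = iteratedDeriv 4 f t := by
  rw [show (X 1 ^ 2 + X 2 ^ 2 : MvPolynomial (Fin 3) ℝ) ^ 2 =
      X 1 ^ 4 + (2 : ℝ) • (X 1 ^ 2 * X 2 ^ 2) + X 2 ^ 4 by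
    rw [smul_eq_C_mul, map_ofNat]; ring]
  simp only [X_pow_eq_monomial, monomial_mul, one_mul, map_add, map_smul, prodBumpDiff_monomial,
    one_smul, Pi.add_apply, Pi.smul_apply, prodBumpDeriv, Fin.prod_univ_three, PiLp.single_apply,
    Finsupp.coe_add, Finsupp.single_apply]
  norm_num [iteratedDeriv_bump_zero, Fin.ext_iff]

lemma tensorField_ttSymbol_single_ne_zero (f : ContDiffBump (0 : ℝ)) :
    tensorField f (ttSymbol (Fin 3) (Matrix.single 0 0 (1 : ℝ))) ≠ 0 := by
  obtain ⟨t, ht⟩ := Function.ne_iff.1 (iteratedDeriv_bump_ne_zero f 4)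
  intro h
  apply ht
  have h00 := congrFun (congrFun (congrFun h (EuclideanSpace.single 1 t)) 0) 0
  rwa [tensorField, ttSymbol_single_zero_zero, prodBumpDiff_sq_add_sq_sq_single] at h00

/-- There exists a smooth, compactly supported, not identically
zero map `h : ℝ³ → (3×3 real matrices)` (entries `h x i j`) which is pointwise
symmetric, trace-free, divergence-free, and parity-symmetric: a smooth compactly
supported TT symmetric 2-tensor on Euclidean ℝ³. -/
theorem exists_TT_tensor :
    ∃ h : EuclideanSpace ℝ (Fin 3) → (Fin 3 → Fin 3 → ℝ),
      ContDiff ℝ (⊤ : ℕ∞) h ∧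
      HasCompactSupport h ∧
      h ≠ 0 ∧
      ∀ x : EuclideanSpace ℝ (Fin 3),
        (∀ i j : Fin 3, h x i j = h x j i) ∧
        (∑ i : Fin 3, h x i i = 0) ∧
        (∀ j : Fin 3,
          ∑ i : Fin 3,
            fderiv ℝ (fun y => h y i j) x (EuclideanSpace.single i 1) = 0) ∧
        h (-x) = h x := by
  let f : ContDiffBump (0 : ℝ) := default
  let H := ttSymbol (Fin 3) (Matrix.single 0 0 (1 : ℝ))
  have hM : (Matrix.single (0 : Fin 3) 0 (1 : ℝ)).IsSymm := Matrix.transpose_single 0 0 1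
  exact ⟨tensorField f H, contDiff_tensorField H, hasCompactSupport_tensorField H,
    tensorField_ttSymbol_single_ne_zero f, fun x =>
      ⟨tensorField_symm H (isSymm_ttSymbol hM) x, trace_tensorField_eq_zero H trace_ttSymbol x,
        divergence_tensorField_eq_zero H vecMul_ttSymbol x,
        tensorField_neg H (by decide) isHomogeneous_ttSymbol x⟩⟩
end
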